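/- arXiv:1211.1325 — 15 statements merged into one kernel-verified Lean document; each statement's English description precedes it below -/
import Mathlib

section
/- Let β ≥ 1 and let v be a nonnegative valuation on the finite product X = X_1 × ⋯ × X_m. Then v is β-fractionally subadditive if and only if v is β-XOS. In particular (β = 1), v is fractionally subadditive if and only if v is XOS. -/
set_option linter.unusedSectionVars false
set_option maxHeartbeats 1000000

open Finset
open scoped InnerProductSpace

/-- `v` is `β`-fractionally subadditive: whenever a (finite, nonempty) weighted family of
outcomes fractionally covers every coordinate of `x`, the weighted sum of values is at least
`v x / β`. -/
def FracSubadd {m : ℕ} {X : Fin m → Type*} [∀ j, DecidableEq (X j)]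
    (β : ℝ) (v : (∀ j, X j) → ℝ) : Prop :=
  ∀ (x : ∀ j, X j) (K : ℕ) (y : Fin (K + 1) → ∀ j, X j) (α : Fin (K + 1) → ℝ),
    (∀ ℓ, 0 ≤ α ℓ) →
    (∀ j : Fin m, 1 ≤ ∑ ℓ, if y ℓ j = x j then α ℓ else 0) →
    v x ≤ β * ∑ ℓ, α ℓ * v (y ℓ)

/-- `v` is `β`-XOS: there is a nonempty finite family of additive valuations with nonnegative
components whose pointwise maximum approximates `v` within a factor `β`. -/
def IsXOS {m : ℕ} {X : Fin m → Type*} (β : ℝ) (v : (∀ j, X j) → ℝ) : Prop :=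
  ∃ (K : ℕ) (w : Fin (K + 1) → ∀ j, X j → ℝ),
    (∀ ℓ j xj, 0 ≤ w ℓ j xj) ∧
    ∀ x : ∀ j, X j,
      (Finset.univ.sup' Finset.univ_nonempty fun ℓ => ∑ j, w ℓ j (x j)) ≤ v x ∧
      v x ≤ β * Finset.univ.sup' Finset.univ_nonempty fun ℓ => ∑ j, w ℓ j (x j)

lemma abs_sub_coord_le_dist {n : Type*} [Fintype n] (u w : EuclideanSpace ℝ n) (i : n) :
    |u i - w i| ≤ dist u w := by
  rw [EuclideanSpace.dist_eq, ← Real.sqrt_sq_eq_abs]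
  apply Real.sqrt_le_sqrt
  have := Finset.single_le_sum (f := fun k => dist (u k) (w k) ^ 2)
    (fun k _ => sq_nonneg _) (Finset.mem_univ i)
  simpa [Real.dist_eq] using this

section Cone

variable {m : ℕ} {X : Fin m → Type*} [∀ j, Fintype (X j)] [∀ j, Nonempty (X j)]
  [∀ j, DecidableEq (X j)]

/-- The vector in `ℝ^{m+1}` recording the fractional coverage of `x` by weights `α` minus
slacks `s`, together with the total cost. -/
noncomputable def Fvec (v : (∀ j, X j) → ℝ) (x : ∀ j, X j)
    (α : (∀ j, X j) → ℝ) (s : Fin m → ℝ) : EuclideanSpace ℝ (Fin m ⊕ Unit) :=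
  WithLp.toLp 2 fun i => Sum.elim (fun j => (∑ y, if y j = x j then α y else 0) - s j)
    (fun _ => ∑ y, α y * v y) i

lemma Fvec_inl (v : (∀ j, X j) → ℝ) (x : ∀ j, X j) (α : (∀ j, X j) → ℝ) (s : Fin m → ℝ)
    (j : Fin m) : Fvec v x α s (Sum.inl j) = (∑ y, if y j = x j then α y else 0) - s j := rfl

lemma Fvec_inr (v : (∀ j, X j) → ℝ) (x : ∀ j, X j) (α : (∀ j, X j) → ℝ) (s : Fin m → ℝ) :
    Fvec v x α s (Sum.inr ()) = ∑ y, α y * v y := rfl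

lemma Fvec_add (v : (∀ j, X j) → ℝ) (x : ∀ j, X j) (α α' : (∀ j, X j) → ℝ)
    (s s' : Fin m → ℝ) :
    Fvec v x (α + α') (s + s') = Fvec v x α s + Fvec v x α' s' := by
  ext i
  rcases i with j | u
  · simp [Fvec, Finset.sum_add_distrib, Pi.add_apply, ← Finset.sum_add_distrib]
    rw [show (∑ y, if y j = x j then α y + α' y else 0)
        = (∑ y, if y j = x j then α y else 0) + ∑ y, if y j = x j then α' y else 0 by
      rw [← Finset.sum_add_distrib]; exact Finset.sum_congr rfl fun y _ => by split <;> simp]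
    ring
  · simp [Fvec, Pi.add_apply, add_mul, Finset.sum_add_distrib]

lemma Fvec_smul (v : (∀ j, X j) → ℝ) (x : ∀ j, X j) (c : ℝ) (α : (∀ j, X j) → ℝ)
    (s : Fin m → ℝ) :
    Fvec v x (c • α) (c • s) = c • Fvec v x α s := by
  ext i
  rcases i with j | u
  · simp only [Fvec, PiLp.toLp_apply, Sum.elim_inl, PiLp.smul_apply, smul_eq_mul, Pi.smul_apply]
    rw [show (∑ y, if y j = x j then c * α y else 0) = c * ∑ y, if y j = x j then α y else 0 by
      rw [Finset.mul_sum]; exact Finset.sum_congr rfl fun y _ => by split <;> simp]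
    ring
  · simp only [Fvec, PiLp.toLp_apply, Sum.elim_inr, PiLp.smul_apply, smul_eq_mul, Pi.smul_apply, Finset.mul_sum]
    exact Finset.sum_congr rfl fun y _ => by ring

lemma Fvec_zero (v : (∀ j, X j) → ℝ) (x : ∀ j, X j) : Fvec v x 0 0 = 0 := by
  ext i
  rcases i with j | u <;> simp [Fvec]

/-- The cone of all coverage/cost vectors. -/
noncomputable def Tcone (v : (∀ j, X j) → ℝ) (x : ∀ j, X j) :
    ConvexCone ℝ (EuclideanSpace ℝ (Fin m ⊕ Unit)) where
  carrier := {z | ∃ α s, (∀ y, 0 ≤ α y) ∧ (∀ j, 0 ≤ s j) ∧ z = Fvec v x α s}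
  smul_mem' := by
    rintro c hc z ⟨α, s, hα, hs, rfl⟩
    exact ⟨c • α, c • s, fun y => mul_nonneg hc.le (hα y), fun j => mul_nonneg hc.le (hs j),
      (Fvec_smul v x c α s).symm⟩
  add_mem' := by
    rintro z ⟨α, s, hα, hs, rfl⟩ z' ⟨α', s', hα', hs', rfl⟩
    exact ⟨α + α', s + s', fun y => add_nonneg (hα y) (hα' y),
      fun j => add_nonneg (hs j) (hs' j), (Fvec_add v x α α' s s').symm⟩

open scoped InnerProductSpace in
lemma inner_Fvec (v : (∀ j, X j) → ℝ) (x : ∀ j, X j) (α : (∀ j, X j) → ℝ) (s : Fin m → ℝ)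
    (w : EuclideanSpace ℝ (Fin m ⊕ Unit)) :
    ⟪Fvec v x α s, w⟫_ℝ =
      (∑ j, ((∑ y, if y j = x j then α y else 0) - s j) * w (Sum.inl j))
        + (∑ y, α y * v y) * w (Sum.inr ()) := by
  simp [PiLp.inner_apply, RCLike.inner_apply, Fintype.sum_sum_type, Fvec, mul_comm]

end Cone

section Main
variable {m : ℕ} {X : Fin m → Type*} [∀ j, Fintype (X j)] [∀ j, Nonempty (X j)]
  [∀ j, DecidableEq (X j)]

lemma fs_bound (β : ℝ) (v : (∀ j, X j) → ℝ) (hfs : FracSubadd β v) (x : ∀ j, X j)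
    (α : (∀ j, X j) → ℝ) (hα : ∀ y, 0 ≤ α y)
    (hcov : ∀ j, 1 ≤ ∑ y, if y j = x j then α y else 0) :
    v x ≤ β * ∑ y, α y * v y := by
  obtain ⟨K, hK⟩ : ∃ K, Fintype.card (∀ j, X j) = K + 1 :=
    ⟨_, (Nat.succ_pred_eq_of_pos Fintype.card_pos).symm⟩
  set e : Fin (K + 1) ≃ (∀ j, X j) := (Fintype.equivFinOfCardEq hK).symm with he
  have h := hfs x K (fun ℓ => e ℓ) (fun ℓ => α (e ℓ)) (fun ℓ => hα _) (fun j => by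
    rw [Equiv.sum_comp e (fun y => if y j = x j then α y else 0)]
    exact hcov j)
  rwa [Equiv.sum_comp e (fun y => α y * v y)] at h

/-- Case A: the target point cannot lie in the closure of the cone. -/
lemma target_not_mem (β : ℝ) (hβ : 1 ≤ β) (v : (∀ j, X j) → ℝ)
    (hfs : FracSubadd β v) (x : ∀ j, X j) (t : ℝ) (ht0 : 0 < t) (htc : t < v x / β) :
    (WithLp.toLp 2 fun i => Sum.elim (fun _ => (1 : ℝ)) (fun _ => t) i : EuclideanSpace ℝ (Fin m ⊕ Unit))
      ∉ closure (Tcone v x : Set (EuclideanSpace ℝ (Fin m ⊕ Unit))) := by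
  have hβ0 : (0 : ℝ) < β := lt_of_lt_of_le one_pos hβ
  set c := v x / β with hc
  have hc0 : 0 < c := lt_trans ht0 htc
  intro hmem
  set bt : EuclideanSpace ℝ (Fin m ⊕ Unit) :=
    (WithLp.toLp 2 fun i => Sum.elim (fun _ => (1 : ℝ)) (fun _ => t) i) with hbtdef
  set ε := (c - t) / (c + 2) with hεdef
  have hε0 : 0 < ε := div_pos (by linarith) (by linarith)
  have hε1 : ε < 1 := by
    rw [div_lt_one (by linarith)]; linarith
  have h1ε : 0 < 1 - ε := by linarith
  obtain ⟨z, hz, hdist⟩ := (Metric.mem_closure_iff (α := EuclideanSpace ℝ (Fin m ⊕ Unit))).mp hmem ε hε0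
  obtain ⟨α, s, hα, hs, rfl⟩ := hz
  have hcov : ∀ j, 1 - ε ≤ ∑ y, if y j = x j then α y else 0 := by
    intro j
    have h1 := le_trans (abs_sub_coord_le_dist bt (Fvec v x α s) (Sum.inl j)) hdist.le
    rw [Fvec_inl, show bt (Sum.inl j) = 1 from rfl] at h1
    have h2 := (abs_le.mp h1).2
    have h3 := hs j
    linarith
  have hcost : ∑ y, α y * v y ≤ t + ε := by
    have h1 := le_trans (abs_sub_coord_le_dist bt (Fvec v x α s) (Sum.inr ())) hdist.le
    rw [Fvec_inr, show bt (Sum.inr ()) = t from rfl] at h1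
    have h2 := (abs_le.mp h1).1
    linarith
  have key := fs_bound β v hfs x (fun y => α y / (1 - ε))
    (fun y => div_nonneg (hα y) h1ε.le)
    (fun j => by
      rw [show (∑ y, if y j = x j then α y / (1 - ε) else 0)
          = (∑ y, if y j = x j then α y else 0) / (1 - ε) by
        rw [Finset.sum_div]; exact Finset.sum_congr rfl fun y _ => by split <;> simp]
      rw [le_div_iff₀ h1ε, one_mul]
      exact hcov j)
  have hsum : ∑ y, (α y / (1 - ε)) * v y = (∑ y, α y * v y) / (1 - ε) := by
    rw [Finset.sum_div]; exact Finset.sum_congr rfl fun y _ => by ring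
  rw [hsum] at key
  have hεc : ε * (c + 2) = c - t := by
    rw [hεdef]; field_simp
  have hlt : (∑ y, α y * v y) / (1 - ε) < c := by
    rw [div_lt_iff₀ h1ε]
    nlinarith
  have hfin : v x < v x := by
    calc v x ≤ β * ((∑ y, α y * v y) / (1 - ε)) := key
      _ < β * c := mul_lt_mul_of_pos_left hlt hβ0
      _ = v x := by rw [hc]; field_simp
  exact absurd hfin (lt_irrefl _)

/-- Case B: from non-membership, separation yields a dual feasible point with large value. -/
lemma exists_dual_of_not_mem (v : (∀ j, X j) → ℝ) (x : ∀ j, X j) (hvx : 0 < v x)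
    (t : ℝ) (ht0 : 0 < t)
    (hmem : (WithLp.toLp 2 fun i => Sum.elim (fun _ => (1 : ℝ)) (fun _ => t) i :
        EuclideanSpace ℝ (Fin m ⊕ Unit))
      ∉ closure (Tcone v x : Set (EuclideanSpace ℝ (Fin m ⊕ Unit)))) :
    ∃ p : Fin m → ℝ, (∀ j, 0 ≤ p j) ∧
      (∀ y : ∀ j, X j, (∑ j, if y j = x j then p j else 0) ≤ v y) ∧
      t < ∑ j, p j := by
  set bt : EuclideanSpace ℝ (Fin m ⊕ Unit) :=
    (WithLp.toLp 2 fun i => Sum.elim (fun _ => (1 : ℝ)) (fun _ => t) i) with hbtdef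
  have hTne : ((Tcone v x).closure : Set (EuclideanSpace ℝ (Fin m ⊕ Unit))).Nonempty :=
    ⟨0, subset_closure ⟨0, 0, fun y => le_refl 0, fun j => le_refl 0, (Fvec_zero v x).symm⟩⟩
  have hTclosed : IsClosed ((Tcone v x).closure : Set (EuclideanSpace ℝ (Fin m ⊕ Unit))) := by
    rw [ConvexCone.coe_closure]; exact isClosed_closure
  have hbtn : bt ∉ (Tcone v x).closure := by rwa [ConvexCone.mem_closure]
  obtain ⟨w, hw1, hw2⟩ :=
    ProperCone.hyperplane_separation' (C := ⟨(Tcone v x).closure.toPointedCone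
      (ConvexCone.Pointed.of_nonempty_of_isClosed hTne hTclosed), hTclosed⟩) (x₀ := bt) hbtn
  rw [real_inner_comm] at hw2
  have hw1' : ∀ z ∈ Tcone v x, (0 : ℝ) ≤ ⟪z, w⟫_ℝ := fun z hz =>
    hw1 z (subset_closure hz)
  set q : Fin m → ℝ := fun j => -(w (Sum.inl j)) with hqdef
  set μ : ℝ := w (Sum.inr ()) with hμdef
  -- nonneg coordinates
  have hqpos : ∀ j, 0 ≤ q j := by
    intro j
    have hmem1 : Fvec v x 0 (Pi.single j 1) ∈ Tcone v x :=
      ⟨0, Pi.single j 1, fun y => le_refl 0,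
        fun j' => by by_cases h : j' = j <;> simp [Pi.single_apply, h], rfl⟩
    have h := hw1' _ hmem1
    rw [inner_Fvec] at h
    simp only [Pi.zero_apply, ite_self, Finset.sum_const_zero, zero_sub, zero_mul,
      Finset.sum_const_zero, add_zero, neg_mul, Pi.single_apply, ite_mul, one_mul,
      Finset.sum_neg_distrib, Finset.sum_ite_eq', Finset.mem_univ, if_true] at h
    exact h
  -- dual feasibility constraints
  have hcons : ∀ y0 : ∀ j, X j, (∑ j, if y0 j = x j then q j else 0) ≤ μ * v y0 := by
    intro y0
    have hmem1 : Fvec v x (Pi.single y0 1) 0 ∈ Tcone v x :=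
      ⟨Pi.single y0 1, 0,
        fun y => by by_cases h : y = y0 <;> simp [Pi.single_apply, h],
        fun j => le_refl 0, rfl⟩
    have h := hw1' _ hmem1
    rw [inner_Fvec] at h
    have hy : ∀ j : Fin m, (∑ y, if y j = x j then Pi.single (M := fun _ : (∀ j, X j) => ℝ) y0 1 y else 0)
        = if y0 j = x j then 1 else 0 := by
      intro j
      rw [Finset.sum_eq_single
        (f := fun y => if y j = x j then Pi.single (M := fun _ : (∀ j, X j) => ℝ) y0 1 y else 0) y0
        (fun y _ hne => by by_cases h2 : y j = x j <;> simp [Pi.single_apply, hne, h2])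
        (fun habs => absurd (Finset.mem_univ y0) habs)]
      by_cases h2 : y0 j = x j <;> simp [Pi.single_apply, h2]
    have hv0 : (∑ y, Pi.single (M := fun _ : (∀ j, X j) => ℝ) y0 1 y * v y) = v y0 := by
      rw [Finset.sum_eq_single
        (f := fun y => Pi.single (M := fun _ : (∀ j, X j) => ℝ) y0 1 y * v y) y0
        (fun y _ hne => by simp [Pi.single_apply, hne])
        (fun habs => absurd (Finset.mem_univ y0) habs)]
      simp
    simp only [hy, hv0, sub_zero, Pi.zero_apply, ite_mul, one_mul, zero_mul] at h
    -- h : 0 ≤ (∑ j, if y0 j = x j then w (Sum.inl j) else 0) + v y0 * μ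
    have hq2 : (∑ j, if y0 j = x j then q j else 0)
        = -∑ j, if y0 j = x j then w (Sum.inl j) else 0 := by
      rw [← Finset.sum_neg_distrib]
      exact Finset.sum_congr rfl fun j _ => by by_cases h3 : y0 j = x j <;> simp [hqdef, h3]
    rw [hq2]
    nlinarith [h]
  -- the separating value inequality
  have hlast : μ * t < ∑ j, q j := by
    have h2 := hw2
    rw [show ⟪w, bt⟫_ℝ = (∑ j, w (Sum.inl j)) + μ * t from by
      simp [hbtdef, hμdef, PiLp.inner_apply, RCLike.inner_apply, Fintype.sum_sum_type, mul_comm]] at h2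
    have h3 : ∑ j, w (Sum.inl j) = -∑ j, q j := by
      simp [hqdef, Finset.sum_neg_distrib]
    rw [h3] at h2
    linarith
  have hsq : 0 ≤ ∑ j, q j := Finset.sum_nonneg fun j _ => hqpos j
  have hμpos : 0 < μ := by
    by_contra hμ
    push_neg at hμ
    have h1 : ∑ j, q j ≤ μ * v x := by simpa using hcons x
    have hμvx : μ * v x ≤ 0 := by nlinarith
    have hq0 : ∑ j, q j = 0 := le_antisymm (by linarith) hsq
    have hμt : μ * t < 0 := by linarith
    have hμneg : μ < 0 := by
      by_contra hμ2
      push_neg at hμ2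
      nlinarith [mul_nonneg hμ2 ht0.le]
    nlinarith [mul_neg_of_neg_of_pos hμneg hvx]
  refine ⟨fun j => q j / μ, fun j => div_nonneg (hqpos j) hμpos.le, fun y => ?_, ?_⟩
  · rw [show (∑ j, if y j = x j then q j / μ else 0)
        = (∑ j, if y j = x j then q j else 0) / μ by
      rw [Finset.sum_div]; exact Finset.sum_congr rfl fun j _ => by split <;> simp]
    rw [div_le_iff₀ hμpos, mul_comm]
    exact hcons y
  · rw [show (∑ j, q j / μ) = (∑ j, q j) / μ from (Finset.sum_div _ _ _).symm,
      lt_div_iff₀ hμpos, mul_comm]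
    exact hlast
lemma exists_dual (β : ℝ) (hβ : 1 ≤ β) (v : (∀ j, X j) → ℝ) (hv : ∀ x, 0 ≤ v x)
    (hfs : FracSubadd β v) (x : ∀ j, X j) :
    ∃ p : Fin m → ℝ, (∀ j, 0 ≤ p j) ∧
      (∀ y : ∀ j, X j, (∑ j, if y j = x j then p j else 0) ≤ v y) ∧
      v x ≤ β * ∑ j, p j := by
  have hβ0 : (0 : ℝ) < β := lt_of_lt_of_le one_pos hβ
  rcases le_or_gt (v x) 0 with hvx | hvx
  · refine ⟨0, fun j => le_refl 0, fun y => by simpa using hv y, ?_⟩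
    simp only [Pi.zero_apply, Finset.sum_const_zero, mul_zero]
    exact hvx
  set c := v x / β with hc
  have hc0 : 0 < c := div_pos hvx hβ0
  set P : Set (Fin m → ℝ) := {p | (∀ j, 0 ≤ p j) ∧
      ∀ y : ∀ j, X j, (∑ j, if y j = x j then p j else 0) ≤ v y} with hP
  have hP0 : (0 : Fin m → ℝ) ∈ P := ⟨fun j => le_refl 0, fun y => by simpa using hv y⟩
  have hPsub : P ⊆ Set.Icc 0 (fun _ => v x) := by
    rintro p ⟨hp1, hp2⟩
    refine ⟨fun j => hp1 j, fun j => ?_⟩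
    have h2 := hp2 x
    simp only [if_pos rfl] at h2
    calc p j ≤ ∑ j', p j' := Finset.single_le_sum (fun k _ => hp1 k) (Finset.mem_univ j)
      _ ≤ v x := h2
  have hPclosed : IsClosed P := by
    have h1 : IsClosed {p : Fin m → ℝ | ∀ j, 0 ≤ p j} := by
      rw [Set.setOf_forall]
      exact isClosed_iInter fun j => isClosed_le continuous_const (continuous_apply j)
    have h2 : IsClosed {p : Fin m → ℝ |
        ∀ y : ∀ j, X j, (∑ j, if y j = x j then p j else 0) ≤ v y} := by
      rw [Set.setOf_forall]
      refine isClosed_iInter fun y => isClosed_le ?_ continuous_const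
      refine continuous_finset_sum _ fun j _ => ?_
      split
      · exact continuous_apply j
      · exact continuous_const
    rw [hP, Set.setOf_and]
    exact h1.inter h2
  have hPcompact : IsCompact P :=
    (isCompact_Icc (a := (0 : Fin m → ℝ)) (b := fun _ => v x)).of_isClosed_subset
      hPclosed hPsub
  obtain ⟨p0, hp0, hmax⟩ := hPcompact.exists_isMaxOn ⟨0, hP0⟩
    ((continuous_finset_sum _ fun j _ => continuous_apply j).continuousOn)
  rcases le_or_gt c (∑ j, p0 j) with hge | hlt
  · refine ⟨p0, hp0.1, hp0.2, ?_⟩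
    calc v x = β * (v x / β) := by field_simp
      _ ≤ β * ∑ j, p0 j := mul_le_mul_of_nonneg_left hge hβ0.le
  · exfalso
    have hd0 : 0 ≤ ∑ j, p0 j := Finset.sum_nonneg fun j _ => hp0.1 j
    set t := ((∑ j, p0 j) + c) / 2 with ht
    have ht0 : 0 < t := by rw [ht]; linarith
    have htc : t < c := by rw [ht]; linarith
    have hnm := target_not_mem β hβ v hfs x t ht0 htc
    obtain ⟨p, hp1, hp2, hp3⟩ := exists_dual_of_not_mem v x hvx t ht0 hnm
    have hle : ∑ j, p j ≤ ∑ j, p0 j := hmax (⟨hp1, hp2⟩ : p ∈ P)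
    rw [ht] at hp3
    linarith

lemma fs_to_xos (β : ℝ) (hβ : 1 ≤ β) (v : (∀ j, X j) → ℝ) (hv : ∀ x, 0 ≤ v x)
    (hfs : FracSubadd β v) : IsXOS β v := by
  have hβ0 : (0 : ℝ) < β := lt_of_lt_of_le one_pos hβ
  choose p hp1 hp2 hp3 using exists_dual β hβ v hv hfs
  obtain ⟨K, hK⟩ : ∃ K, Fintype.card (∀ j, X j) = K + 1 :=
    ⟨_, (Nat.succ_pred_eq_of_pos Fintype.card_pos).symm⟩
  set e : Fin (K + 1) ≃ (∀ j, X j) := (Fintype.equivFinOfCardEq hK).symm with he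
  refine ⟨K, fun ℓ j xj => if xj = e ℓ j then p (e ℓ) j else 0, ?_, fun z => ⟨?_, ?_⟩⟩
  · intro ℓ j xj
    simp only []
    split
    · exact hp1 _ j
    · exact le_refl 0
  · refine Finset.sup'_le _ _ fun ℓ _ => ?_
    exact hp2 (e ℓ) z
  · have hkey : (∑ j, p z j)
        = ∑ j, (if z j = e (e.symm z) j then p (e (e.symm z)) j else 0) := by
      simp [Equiv.apply_symm_apply]
    calc v z ≤ β * ∑ j, p z j := hp3 z
      _ ≤ β * Finset.univ.sup' Finset.univ_nonempty
            (fun ℓ => ∑ j, (if z j = e ℓ j then p (e ℓ) j else 0)) := by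
        refine mul_le_mul_of_nonneg_left ?_ hβ0.le
        rw [hkey]
        exact Finset.le_sup'
          (f := fun ℓ => ∑ j, (if z j = e ℓ j then p (e ℓ) j else 0))
          (Finset.mem_univ (e.symm z))

end Main


lemma xos_to_fs {m : ℕ} {X : Fin m → Type*}
    [∀ j, Fintype (X j)] [∀ j, Nonempty (X j)] [∀ j, DecidableEq (X j)]
    (β : ℝ) (hβ : 1 ≤ β) (v : (∀ j, X j) → ℝ)
    (hx : IsXOS β v) : FracSubadd β v := by
  obtain ⟨K, w, hw, hsup⟩ := hx
  intro x K' y α hα hcov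
  obtain ⟨ℓs, -, hℓs⟩ := Finset.exists_mem_eq_sup' (Finset.univ_nonempty (α := Fin (K+1)))
    (fun ℓ => ∑ j, w ℓ j (x j))
  have key : ∑ j, w ℓs j (x j) ≤ ∑ ℓ, α ℓ * v (y ℓ) := by
    calc ∑ j, w ℓs j (x j)
        ≤ ∑ j, (∑ ℓ, if y ℓ j = x j then α ℓ else 0) * w ℓs j (x j) := by
          refine Finset.sum_le_sum fun j _ => ?_
          exact le_mul_of_one_le_left (hw _ _ _) (hcov j)
      _ = ∑ ℓ, ∑ j, (if y ℓ j = x j then α ℓ else 0) * w ℓs j (x j) := by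
          rw [Finset.sum_comm]
          exact Finset.sum_congr rfl fun j _ => Finset.sum_mul ..
      _ ≤ ∑ ℓ, α ℓ * ∑ j, w ℓs j (y ℓ j) := by
          refine Finset.sum_le_sum fun ℓ _ => ?_
          rw [Finset.mul_sum]
          refine Finset.sum_le_sum fun j _ => ?_
          by_cases h : y ℓ j = x j
          · simp [h, le_refl]
          · simp only [h, if_false, zero_mul]
            exact mul_nonneg (hα ℓ) (hw _ _ _)
      _ ≤ ∑ ℓ, α ℓ * v (y ℓ) := by
          refine Finset.sum_le_sum fun ℓ _ => ?_
          refine mul_le_mul_of_nonneg_left ?_ (hα ℓ)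
          exact le_trans (Finset.le_sup' (f := fun k => ∑ j, w k j (y ℓ j)) (Finset.mem_univ ℓs)) (hsup (y ℓ)).1
  calc v x ≤ β * Finset.univ.sup' Finset.univ_nonempty fun ℓ => ∑ j, w ℓ j (x j) := (hsup x).2
    _ ≤ β * ∑ ℓ, α ℓ * v (y ℓ) := by
        refine mul_le_mul_of_nonneg_left ?_ (by linarith)
        rw [hℓs]; exact key


/-- for `β ≥ 1`, a nonnegative valuation on a finite product is
`β`-fractionally subadditive iff it is `β`-XOS. -/
theorem stmt_0 {m : ℕ} (hm : 0 < m) (X : Fin m → Type*)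
    [∀ j, Fintype (X j)] [∀ j, Nonempty (X j)] [∀ j, DecidableEq (X j)]
    (β : ℝ) (hβ : 1 ≤ β) (v : (∀ j, X j) → ℝ) (hv : ∀ x, 0 ≤ v x) :
    FracSubadd β v ↔ IsXOS β v :=
  ⟨fun h => fs_to_xos β hβ v hv h, fun h => xos_to_fs β hβ v h⟩
end

section
/- If a nonnegative valuation v on the finite product X = X_1 × ⋯ × X_m with v(⊥_1,…,⊥_m) = 0 is set-monotone and set-submodular, then v is XOS. -/
/-- The outcome `x_S`: coordinates of `x` on `S`, the designated empty outcome `⊥_j` elsewhere. -/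
def restr {m : ℕ} {X : Fin m → Type*} (bot : ∀ j, X j) (x : ∀ j, X j)
    (S : Finset (Fin m)) : ∀ j, X j :=
  fun j => if j ∈ S then x j else bot j

/-- a nonnegative set-monotone, set-submodular valuation with `v(⊥) = 0`
is XOS (exact representation as a max of nonnegative additive valuations). -/
theorem stmt_2 {m : ℕ} (hm : 0 < m) (X : Fin m → Type*)
    [∀ j, Fintype (X j)] [∀ j, Nonempty (X j)] [∀ j, DecidableEq (X j)]
    (bot : ∀ j, X j) (v : (∀ j, X j) → ℝ) (hv : ∀ x, 0 ≤ v x)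
    (hbot : v bot = 0)
    (hmono : ∀ (x : ∀ j, X j) (S T : Finset (Fin m)), S ⊆ T →
      v (restr bot x S) ≤ v (restr bot x T))
    (hsubmod : ∀ (x : ∀ j, X j) (S T : Finset (Fin m)) (j : Fin m), S ⊆ T →
      v (restr bot x (insert j T)) - v (restr bot x T) ≤
        v (restr bot x (insert j S)) - v (restr bot x S)) :
    ∃ (K : ℕ) (w : Fin (K + 1) → ∀ j, X j → ℝ),
      (∀ ℓ j xj, 0 ≤ w ℓ j xj) ∧
      ∀ x : ∀ j, X j,
        v x = Finset.univ.sup' Finset.univ_nonempty fun ℓ => ∑ j, w ℓ j (x j) := by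
  classical
  -- marginal contribution of coordinate j for outcome y
  set g : (∀ j, X j) → Fin m → ℝ := fun y j =>
    v (restr bot y (Finset.Iic j)) - v (restr bot y (Finset.Iio j)) with hg
  have hg0 : ∀ (y : ∀ j, X j) (j : Fin m), 0 ≤ g y j := by
    intro y j
    have := hmono y (Finset.Iio j) (Finset.Iic j) Finset.Iio_subset_Iic_self
    simp only [hg]
    linarith
  -- telescoping identity
  have htel : ∀ (y : ∀ j, X j) (S : Finset (Fin m)),
      ∑ j ∈ S, (v (restr bot y (S ∩ Finset.Iic j)) - v (restr bot y (S ∩ Finset.Iio j)))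
        = v (restr bot y S) := by
    intro y S
    induction S using Finset.induction_on_max with
    | empty =>
      have h : restr bot y (∅ : Finset (Fin m)) = bot := by
        funext j; simp [restr]
      simp [h, hbot]
    | insert a T ha ih =>
      have haT : a ∉ T := fun h => lt_irrefl a (ha a h)
      rw [Finset.sum_insert haT]
      have h1 : (insert a T) ∩ Finset.Iic a = insert a T := by
        apply Finset.inter_eq_left.mpr
        intro b hb
        rcases Finset.mem_insert.mp hb with h | h
        · simp [h]
        · exact Finset.mem_Iic.mpr (le_of_lt (ha b h))
      have h2 : (insert a T) ∩ Finset.Iio a = T := by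
        ext b
        simp only [Finset.mem_inter, Finset.mem_insert, Finset.mem_Iio]
        constructor
        · rintro ⟨h | h, hlt⟩
          · exact absurd hlt (by simp [h])
          · exact h
        · intro h; exact ⟨Or.inr h, ha b h⟩
      have h3 : ∀ j ∈ T, (insert a T) ∩ Finset.Iic j = T ∩ Finset.Iic j := by
        intro j hj
        ext b
        simp only [Finset.mem_inter, Finset.mem_insert, Finset.mem_Iic]
        constructor
        · rintro ⟨h | h, hle⟩
          · exact absurd hle (not_le.mpr (h ▸ ha j hj))
          · exact ⟨h, hle⟩
        · rintro ⟨h, hle⟩; exact ⟨Or.inr h, hle⟩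
      have h4 : ∀ j ∈ T, (insert a T) ∩ Finset.Iio j = T ∩ Finset.Iio j := by
        intro j hj
        ext b
        simp only [Finset.mem_inter, Finset.mem_insert, Finset.mem_Iio]
        constructor
        · rintro ⟨h | h, hlt⟩
          · exact absurd hlt (not_lt.mpr (le_of_lt (h ▸ ha j hj)))
          · exact ⟨h, hlt⟩
        · rintro ⟨h, hlt⟩; exact ⟨Or.inr h, hlt⟩
      rw [h1, h2, Finset.sum_congr rfl (fun j hj => by rw [h3 j hj, h4 j hj]), ih]
      ring
  -- sum of marginals over S is at most v(restr y S)
  have hle : ∀ (y : ∀ j, X j) (S : Finset (Fin m)), ∑ j ∈ S, g y j ≤ v (restr bot y S) := by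
    intro y S
    rw [← htel y S]
    apply Finset.sum_le_sum
    intro j hj
    have hsub := hsubmod y (S ∩ Finset.Iio j) (Finset.Iio j) j Finset.inter_subset_right
    have e1 : insert j (Finset.Iio j) = Finset.Iic j := by
      ext b
      simp only [Finset.mem_insert, Finset.mem_Iio, Finset.mem_Iic]
      constructor
      · rintro (h | h)
        · exact h.le
        · exact h.le
      · intro h
        rcases eq_or_lt_of_le h with h' | h'
        · exact Or.inl h'
        · exact Or.inr h'
    have e2 : insert j (S ∩ Finset.Iio j) = S ∩ Finset.Iic j := by
      ext b
      simp only [Finset.mem_insert, Finset.mem_inter, Finset.mem_Iio, Finset.mem_Iic]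
      constructor
      · rintro (h | ⟨h1', h2'⟩)
        · exact ⟨h ▸ hj, h ▸ le_refl j⟩
        · exact ⟨h1', h2'.le⟩
      · rintro ⟨h1', h2'⟩
        rcases eq_or_lt_of_le h2' with h' | h'
        · exact Or.inl h'
        · exact Or.inr ⟨h1', h'⟩
    rw [e1, e2] at hsub
    simpa [hg] using hsub
  -- equality at S = univ
  have heq : ∀ y : ∀ j, X j, ∑ j, g y j = v y := by
    intro y
    have := htel y Finset.univ
    have hu : restr bot y (Finset.univ : Finset (Fin m)) = y := by
      funext j; simp [restr]
    simp only [Finset.univ_inter, hu] at this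
    simpa [hg] using this
  -- build the clauses
  have hcardpos : 0 < Fintype.card (∀ j, X j) := Fintype.card_pos
  refine ⟨Fintype.card (∀ j, X j) - 1, ?_⟩
  have hcard : Fintype.card (∀ j, X j) = Fintype.card (∀ j, X j) - 1 + 1 := (Nat.succ_pred_eq_of_pos hcardpos).symm
  let e : (∀ j, X j) ≃ Fin (Fintype.card (∀ j, X j) - 1 + 1) := Fintype.equivFinOfCardEq hcard
  refine ⟨fun ℓ j xj => if xj = (e.symm ℓ) j then g (e.symm ℓ) j else 0, ?_, ?_⟩
  · intro ℓ j xj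
    dsimp only
    split
    · exact hg0 _ _
    · exact le_refl 0
  · intro x
    apply le_antisymm
    · -- v x ≤ sup', witnessed by clause e x
      apply Finset.le_sup' _ (Finset.mem_univ (e x)) |>.trans_eq' ?_
      simp only [Equiv.symm_apply_apply, eq_self_iff_true, if_true]
      exact heq x
    · apply Finset.sup'_le
      intro ℓ _
      set y : ∀ j, X j := e.symm ℓ with hy
      set S : Finset (Fin m) := Finset.univ.filter (fun j => x j = y j) with hS
      have hsum : ∑ j, (if x j = y j then g y j else 0) = ∑ j ∈ S, g y j := by
        rw [hS, Finset.sum_filter]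
      have hxy : restr bot x S = restr bot y S := by
        funext j
        simp only [restr]
        split_ifs with h
        · exact (Finset.mem_filter.mp h).2
        · rfl
      have hu : restr bot x (Finset.univ : Finset (Fin m)) = x := by
        funext j; simp [restr]
      calc ∑ j, (if x j = y j then g y j else 0)
          = ∑ j ∈ S, g y j := hsum
        _ ≤ v (restr bot y S) := hle y S
        _ = v (restr bot x S) := by rw [hxy]
        _ ≤ v (restr bot x Finset.univ) := hmono x S Finset.univ (Finset.subset_univ S)
        _ = v x := by rw [hu]
end

section
/- If a nonnegative valuation v on the finite product X = X_1 × ⋯ × X_m with v(⊥_1,…,⊥_m) = 0 is set-monotone and set-subadditive, then v is H_m-XOS, where H_m = Σ_{k=1}^m 1/k is the m-th harmonic number. -/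
noncomputable def Hh (n : ℕ) : ℝ := ∑ k ∈ Finset.range n, (1:ℝ)/(k+1)

lemma Hh_nonneg (n : ℕ) : 0 ≤ Hh n :=
  Finset.sum_nonneg fun k _ => by positivity

lemma Hh_mono {a b : ℕ} (h : a ≤ b) : Hh a ≤ Hh b :=
  Finset.sum_le_sum_of_subset_of_nonneg (Finset.range_subset_range.mpr h)
    (fun k _ _ => by positivity)

lemma Hh_pos {n : ℕ} (h : 0 < n) : 0 < Hh n := by
  have h1 : Hh 1 ≤ Hh n := Hh_mono h
  have : Hh 1 = 1 := by simp [Hh]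
  linarith

lemma Hh_diff {a b : ℕ} (h : a ≤ b) (hb : 0 < b) :
    ((b : ℝ) - a) / b ≤ Hh b - Hh a := by
  have hsub : Hh b - Hh a = ∑ k ∈ Finset.Ico a b, (1:ℝ)/(k+1) := by
    have := Finset.sum_range_add_sum_Ico (fun k => (1:ℝ)/(k+1)) h
    rw [Hh, Hh]
    linarith
  rw [hsub]
  have hbound : ∀ k ∈ Finset.Ico a b, (1:ℝ)/b ≤ (1:ℝ)/(k+1) := by
    intro k hk
    rw [Finset.mem_Ico] at hk
    have hk1 : (k:ℝ)+1 ≤ b := by exact_mod_cast Nat.succ_le_of_lt hk.2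
    have : (0:ℝ) < (k:ℝ)+1 := by positivity
    exact one_div_le_one_div_of_le this hk1
  calc ((b : ℝ) - a) / b = (Finset.Ico a b).card • ((1:ℝ)/b) := by
        rw [Nat.card_Ico, nsmul_eq_mul, Nat.cast_sub h]; ring
    _ = ∑ _k ∈ Finset.Ico a b, (1:ℝ)/b := (Finset.sum_const _).symm
    _ ≤ ∑ k ∈ Finset.Ico a b, (1:ℝ)/(k+1) := Finset.sum_le_sum hbound

/-- Dual fitting for the greedy cover: prices for a monotone subadditive set function. -/
lemma core {m : ℕ} (f : Finset (Fin m) → ℝ) (hf0 : f ∅ = 0) (hfnn : ∀ A, 0 ≤ f A)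
    (hmono : ∀ A B, A ⊆ B → f A ≤ f B) (hsub : ∀ A B, f (A ∪ B) ≤ f A + f B)
    (U : Finset (Fin m)) :
    ∃ p : Fin m → ℝ, (∀ j, 0 ≤ p j) ∧ (∀ j, j ∉ U → p j = 0) ∧
      f U ≤ ∑ j ∈ U, p j ∧
      ∀ A : Finset (Fin m), ∑ j ∈ A, p j ≤ f A * Hh (A ∩ U).card := by
  classical
  induction U using Finset.strongInduction with
  | _ U IH =>
    rcases U.eq_empty_or_nonempty with rfl | hU
    · refine ⟨0, by simp, by simp, by simp [hf0], fun A => ?_⟩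
      simp only [Pi.zero_apply, Finset.sum_const_zero]
      exact mul_nonneg (hfnn A) (Hh_nonneg _)
    · obtain ⟨S, hSF, hSmin⟩ := Finset.exists_min_image
        ((U.powerset).filter fun S => S.Nonempty) (fun S => f S / S.card)
        ⟨U, by simp [hU]⟩
      rw [Finset.mem_filter, Finset.mem_powerset] at hSF
      obtain ⟨hSU, hSne⟩ := hSF
      have hScard : 0 < S.card := Finset.card_pos.mpr hSne
      obtain ⟨p', hp'0, hp'supp, hp'U, hp'A⟩ := IH (U \ S) (Finset.sdiff_ssubset hSU hSne)
      set θ := f S / S.card with hθdef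
      have hθ0 : 0 ≤ θ := div_nonneg (hfnn S) (by positivity)
      have hθS : θ * S.card = f S :=
        div_mul_cancel₀ _ (by exact_mod_cast hScard.ne')
      refine ⟨fun j => p' j + (if j ∈ S then θ else 0), ?_, ?_, ?_, ?_⟩
      · intro j
        have : (0:ℝ) ≤ if j ∈ S then θ else 0 := by split <;> simp [hθ0]
        exact add_nonneg (hp'0 j) this
      · intro j hj
        have h1 : p' j = 0 := hp'supp j (fun h => hj (Finset.mem_sdiff.mp h).1)
        have h2 : j ∉ S := fun h => hj (hSU h)
        simp [h1, h2]
      · -- f U ≤ ∑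
        have hsplit : ∀ A : Finset (Fin m),
            ∑ j ∈ A, (p' j + (if j ∈ S then θ else 0))
              = (∑ j ∈ A, p' j) + θ * (A ∩ S).card := by
          intro A
          rw [Finset.sum_add_distrib]
          congr 1
          rw [Finset.sum_ite_mem, Finset.sum_const, nsmul_eq_mul, mul_comm]
        rw [hsplit]
        have hUS : U ∩ S = S := Finset.inter_eq_right.mpr hSU
        have hp'eq : ∑ j ∈ U \ S, p' j = ∑ j ∈ U, p' j :=
          Finset.sum_subset Finset.sdiff_subset (fun j _ hjn => hp'supp j hjn)
        have hcover : f U ≤ f (U \ S) + f S := by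
          have := hsub (U \ S) S
          rwa [Finset.sdiff_union_of_subset hSU] at this
        rw [hUS, hθS]
        linarith [hp'U, hp'eq.symm ▸ hp'U]
      · intro A
        have hsplit : ∑ j ∈ A, (p' j + (if j ∈ S then θ else 0))
              = (∑ j ∈ A, p' j) + θ * (A ∩ S).card := by
          rw [Finset.sum_add_distrib]
          congr 1
          rw [Finset.sum_ite_mem, Finset.sum_const, nsmul_eq_mul, mul_comm]
        rw [hsplit]
        set a := (A ∩ (U \ S)).card with ha
        set b := (A ∩ U).card with hbdef
        set s := (A ∩ S).card with hs
        have hunion : A ∩ U = (A ∩ (U \ S)) ∪ (A ∩ S) := by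
          rw [← Finset.inter_union_distrib_left, Finset.sdiff_union_of_subset hSU]
        have hdisj : Disjoint (A ∩ (U \ S)) (A ∩ S) :=
          Disjoint.mono Finset.inter_subset_right Finset.inter_subset_right
            Finset.sdiff_disjoint
        have hb : b = a + s := by
          rw [hbdef, hunion, Finset.card_union_of_disjoint hdisj]
        have hIH := hp'A A
        rcases Nat.eq_zero_or_pos s with hs0 | hspos
        · have : θ * (s:ℝ) = 0 := by rw [hs0]; simp
          rw [this]
          calc (∑ j ∈ A, p' j) + 0 ≤ f A * Hh a + 0 := by linarith [hIH]
            _ ≤ f A * Hh b := by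
                rw [add_zero]
                exact mul_le_mul_of_nonneg_left (Hh_mono (by omega)) (hfnn A)
        · have hbpos : 0 < b := by omega
          have hAUne : (A ∩ U).Nonempty := Finset.card_pos.mp hbpos
          have hθb : θ ≤ f A / b := by
            have h1 : θ ≤ f (A ∩ U) / (A ∩ U).card := by
              apply hSmin
              rw [Finset.mem_filter, Finset.mem_powerset]
              exact ⟨Finset.inter_subset_right, hAUne⟩
            have h2 : f (A ∩ U) ≤ f A := hmono _ _ Finset.inter_subset_left
            have hbR : (0:ℝ) < (b:ℝ) := by exact_mod_cast hbpos
            calc θ ≤ f (A ∩ U) / b := h1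
              _ ≤ f A / b := (div_le_div_iff_of_pos_right hbR).mpr h2
          have hθs : θ * s ≤ f A * ((s:ℝ)/b) := by
            have h1 : θ * s ≤ (f A / b) * s :=
              mul_le_mul_of_nonneg_right hθb (by positivity)
            calc θ * s ≤ (f A / b) * s := h1
              _ = f A * ((s:ℝ)/b) := by ring
          have hH : Hh a + (s:ℝ)/b ≤ Hh b := by
            have := Hh_diff (show a ≤ b by omega) hbpos
            have hc : ((b:ℝ) - a) = s := by
              have : (b:ℝ) = (a:ℝ) + s := by exact_mod_cast hb
              linarith
            rw [hc] at this
            linarith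
          calc (∑ j ∈ A, p' j) + θ * s ≤ f A * Hh a + f A * ((s:ℝ)/b) := by
                linarith [hIH]
            _ = f A * (Hh a + (s:ℝ)/b) := by ring
            _ ≤ f A * Hh b := mul_le_mul_of_nonneg_left hH (hfnn A)


lemma perx {m : ℕ} (hm : 0 < m) {X : Fin m → Type*}
    [∀ j, Fintype (X j)] [∀ j, Nonempty (X j)] [∀ j, DecidableEq (X j)]
    (bot : ∀ j, X j) (v : (∀ j, X j) → ℝ) (hv : ∀ x, 0 ≤ v x)
    (hbot : v bot = 0)
    (hmono : ∀ (x : ∀ j, X j) (S T : Finset (Fin m)), S ⊆ T →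
      v (restr bot x S) ≤ v (restr bot x T))
    (hsubadd : ∀ (x : ∀ j, X j) (S1 S2 : Finset (Fin m)),
      v (restr bot x (S1 ∪ S2)) ≤ v (restr bot x S1) + v (restr bot x S2))
    (x : ∀ j, X j) :
    ∃ c : Fin m → ℝ, (∀ j, 0 ≤ c j) ∧
      (∀ A : Finset (Fin m), ∑ j ∈ A, c j ≤ v (restr bot x A)) ∧
      v x ≤ Hh m * ∑ j, c j := by
  set f : Finset (Fin m) → ℝ := fun S => v (restr bot x S) with hf
  have hf0 : f ∅ = 0 := by
    have : restr bot x ∅ = bot := by funext j; simp [restr]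
    simp [hf, this, hbot]
  have hfx : f Finset.univ = v x := by
    have : restr bot x Finset.univ = x := by funext j; simp [restr]
    simp [hf, this]
  obtain ⟨p, hp0, hpsupp, hpU, hpA⟩ := core f hf0 (fun A => hv _)
    (fun A B h => hmono x A B h) (fun A B => hsubadd x A B) Finset.univ
  have hHm : 0 < Hh m := Hh_pos hm
  refine ⟨fun j => p j / Hh m, fun j => div_nonneg (hp0 j) hHm.le, ?_, ?_⟩
  · intro A
    have h1 : ∑ j ∈ A, p j / Hh m = (∑ j ∈ A, p j) / Hh m := by
      rw [Finset.sum_div]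
    rw [h1]
    have h2 := hpA A
    rw [Finset.inter_univ] at h2
    have h3 : Hh A.card ≤ Hh m := by
      apply Hh_mono
      have := Finset.card_le_univ A
      simpa using this
    have h4 : f A * Hh A.card ≤ f A * Hh m := mul_le_mul_of_nonneg_left h3 (hv _)
    rw [div_le_iff₀ hHm]
    calc ∑ j ∈ A, p j ≤ f A * Hh A.card := h2
      _ ≤ f A * Hh m := h4
  · have h1 : Hh m * ∑ j, p j / Hh m = ∑ j, p j := by
      rw [← Finset.sum_div, mul_div_cancel₀ _ hHm.ne']
    rw [h1, ← hfx]
    exact hpU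

/-- a nonnegative set-monotone, set-subadditive valuation with `v(⊥) = 0`
is `H_m`-XOS, where `H_m = ∑_{k=1}^m 1/k` is the `m`-th harmonic number. -/
theorem stmt_3 {m : ℕ} (hm : 0 < m) (X : Fin m → Type*)
    [∀ j, Fintype (X j)] [∀ j, Nonempty (X j)] [∀ j, DecidableEq (X j)]
    (bot : ∀ j, X j) (v : (∀ j, X j) → ℝ) (hv : ∀ x, 0 ≤ v x)
    (hbot : v bot = 0)
    (hmono : ∀ (x : ∀ j, X j) (S T : Finset (Fin m)), S ⊆ T →
      v (restr bot x S) ≤ v (restr bot x T))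
    (hsubadd : ∀ (x : ∀ j, X j) (S1 S2 : Finset (Fin m)),
      v (restr bot x (S1 ∪ S2)) ≤ v (restr bot x S1) + v (restr bot x S2)) :
    ∃ (K : ℕ) (w : Fin (K + 1) → ∀ j, X j → ℝ),
      (∀ ℓ j xj, 0 ≤ w ℓ j xj) ∧
      ∀ x : ∀ j, X j,
        (Finset.univ.sup' Finset.univ_nonempty fun ℓ => ∑ j, w ℓ j (x j)) ≤ v x ∧
        v x ≤ (∑ k ∈ Finset.range m, (1 : ℝ) / (k + 1)) *
          Finset.univ.sup' Finset.univ_nonempty fun ℓ => ∑ j, w ℓ j (x j) := by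
  classical
  choose c hc0 hcA hcx using perx hm bot v hv hbot hmono hsubadd
  have hcard : 0 < Fintype.card (∀ j, X j) := Fintype.card_pos
  refine ⟨Fintype.card (∀ j, X j) - 1, ?_⟩
  have hK : Fintype.card (∀ j, X j) = Fintype.card (∀ j, X j) - 1 + 1 :=
    (Nat.succ_pred_eq_of_pos hcard).symm
  set e : Fin (Fintype.card (∀ j, X j) - 1 + 1) ≃ (∀ j, X j) :=
    (Fintype.equivFinOfCardEq hK).symm with he
  refine ⟨fun ℓ j xj => if xj = e ℓ j then c (e ℓ) j else 0, ?_, ?_⟩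
  · intro ℓ j xj
    dsimp only
    split
    · exact hc0 _ j
    · exact le_refl _
  · intro x
    dsimp only
    constructor
    · apply Finset.sup'_le
      intro ℓ _
      set A : Finset (Fin m) := Finset.univ.filter (fun j => x j = e ℓ j) with hA
      have h1 : ∑ j, (if x j = e ℓ j then c (e ℓ) j else 0) = ∑ j ∈ A, c (e ℓ) j := by
        rw [hA, Finset.sum_filter]
      rw [h1]
      have h2 : restr bot (e ℓ) A = restr bot x A := by
        funext j
        by_cases hj : j ∈ A
        · have := (Finset.mem_filter.mp hj).2
          simp [restr, hj, this]
        · simp [restr, hj]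
      have h3 : restr bot x Finset.univ = x := by funext j; simp [restr]
      calc ∑ j ∈ A, c (e ℓ) j ≤ v (restr bot (e ℓ) A) := hcA (e ℓ) A
        _ = v (restr bot x A) := by rw [h2]
        _ ≤ v (restr bot x Finset.univ) := hmono x A Finset.univ (Finset.subset_univ A)
        _ = v x := by rw [h3]
    · set ℓ₀ := e.symm x with hℓ₀
      have hx : e ℓ₀ = x := e.apply_symm_apply x
      have h1 : ∑ j, (if x j = e ℓ₀ j then c (e ℓ₀) j else 0) = ∑ j, c x j := by
        simp [hx]
      have h2 : (∑ j, c x j) ≤ Finset.univ.sup' Finset.univ_nonempty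
          (fun ℓ => ∑ j, (if x j = e ℓ j then c (e ℓ) j else 0)) := by
        rw [← h1]
        exact Finset.le_sup' (fun ℓ => ∑ j, (if x j = e ℓ j then c (e ℓ) j else 0))
          (Finset.mem_univ ℓ₀)
      have hH : v x ≤ Hh m * ∑ j, c x j := hcx x
      have hHnn : (0:ℝ) ≤ Hh m := Hh_nonneg m
      calc v x ≤ Hh m * ∑ j, c x j := hH
        _ ≤ Hh m * Finset.univ.sup' Finset.univ_nonempty
            (fun ℓ => ∑ j, (if x j = e ℓ j then c (e ℓ) j else 0)) :=
          mul_le_mul_of_nonneg_left h2 hHnn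
end

section
/- Let β ≥ 1 and let v be a nonnegative valuation on the finite product X = X_1 × ⋯ × X_m that is monotone with respect to the coordinate-wise partial order and β-fractionally subadditive. Then v is β-XOS via a representation in which every component v^ℓ_j : X_j → ℝ is monotone with respect to ⪰_j. -/
private lemma coord_dist_le {ι : Type*} [Fintype ι] (x y : EuclideanSpace ℝ ι) (i : ι) :
    dist (x i) (y i) ≤ dist x y := by
  rw [EuclideanSpace.dist_eq]
  have h1 : dist (x i) (y i) = Real.sqrt (dist (x i) (y i) ^ 2) :=
    (Real.sqrt_sq dist_nonneg).symm
  rw [h1]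
  apply Real.sqrt_le_sqrt
  exact Finset.single_le_sum (f := fun i => dist (x i) (y i) ^ 2)
    (fun _ _ => sq_nonneg _) (Finset.mem_univ i)

/-- The key dual-prices lemma, obtained by LP duality (via hyperplane separation). -/
private lemma exists_dual_weights {m : ℕ} (X : Fin m → Type*)
    [∀ j, Fintype (X j)] [∀ j, Nonempty (X j)] [∀ j, DecidableEq (X j)]
    (β : ℝ) (hβ : 1 ≤ β) (v : (∀ j, X j) → ℝ) (hv : ∀ x, 0 ≤ v x)
    (hfs : FracSubadd β v) (xs : ∀ j, X j) :
    ∃ p : Fin m → ℝ, (∀ j, 0 ≤ p j) ∧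
      (∀ y : ∀ j, X j, (∑ j, if y j = xs j then p j else 0) ≤ v y) ∧
      v xs ≤ β * ∑ j, p j := by
  classical
  -- the dual feasible set
  set D : Set (Fin m → ℝ) :=
    {p | (∀ j, 0 ≤ p j) ∧ ∀ y : ∀ j, X j, (∑ j, if y j = xs j then p j else 0) ≤ v y} with hD
  have hD0 : (0 : Fin m → ℝ) ∈ D := by
    refine ⟨fun j => le_refl 0, fun y => ?_⟩
    simpa using hv y
  have hDsub : D ⊆ Set.Icc (0 : Fin m → ℝ) (fun _ => v xs) := by
    intro p hp
    constructor
    · intro j; exact hp.1 j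
    · intro j
      have h1 := hp.2 xs
      simp only [if_pos rfl] at h1
      calc p j ≤ ∑ j', p j' :=
            Finset.single_le_sum (fun j' _ => hp.1 j') (Finset.mem_univ j)
        _ ≤ v xs := h1
  have hDclosed : IsClosed D := by
    have : D = (⋂ j, {p : Fin m → ℝ | 0 ≤ p j}) ∩
        ⋂ y : ∀ j, X j, {p : Fin m → ℝ | (∑ j, if y j = xs j then p j else 0) ≤ v y} := by
      ext p
      simp only [hD, Set.mem_setOf_eq, Set.mem_inter_iff, Set.mem_iInter]
    rw [this]
    refine IsClosed.inter (isClosed_iInter fun j =>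
        isClosed_le continuous_const (continuous_apply j)) (isClosed_iInter fun y => ?_)
    refine isClosed_le ?_ continuous_const
    refine continuous_finset_sum _ fun j _ => ?_
    by_cases h : y j = xs j
    · simpa [h] using continuous_apply j
    · simp only [h, if_false]
      exact continuous_const
  have hDcpt : IsCompact D := IsCompact.of_isClosed_subset isCompact_Icc hDclosed hDsub
  obtain ⟨p, hpD, hpmax⟩ := hDcpt.exists_isMaxOn ⟨0, hD0⟩
    ((continuous_finset_sum Finset.univ fun j _ => continuous_apply j).continuousOn
      (f := fun p : Fin m → ℝ => ∑ j, p j))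
  set M := ∑ j, p j with hM
  refine ⟨p, hpD.1, hpD.2, ?_⟩
  -- the primal cone in `ℝ^{m+1}`
  let toE : (Fin m ⊕ Unit → ℝ) → EuclideanSpace ℝ (Fin m ⊕ Unit) := fun f => WithLp.toLp 2 f
  have htoE : ∀ f i, toE f i = f i := fun _ _ => rfl
  let A : ConvexCone ℝ (EuclideanSpace ℝ (Fin m ⊕ Unit)) :=
    { carrier := {z : EuclideanSpace ℝ (Fin m ⊕ Unit) | ∃ α : (∀ j, X j) → ℝ, (∀ y, 0 ≤ α y) ∧
        (∀ j, z (Sum.inl j) ≤ ∑ y, (if y j = xs j then α y else 0)) ∧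
        (∑ y, α y * v y) ≤ z (Sum.inr ())}
      smul_mem' := by
        rintro c hc z ⟨α, hα0, hcov, hcost⟩
        refine ⟨c • α, fun y => mul_nonneg hc.le (hα0 y), fun j => ?_, ?_⟩
        · have h2 : (c • z) (Sum.inl j) = c * z (Sum.inl j) := rfl
          rw [h2]
          calc c * z (Sum.inl j) ≤ c * ∑ y, (if y j = xs j then α y else 0) :=
                mul_le_mul_of_nonneg_left (hcov j) hc.le
            _ = ∑ y, (if y j = xs j then (c • α) y else 0) := by
                rw [Finset.mul_sum]
                refine Finset.sum_congr rfl fun y _ => ?_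
                split_ifs <;> simp
        · have h2 : (c • z) (Sum.inr ()) = c * z (Sum.inr ()) := rfl
          rw [h2]
          calc ∑ y, (c • α) y * v y = c * ∑ y, α y * v y := by
                rw [Finset.mul_sum]
                refine Finset.sum_congr rfl fun y _ => ?_
                simp [mul_assoc]
            _ ≤ c * z (Sum.inr ()) := mul_le_mul_of_nonneg_left hcost hc.le
      add_mem' := by
        rintro z ⟨α, hα0, hcov, hcost⟩ w ⟨α', hα0', hcov', hcost'⟩
        refine ⟨α + α', fun y => add_nonneg (hα0 y) (hα0' y), fun j => ?_, ?_⟩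
        · have h2 : (z + w) (Sum.inl j) = z (Sum.inl j) + w (Sum.inl j) := rfl
          rw [h2]
          calc z (Sum.inl j) + w (Sum.inl j)
              ≤ (∑ y, (if y j = xs j then α y else 0)) +
                ∑ y, (if y j = xs j then α' y else 0) := add_le_add (hcov j) (hcov' j)
            _ = ∑ y, (if y j = xs j then (α + α') y else 0) := by
                rw [← Finset.sum_add_distrib]
                refine Finset.sum_congr rfl fun y _ => ?_
                split_ifs <;> simp
        · have h2 : (z + w) (Sum.inr ()) = z (Sum.inr ()) + w (Sum.inr ()) := rfl
          rw [h2]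
          calc ∑ y, (α + α') y * v y = (∑ y, α y * v y) + ∑ y, α' y * v y := by
                rw [← Finset.sum_add_distrib]
                refine Finset.sum_congr rfl fun y _ => ?_
                simp [add_mul]
            _ ≤ z (Sum.inr ()) + w (Sum.inr ()) := add_le_add hcost hcost' }
  have h0A : (0 : EuclideanSpace ℝ (Fin m ⊕ Unit)) ∈ A := by
    refine ⟨0, fun y => le_refl 0, fun j => ?_, ?_⟩
    · show (0:ℝ) ≤ _
      simp
    · show _ ≤ (0:ℝ)
      simp
  -- generators of the cone
  have hgA : ∀ y : ∀ j, X j,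
      toE (Sum.elim (fun j => if y j = xs j then (1:ℝ) else 0) (fun _ => v y)) ∈ A := by
    intro y
    refine ⟨fun y' => if y' = y then 1 else 0, fun y' => by positivity, fun j => ?_, ?_⟩
    · have hterm : (fun y' => if y' j = xs j then (if y' = y then (1:ℝ) else 0) else 0) y
          = (if y j = xs j then (1:ℝ) else 0) := by simp
      rw [htoE, Sum.elim_inl, ← hterm]
      exact Finset.single_le_sum
        (f := fun y' => if y' j = xs j then (if y' = y then (1:ℝ) else 0) else 0)
        (fun y' _ => by positivity) (Finset.mem_univ y)
    · rw [htoE, Sum.elim_inr]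
      simp [ite_mul, zero_mul, one_mul]
  have hdA : ∀ j0 : Fin m,
      toE (Sum.elim (fun j => if j = j0 then (-1:ℝ) else 0) (fun _ => 0)) ∈ A := by
    intro j0
    refine ⟨0, fun y => le_refl 0, fun j => ?_, ?_⟩
    · rw [htoE, Sum.elim_inl]
      split_ifs <;> simp
    · rw [htoE, Sum.elim_inr]
      simp
  have heA : toE (Sum.elim (fun _ => (0:ℝ)) (fun _ => 1)) ∈ A := by
    refine ⟨0, fun y => le_refl 0, fun j => ?_, ?_⟩
    · rw [htoE, Sum.elim_inl]
      simp
    · rw [htoE, Sum.elim_inr]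
      simp
  set b : EuclideanSpace ℝ (Fin m ⊕ Unit) := toE (Sum.elim (fun _ => (1:ℝ)) (fun _ => M))
    with hb_def
  have hbA : b ∈ closure (A : Set (EuclideanSpace ℝ (Fin m ⊕ Unit))) := by
    by_contra hb
    obtain ⟨q, hq1, hq2⟩ := ProperCone.hyperplane_separation'
      (C := ⟨A.closure.toPointedCone (subset_closure h0A), isClosed_closure⟩) (x₀ := b) hb
    -- evaluate the separating functional on the generators
    have hs : 0 ≤ q (Sum.inr ()) := by
      have h1 := hq1 _ (subset_closure heA)
      simpa [PiLp.inner_apply, RCLike.inner_apply, conj_trivial,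
        Fintype.sum_sum_type, htoE] using h1
    have hd : ∀ j0, q (Sum.inl j0) ≤ 0 := by
      intro j0
      have h1 := hq1 _ (subset_closure (hdA j0))
      simp only [PiLp.inner_apply, RCLike.inner_apply, conj_trivial,
        Fintype.sum_sum_type, htoE, Sum.elim_inl, Sum.elim_inr, ite_mul, neg_one_mul,
        zero_mul, Finset.sum_ite_eq', Finset.mem_univ, if_true, Finset.univ_unique,
        Finset.sum_singleton] at h1
      simp at h1
      linarith
    have hg : ∀ y : ∀ j, X j,
        0 ≤ (∑ j, if y j = xs j then q (Sum.inl j) else 0) + v y * q (Sum.inr ()) := by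
      intro y
      have h1 := hq1 _ (subset_closure (hgA y))
      simp only [PiLp.inner_apply, RCLike.inner_apply, conj_trivial,
        Fintype.sum_sum_type, htoE, Sum.elim_inl, Sum.elim_inr, Finset.univ_unique,
        Finset.sum_singleton] at h1
      simpa [ite_mul, one_mul, zero_mul, mul_comm] using h1
    have hq2' : (∑ j, q (Sum.inl j)) + q (Sum.inr ()) * M < 0 := by
      simp only [PiLp.inner_apply, RCLike.inner_apply, conj_trivial,
        Fintype.sum_sum_type, hb_def, htoE, Sum.elim_inl, Sum.elim_inr,
        Finset.univ_unique, Finset.sum_singleton, mul_one] at hq2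
      linarith
    rcases hs.lt_or_eq with hspos | hs0
    · -- positive last coordinate: renormalize to get a better dual point
      set s := q (Sum.inr ()) with hsdef
      set p' : Fin m → ℝ := fun j => -q (Sum.inl j) / s with hp'
      have hp'D : p' ∈ D := by
        refine ⟨fun j => div_nonneg (by linarith [hd j]) hspos.le, fun y => ?_⟩
        have h1 := hg y
        have h2 : (∑ j, if y j = xs j then p' j else 0)
            = (∑ j, if y j = xs j then -q (Sum.inl j) else 0) / s := by
          rw [Finset.sum_div]
          refine Finset.sum_congr rfl fun j _ => ?_
          split_ifs <;> simp [hp']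
        rw [h2, div_le_iff₀ hspos]
        have h3 : (∑ j, if y j = xs j then -q (Sum.inl j) else 0)
            = -(∑ j, if y j = xs j then q (Sum.inl j) else 0) := by
          rw [← Finset.sum_neg_distrib]
          refine Finset.sum_congr rfl fun j _ => ?_
          split_ifs <;> simp
        rw [h3]
        linarith
      have hle : ∑ j, p' j ≤ M := hpmax hp'D
      have h4 : (∑ j, p' j) = (∑ j, -q (Sum.inl j)) / s := by
        rw [Finset.sum_div]
      have h5 : (∑ j, -q (Sum.inl j)) = -(∑ j, q (Sum.inl j)) := by
        rw [← Finset.sum_neg_distrib]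
      rw [h4, h5, div_le_iff₀ hspos] at hle
      nlinarith
    · -- zero last coordinate: contradiction with the generator at `xs`
      have h1 := hg xs
      rw [← hs0] at h1 hq2'
      simp at h1 hq2'
      linarith
  -- now extract an approximately optimal primal solution and use fractional subadditivity
  have hkey : ∀ ε : ℝ, 0 < ε → v xs ≤ β * M + ε := by
    intro ε hε
    have hc : (0:ℝ) < β + v xs := by linarith [hv xs]
    set δ : ℝ := min (1/2) (ε / (β + v xs)) with hδdef
    have hδ0 : 0 < δ := lt_min (by norm_num) (div_pos hε hc)
    have hδhalf : δ ≤ 1/2 := min_le_left _ _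
    have h1δ : (0:ℝ) < 1 - δ := by linarith
    obtain ⟨z, hzA, hzd⟩ := Metric.mem_closure_iff.mp hbA δ hδ0
    obtain ⟨α, hα0, hcov, hcost⟩ := hzA
    have hcoord : ∀ i, dist (b i) (z i) ≤ dist b z := fun i => coord_dist_le b z i
    have h1 : ∀ j, 1 - δ ≤ z (Sum.inl j) := by
      intro j
      have h := (hcoord (Sum.inl j)).trans_lt hzd
      have hb1 : b (Sum.inl j) = 1 := rfl
      rw [hb1, Real.dist_eq] at h
      obtain ⟨ha, hb'⟩ := abs_lt.mp h
      linarith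
    have h2 : z (Sum.inr ()) ≤ M + δ := by
      have h := (hcoord (Sum.inr ())).trans_lt hzd
      have hb2 : b (Sum.inr ()) = M := rfl
      rw [hb2, Real.dist_eq] at h
      obtain ⟨ha, hb'⟩ := abs_lt.mp h
      linarith
    obtain ⟨K, hK⟩ : ∃ K, Fintype.card (∀ j, X j) = K + 1 :=
      ⟨_, (Nat.succ_pred_eq_of_pos Fintype.card_pos).symm⟩
    let eY : Fin (K+1) ≃ (∀ j, X j) := (finCongr hK.symm).trans (Fintype.equivFin _).symm
    have hmain := hfs xs K (fun ℓ => eY ℓ) (fun ℓ => (1-δ)⁻¹ * α (eY ℓ))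
      (fun ℓ => mul_nonneg (inv_nonneg.2 h1δ.le) (hα0 _)) ?_
    · have hsum : (∑ ℓ, (1-δ)⁻¹ * α (eY ℓ) * v (eY ℓ))
          = (1-δ)⁻¹ * ∑ y, α y * v y := by
        rw [Finset.mul_sum]
        exact Fintype.sum_equiv eY _ _ (fun ℓ => by ring)
      rw [hsum] at hmain
      have hfrac : v xs ≤ β * ((1-δ)⁻¹ * (M + δ)) := by
        refine hmain.trans (mul_le_mul_of_nonneg_left ?_ (by linarith))
        exact mul_le_mul_of_nonneg_left (hcost.trans h2) (inv_nonneg.2 h1δ.le)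
      have hδε : δ * (β + v xs) ≤ ε := by
        have h := min_le_right (1/2 : ℝ) (ε / (β + v xs))
        calc δ * (β + v xs) ≤ (ε / (β + v xs)) * (β + v xs) :=
              mul_le_mul_of_nonneg_right h hc.le
          _ = ε := div_mul_cancel₀ ε hc.ne'
      have h6 : v xs * (1 - δ) ≤ β * (M + δ) := by
        have h7 : β * ((1-δ)⁻¹ * (M + δ)) = (β * (M + δ)) / (1 - δ) := by
          field_simp
        rw [h7, le_div_iff₀ h1δ] at hfrac
        exact hfrac
      nlinarith
    · intro j
      have hsum : (∑ ℓ, if (fun ℓ => eY ℓ) ℓ j = xs j then (1-δ)⁻¹ * α (eY ℓ) else 0)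
          = (1-δ)⁻¹ * ∑ y, (if y j = xs j then α y else 0) := by
        rw [Finset.mul_sum]
        refine Fintype.sum_equiv eY _ _ (fun ℓ => ?_)
        split_ifs <;> simp
      rw [hsum]
      have hz1 : 1 - δ ≤ ∑ y, (if y j = xs j then α y else 0) := (h1 j).trans (hcov j)
      calc (1:ℝ) = (1-δ)⁻¹ * (1 - δ) := by field_simp
        _ ≤ (1-δ)⁻¹ * ∑ y, (if y j = xs j then α y else 0) :=
            mul_le_mul_of_nonneg_left hz1 (inv_nonneg.2 h1δ.le)
  calc v xs ≤ β * M := le_of_forall_pos_le_add hkey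
    _ = β * ∑ j, p j := rfl

/-- a nonnegative valuation that is monotone w.r.t. the coordinate-wise partial
order and `β`-fractionally subadditive (β ≥ 1) is `β`-XOS via a representation whose
components `w ℓ j : X j → ℝ` are all monotone. -/
theorem stmt_4 {m : ℕ} (hm : 0 < m) (X : Fin m → Type*)
    [∀ j, Fintype (X j)] [∀ j, Nonempty (X j)] [∀ j, DecidableEq (X j)]
    [∀ j, PartialOrder (X j)]
    (β : ℝ) (hβ : 1 ≤ β) (v : (∀ j, X j) → ℝ) (hv : ∀ x, 0 ≤ v x)
    (hmono : Monotone v) (hfs : FracSubadd β v) :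
    ∃ (K : ℕ) (w : Fin (K + 1) → ∀ j, X j → ℝ),
      (∀ ℓ j xj, 0 ≤ w ℓ j xj) ∧
      (∀ ℓ j, Monotone (w ℓ j)) ∧
      ∀ x : ∀ j, X j,
        (Finset.univ.sup' Finset.univ_nonempty fun ℓ => ∑ j, w ℓ j (x j)) ≤ v x ∧
        v x ≤ β * Finset.univ.sup' Finset.univ_nonempty fun ℓ => ∑ j, w ℓ j (x j) := by
  classical
  choose p hp1 hp2 hp3 using exists_dual_weights X β hβ v hv hfs
  obtain ⟨K, hK⟩ : ∃ K, Fintype.card (∀ j, X j) = K + 1 :=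
    ⟨_, (Nat.succ_pred_eq_of_pos Fintype.card_pos).symm⟩
  let eY : Fin (K+1) ≃ (∀ j, X j) := (finCongr hK.symm).trans (Fintype.equivFin _).symm
  refine ⟨K, fun ℓ j xj => if (eY ℓ) j ≤ xj then p (eY ℓ) j else 0, ?_, ?_, ?_⟩
  · intro ℓ j xj
    dsimp only
    split_ifs
    · exact hp1 _ j
    · exact le_refl 0
  · intro ℓ j a c hac
    dsimp only
    by_cases h : (eY ℓ) j ≤ a
    · rw [if_pos h, if_pos (h.trans hac)]
    · rw [if_neg h]
      split_ifs
      · exact hp1 _ j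
      · exact le_refl 0
  · intro x
    constructor
    · refine Finset.sup'_le _ _ fun ℓ _ => ?_
      set z := eY ℓ with hz
      set y : ∀ j, X j := fun j => if z j ≤ x j then z j else x j with hy
      have hyx : y ≤ x := by
        intro j
        by_cases h : z j ≤ x j <;> simp [hy, h]
      have hstep : (∑ j, if z j ≤ x j then p z j else 0)
          ≤ ∑ j, (if y j = z j then p z j else 0) := by
        refine Finset.sum_le_sum fun j _ => ?_
        by_cases h : z j ≤ x j
        · rw [if_pos h, if_pos (by simp [hy, h])]
        · rw [if_neg h]
          split_ifs
          · exact hp1 _ j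
          · exact le_refl 0
      calc (∑ j, if z j ≤ x j then p z j else 0)
          ≤ ∑ j, (if y j = z j then p z j else 0) := hstep
        _ ≤ v y := hp2 z y
        _ ≤ v x := hmono hyx
    · set ℓ₀ := eY.symm x with hℓ₀
      have hx : eY ℓ₀ = x := Equiv.apply_symm_apply _ _
      have hclause : (∑ j, if (eY ℓ₀) j ≤ x j then p (eY ℓ₀) j else 0) = ∑ j, p x j := by
        rw [hx]
        exact Finset.sum_congr rfl fun j _ => if_pos (le_refl _)
      have hle : (∑ j, if (eY ℓ₀) j ≤ x j then p (eY ℓ₀) j else 0)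
          ≤ Finset.univ.sup' Finset.univ_nonempty
            (fun ℓ => ∑ j, if (eY ℓ) j ≤ x j then p (eY ℓ) j else 0) :=
        Finset.le_sup' (f := fun ℓ => ∑ j, if (eY ℓ) j ≤ x j then p (eY ℓ) j else 0)
          (Finset.mem_univ ℓ₀)
      calc v x ≤ β * ∑ j, p x j := hp3 x
        _ = β * (∑ j, if (eY ℓ₀) j ≤ x j then p (eY ℓ₀) j else 0) := by rw [hclause]
        _ ≤ _ := mul_le_mul_of_nonneg_left hle (by linarith)
end

section
/- Let (X, ≤) be a lattice and v : X → ℝ. (i) If v satisfies the diminishing marginal returns property, then v is lattice-submodular. (ii) If moreover X is a distributive lattice and v is monotone and lattice-submodular, then v satisfies the diminishing marginal returns property. -/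
/-- (i) on any lattice, the diminishing-marginal-returns property implies
lattice-submodularity; (ii) on a distributive lattice, a monotone lattice-submodular function
satisfies the diminishing-marginal-returns property. -/
theorem stmt_5 :
    (∀ (X : Type*) [Lattice X] (v : X → ℝ),
      (∀ y z t : X, y ≤ z → v (t ⊔ z) - v z ≤ v (t ⊔ y) - v y) →
      ∀ x y : X, v (x ⊔ y) + v (x ⊓ y) ≤ v x + v y) ∧
    (∀ (X : Type*) [DistribLattice X] (v : X → ℝ),
      Monotone v →
      (∀ x y : X, v (x ⊔ y) + v (x ⊓ y) ≤ v x + v y) →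
      ∀ y z t : X, y ≤ z → v (t ⊔ z) - v z ≤ v (t ⊔ y) - v y) := by
  constructor
  · intro X _ v h x y
    have := h (x ⊓ y) y x inf_le_right
    rw [sup_inf_self] at this
    linarith
  · intro X _ v hm hsub y z t hyz
    have h1 := hsub (t ⊔ y) z
    have h2 : (t ⊔ y) ⊔ z = t ⊔ z := by
      rw [sup_assoc, sup_eq_right.mpr hyz]
    have h3 : y ≤ (t ⊔ y) ⊓ z := le_inf le_sup_right hyz
    have h4 := hm h3
    rw [h2] at h1
    linarith
end

section
/- Let v be a nonnegative XOS valuation on the finite product X = X_1 × ⋯ × X_m, with representation components (v^ℓ_j)_{ℓ∈L, j∈{1,…,m}}, and let B ≥ 0. Then the capped valuation v̂(x) = min{v(x), B} is also XOS; moreover v̂ admits an XOS representation in which every additive component ṽ_j : X_j → ℝ is nonnegative and satisfies ṽ_j(x̃_j) ≤ v^ℓ_j(x̃_j) for all x̃_j ∈ X_j, for some ℓ ∈ L associated with that component. -/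
/-- capping an XOS valuation at a budget `B ≥ 0` yields an XOS valuation,
moreover one admitting a representation each of whose (nonnegative) additive components is
pointwise dominated by some additive component of the original representation. -/
theorem stmt_7 {m : ℕ} (hm : 0 < m) (X : Fin m → Type*)
    [∀ j, Fintype (X j)] [∀ j, Nonempty (X j)]
    (v : (∀ j, X j) → ℝ) (K : ℕ) (w : Fin (K + 1) → ∀ j, X j → ℝ)
    (hw : ∀ ℓ j xj, 0 ≤ w ℓ j xj)
    (hrep : ∀ x : ∀ j, X j,
      v x = Finset.univ.sup' Finset.univ_nonempty fun ℓ => ∑ j, w ℓ j (x j))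
    (B : ℝ) (hB : 0 ≤ B) :
    ∃ (K' : ℕ) (w' : Fin (K' + 1) → ∀ j, X j → ℝ),
      (∀ ℓ' j xj, 0 ≤ w' ℓ' j xj) ∧
      (∀ x : ∀ j, X j,
        min (v x) B =
          Finset.univ.sup' Finset.univ_nonempty fun ℓ' => ∑ j, w' ℓ' j (x j)) ∧
      (∀ ℓ', ∃ ℓ, ∀ j xj, w' ℓ' j xj ≤ w ℓ j xj) := by
  classical
  set T := Fin (K + 1) × (∀ j, X j) with hT
  have hcard : 0 < Fintype.card T := Fintype.card_pos
  obtain ⟨K', hK'⟩ : ∃ K', Fintype.card T = K' + 1 :=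
    ⟨Fintype.card T - 1, (Nat.succ_pred_eq_of_pos hcard).symm⟩
  let e : T ≃ Fin (K' + 1) := Fintype.equivFinOfCardEq hK'
  set S : T → ℝ := fun p => ∑ j, w p.1 j (p.2 j) with hSdef
  have hS0 : ∀ p, 0 ≤ S p := fun p => Finset.sum_nonneg fun j _ => hw _ _ _
  set c : T → ℝ := fun p => if S p = 0 then 0 else min (S p) B / S p with hcdef
  have hc0 : ∀ p, 0 ≤ c p := by
    intro p
    simp only [hcdef]
    split_ifs with h
    · exact le_refl 0
    · exact div_nonneg (le_min (hS0 p) hB) (hS0 p)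
  have hc1 : ∀ p, c p ≤ 1 := by
    intro p
    simp only [hcdef]
    split_ifs with h
    · exact zero_le_one
    · exact div_le_one_of_le₀ (min_le_left _ _) (hS0 p)
  have hcS : ∀ p, c p * S p = min (S p) B := by
    intro p
    simp only [hcdef]
    split_ifs with h
    · rw [h, mul_zero, min_eq_left hB]
    · field_simp
  set w' : Fin (K' + 1) → ∀ j, X j → ℝ := fun ℓ' j xj =>
    if xj = (e.symm ℓ').2 j then c (e.symm ℓ') * w (e.symm ℓ').1 j xj else 0 with hw'def
  refine ⟨K', w', ?_, ?_, ?_⟩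
  · intro ℓ' j xj
    simp only [hw'def]
    split_ifs with h
    · exact mul_nonneg (hc0 _) (hw _ _ _)
    · exact le_refl 0
  · intro x
    apply le_antisymm
    · -- pick ℓ achieving sup
      obtain ⟨ℓ₀, _, hℓ₀⟩ := Finset.exists_mem_eq_sup' (Finset.univ_nonempty)
        (fun ℓ : Fin (K + 1) => ∑ j, w ℓ j (x j))
      have hvx : v x = ∑ j, w ℓ₀ j (x j) := by rw [hrep x, hℓ₀]
      have := Finset.le_sup' (f := fun ℓ' => ∑ j, w' ℓ' j (x j))
        (Finset.mem_univ (e (ℓ₀, x)))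
      refine le_trans (le_of_eq ?_) this
      have hsum : ∑ j, w' (e (ℓ₀, x)) j (x j) = c (ℓ₀, x) * S (ℓ₀, x) := by
        simp only [hw'def, Equiv.symm_apply_apply]
        rw [Finset.mul_sum]
        exact Finset.sum_congr rfl fun j _ => by simp
      rw [hsum, hcS]
      simp only [hSdef]
      rw [hvx]
    · apply Finset.sup'_le
      intro ℓ' _
      set p := e.symm ℓ' with hp
      have hub1 : ∑ j, w' ℓ' j (x j) ≤ c p * S p := by
        rw [Finset.mul_sum]
        apply Finset.sum_le_sum
        intro j _
        simp only [hw'def, ← hp]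
        split_ifs with h
        · rw [h]
        · exact mul_nonneg (hc0 _) (hw _ _ _)
      have hub2 : ∑ j, w' ℓ' j (x j) ≤ ∑ j, w p.1 j (x j) := by
        apply Finset.sum_le_sum
        intro j _
        simp only [hw'def, ← hp]
        split_ifs with h
        · calc c p * w p.1 j (x j) ≤ 1 * w p.1 j (x j) :=
                mul_le_mul_of_nonneg_right (hc1 _) (hw _ _ _)
            _ = w p.1 j (x j) := one_mul _
        · exact hw _ _ _
      refine le_min ?_ ?_
      · refine le_trans hub2 ?_
        rw [hrep x]
        exact Finset.le_sup' (f := fun ℓ => ∑ j, w ℓ j (x j)) (Finset.mem_univ p.1)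
      · refine le_trans hub1 ?_
        rw [hcS]
        exact min_le_right _ _
  · intro ℓ'
    refine ⟨(e.symm ℓ').1, fun j xj => ?_⟩
    simp only [hw'def]
    split_ifs with h
    · calc c (e.symm ℓ') * w (e.symm ℓ').1 j xj ≤ 1 * w (e.symm ℓ').1 j xj :=
            mul_le_mul_of_nonneg_right (hc1 _) (hw _ _ _)
        _ = _ := one_mul _
    · exact hw _ _ _
end

section
/- Let a finite mechanism be (λ,μ)-smooth for the valuation profile v (λ, μ ≥ 0), let π be a correlated equilibrium for v, and suppose that for every player i, E_π[v_i(X_i(a))] ≥ E_π[P_i(a)] (players have the option to withdraw). Then the expected social welfare satisfies E_π[Σ_i v_i(X_i(a))] ≥ (λ / max(1, μ)) · OPT(v). -/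
/-- `p` is a probability mass function on the finite type `α`. -/
def IsPMFOn {α : Type*} [Fintype α] (p : α → ℝ) : Prop :=
  (∀ x, 0 ≤ p x) ∧ ∑ x, p x = 1

/-- if a finite mechanism is `(λ,μ)`-smooth for the valuation profile `v`
(witnessed by randomized deviations `dev i : A i → PMF`), `π` is a correlated equilibrium
for `v`, and every player's expected value weakly exceeds her expected payment (the option
to withdraw), then expected social welfare is at least `(λ / max 1 μ) · OPT(v)`. -/
theorem stmt_8
    {n : ℕ} {A : Fin n → Type*} [∀ i, Fintype (A i)] [∀ i, Nonempty (A i)]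
    [∀ i, DecidableEq (A i)]
    {Out : Fin n → Type*} [∀ i, Fintype (Out i)] [∀ i, Nonempty (Out i)]
    (feas : Finset (∀ i, Out i)) (hfeas : feas.Nonempty)
    (alloc : (∀ i, A i) → ∀ i, Out i) (halloc : ∀ a, alloc a ∈ feas)
    (pay : (∀ i, A i) → Fin n → ℝ) (hpay : ∀ a i, 0 ≤ pay a i)
    (v : ∀ i, Out i → ℝ) (hv : ∀ i x, 0 ≤ v i x)
    (lam mu : ℝ) (hlam : 0 ≤ lam) (hmu : 0 ≤ mu)
    -- smoothness of the mechanism for `v`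
    (dev : ∀ i, A i → A i → ℝ) (hdev : ∀ i ai, IsPMFOn (dev i ai))
    (hsmooth : ∀ a : ∀ i, A i,
      lam * feas.sup' hfeas (fun x => ∑ i, v i (x i)) - mu * ∑ i, pay a i ≤
        ∑ i, ∑ ai', dev i (a i) ai' *
          (v i (alloc (Function.update a i ai') i) - pay (Function.update a i ai') i))
    -- `π` is a correlated equilibrium for `v`
    (π : (∀ i, A i) → ℝ) (hπ : IsPMFOn π)
    (hce : ∀ (i : Fin n) (ai : A i),
      0 < (∑ a : ∀ i, A i, if a i = ai then π a else 0) →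
      ∀ ai' : A i,
        (∑ a : ∀ i, A i, if a i = ai
          then π a * (v i (alloc (Function.update a i ai') i) -
            pay (Function.update a i ai') i)
          else 0) ≤
        (∑ a : ∀ i, A i, if a i = ai
          then π a * (v i (alloc a i) - pay a i) else 0))
    -- players have the option to withdraw
    (hwithdraw : ∀ i, ∑ a, π a * pay a i ≤ ∑ a, π a * v i (alloc a i)) :
    (lam / max 1 mu) * feas.sup' hfeas (fun x => ∑ i, v i (x i)) ≤
      ∑ a, π a * ∑ i, v i (alloc a i) := by
  classical
  have hπ0 := hπ.1
  have hπ1 := hπ.2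
  set OPT := feas.sup' hfeas (fun x => ∑ i, v i (x i)) with hOPT
  set W := ∑ a, π a * ∑ i, v i (alloc a i) with hW
  set P := ∑ a, π a * ∑ i, pay a i with hPdef
  have hOPT0 : 0 ≤ OPT := by
    obtain ⟨x, hx⟩ := hfeas
    exact le_trans (Finset.sum_nonneg fun i _ => hv i (x i))
      (Finset.le_sup' (fun x => ∑ i, v i (x i)) hx)
  have hP0 : 0 ≤ P :=
    Finset.sum_nonneg fun a _ =>
      mul_nonneg (hπ0 a) (Finset.sum_nonneg fun i _ => hpay a i)
  -- key consequence of the correlated equilibrium condition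
  have key : ∀ i : Fin n,
      (∑ a, π a * ∑ ai', dev i (a i) ai' *
        (v i (alloc (Function.update a i ai') i) - pay (Function.update a i ai') i))
        ≤ ∑ a, π a * (v i (alloc a i) - pay a i) := by
    intro i
    have partition : ∀ (f : (∀ j, A j) → ℝ),
        (∑ a, f a) = ∑ ai : A i, ∑ a, if a i = ai then f a else 0 := by
      intro f
      rw [Finset.sum_comm]
      refine Finset.sum_congr rfl fun a _ => ?_
      simp
    rw [partition (fun a => π a * ∑ ai', dev i (a i) ai' *
        (v i (alloc (Function.update a i ai') i) - pay (Function.update a i ai') i)),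
      partition (fun a => π a * (v i (alloc a i) - pay a i))]
    refine Finset.sum_le_sum fun ai _ => ?_
    by_cases hM : 0 < ∑ a : ∀ j, A j, if a i = ai then π a else 0
    · have hce' := hce i ai hM
      calc (∑ a, if a i = ai then π a * ∑ ai', dev i (a i) ai' *
              (v i (alloc (Function.update a i ai') i) -
                pay (Function.update a i ai') i) else 0)
          = ∑ a, ∑ ai', if a i = ai then dev i ai ai' *
              (π a * (v i (alloc (Function.update a i ai') i) -
                pay (Function.update a i ai') i)) else 0 := by
            refine Finset.sum_congr rfl fun a _ => ?_
            split
            · rename_i h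
              rw [h, Finset.mul_sum]
              exact Finset.sum_congr rfl fun ai' _ => by ring
            · simp
        _ = ∑ ai', ∑ a, if a i = ai then dev i ai ai' *
              (π a * (v i (alloc (Function.update a i ai') i) -
                pay (Function.update a i ai') i)) else 0 := Finset.sum_comm
        _ = ∑ ai', dev i ai ai' * ∑ a, if a i = ai then
              π a * (v i (alloc (Function.update a i ai') i) -
                pay (Function.update a i ai') i) else 0 := by
            refine Finset.sum_congr rfl fun ai' _ => ?_
            rw [Finset.mul_sum]
            refine Finset.sum_congr rfl fun a _ => ?_
            split <;> simp
        _ ≤ ∑ ai', dev i ai ai' * ∑ a, if a i = ai then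
              π a * (v i (alloc a i) - pay a i) else 0 :=
            Finset.sum_le_sum fun ai' _ =>
              mul_le_mul_of_nonneg_left (hce' ai') ((hdev i ai).1 ai')
        _ = ∑ a, if a i = ai then π a * (v i (alloc a i) - pay a i) else 0 := by
            rw [← Finset.sum_mul, (hdev i ai).2, one_mul]
    · have hle : (∑ a : ∀ j, A j, if a i = ai then π a else 0) ≤ 0 := not_lt.mp hM
      have hge : (0:ℝ) ≤ ∑ a : ∀ j, A j, if a i = ai then π a else 0 :=
        Finset.sum_nonneg fun a _ => by split <;> simp [hπ0 a]
      have hz : ∀ a : ∀ j, A j, a i = ai → π a = 0 := by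
        intro a ha
        have h0 : (∑ a : ∀ j, A j, if a i = ai then π a else 0) = 0 := le_antisymm hle hge
        have := (Finset.sum_eq_zero_iff_of_nonneg
          (fun a _ => by split <;> simp [hπ0 a])).mp h0 a (Finset.mem_univ a)
        simpa [ha] using this
      have e1 : (∑ a, if a i = ai then π a * ∑ ai', dev i (a i) ai' *
          (v i (alloc (Function.update a i ai') i) -
            pay (Function.update a i ai') i) else 0) = 0 :=
        Finset.sum_eq_zero fun a _ => by
          split
          · rename_i h; simp [hz a h]
          · rfl
      have e2 : (∑ a, if a i = ai then π a * (v i (alloc a i) - pay a i) else 0) = 0 :=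
        Finset.sum_eq_zero fun a _ => by
          split
          · rename_i h; simp [hz a h]
          · rfl
      rw [e1, e2]
  -- summing the smoothness inequality over π
  have smoothsum : lam * OPT - mu * P ≤ W - P := by
    have h1 : ∑ a, π a * (lam * OPT - mu * ∑ i, pay a i) ≤
        ∑ a, π a * ∑ i, ∑ ai', dev i (a i) ai' *
          (v i (alloc (Function.update a i ai') i) -
            pay (Function.update a i ai') i) :=
      Finset.sum_le_sum fun a _ => mul_le_mul_of_nonneg_left (hsmooth a) (hπ0 a)
    have hL : ∑ a, π a * (lam * OPT - mu * ∑ i, pay a i) = lam * OPT - mu * P := by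
      calc ∑ a, π a * (lam * OPT - mu * ∑ i, pay a i)
          = ∑ a, (π a * (lam * OPT) - mu * (π a * ∑ i, pay a i)) :=
            Finset.sum_congr rfl fun a _ => by ring
        _ = (∑ a, π a * (lam * OPT)) - mu * ∑ a, π a * ∑ i, pay a i := by
            rw [Finset.sum_sub_distrib, Finset.mul_sum]
        _ = lam * OPT - mu * P := by
            rw [← Finset.sum_mul, hπ1, one_mul, hPdef]
    have hR : ∑ a, π a * ∑ i, ∑ ai', dev i (a i) ai' *
        (v i (alloc (Function.update a i ai') i) -
          pay (Function.update a i ai') i) ≤ W - P := by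
      calc ∑ a, π a * ∑ i, ∑ ai', dev i (a i) ai' *
            (v i (alloc (Function.update a i ai') i) -
              pay (Function.update a i ai') i)
          = ∑ i, ∑ a, π a * ∑ ai', dev i (a i) ai' *
            (v i (alloc (Function.update a i ai') i) -
              pay (Function.update a i ai') i) := by
            rw [Finset.sum_comm]
            exact Finset.sum_congr rfl fun a _ => (Finset.mul_sum _ _ _)
        _ ≤ ∑ i, ∑ a, π a * (v i (alloc a i) - pay a i) :=
            Finset.sum_le_sum fun i _ => key i
        _ = W - P := by
            rw [Finset.sum_comm, hW, hPdef, ← Finset.sum_sub_distrib]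
            refine Finset.sum_congr rfl fun a _ => ?_
            rw [← Finset.mul_sum, Finset.sum_sub_distrib]
            ring
    calc lam * OPT - mu * P = ∑ a, π a * (lam * OPT - mu * ∑ i, pay a i) := hL.symm
      _ ≤ _ := h1
      _ ≤ W - P := hR
  -- option to withdraw: P ≤ W
  have hPW : P ≤ W := by
    have : ∑ i, ∑ a, π a * pay a i ≤ ∑ i, ∑ a, π a * v i (alloc a i) :=
      Finset.sum_le_sum fun i _ => hwithdraw i
    calc P = ∑ i, ∑ a, π a * pay a i := by
          rw [hPdef, Finset.sum_comm]
          exact Finset.sum_congr rfl fun a _ => (Finset.mul_sum _ _ _)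
      _ ≤ ∑ i, ∑ a, π a * v i (alloc a i) := this
      _ = W := by
          rw [hW, Finset.sum_comm]
          exact Finset.sum_congr rfl fun a _ => (Finset.mul_sum _ _ _).symm
  rcases le_total mu 1 with hmu1 | hmu1
  · rw [max_eq_left hmu1, div_one]
    nlinarith [mul_nonneg (hmu.trans (le_of_eq rfl) : (0:ℝ) ≤ mu) hP0]
  · rw [max_eq_right hmu1]
    have hmupos : (0:ℝ) < mu := lt_of_lt_of_le one_pos hmu1
    rw [div_mul_eq_mul_div, div_le_iff₀ hmupos]
    nlinarith [mul_le_mul_of_nonneg_left hPW (by linarith : (0:ℝ) ≤ mu - 1)]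
end

section
/- Suppose a finite mechanism is (λ,μ)-smooth for every valuation profile v ∈ 𝒱_1 × ⋯ × 𝒱_n (λ, μ ≥ 0), valuations are drawn independently with v_i ∼ q_i, s is a pure Bayes–Nash equilibrium, and for every player i, E_{v∼q}[v_i(X_i(s(v)))] ≥ E_{v∼q}[P_i(s(v))]. Then E_{v∼q}[Σ_i v_i(X_i(s(v)))] ≥ (λ / max(1, μ)) · E_{v∼q}[OPT(v)]. -/
set_option maxHeartbeats 1000000

private lemma expect_const {α : Type*} [Fintype α] (p : α → ℝ) (hp : (∑ x, p x) = 1) (c : ℝ) :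
    (∑ x, p x * c) = c := by rw [← Finset.sum_mul, hp, one_mul]

private lemma prod_update_eq {n : ℕ} {V : Fin n → Type*} [∀ i, Fintype (V i)]
    (q : ∀ i, V i → ℝ) (i : Fin n) (w : ∀ j, V j) (t : V i) :
    ∏ j, q j (Function.update w i t j) = q i t * ∏ j ∈ Finset.univ.erase i, q j (w j) := by
  rw [← Finset.mul_prod_erase Finset.univ (fun j => q j (Function.update w i t j))
      (Finset.mem_univ i)]
  congr 1
  · rw [Function.update_self]
  · exact Finset.prod_congr rfl fun j hj => by
      rw [Function.update_of_ne (Finset.ne_of_mem_erase hj)]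

private lemma update_act_eq {n : ℕ} {A : Fin n → Type*} {V : Fin n → Type*}
    (s : ∀ i, V i → A i) (i : Fin n) (w : ∀ j, V j) (t : V i) (ai : A i) :
    Function.update (fun j => s j (Function.update w i t j)) i ai
      = Function.update (fun j => s j (w j)) i ai := by
  funext j
  rcases eq_or_ne j i with rfl | hj
  · simp
  · simp [Function.update_of_ne hj]

private lemma sum_ite_push {α : Type*} [Fintype α] (P : Prop) [Decidable P] (f : α → ℝ) :
    (∑ x : α, if P then f x else 0) = if P then (∑ x, f x) else 0 := by
  split_ifs <;> simp

private lemma claim1 {n : ℕ} {A : Fin n → Type*} [∀ i, Fintype (A i)]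
    {Out : Fin n → Type*}
    (alloc : (∀ i, A i) → ∀ i, Out i)
    (pay : (∀ i, A i) → Fin n → ℝ)
    {V : Fin n → Type*} [∀ i, Fintype (V i)] [∀ i, DecidableEq (V i)]
    (vfun : ∀ i, V i → Out i → ℝ)
    (q : ∀ i, V i → ℝ)
    (hQ0 : ∀ w : ∀ j, V j, (0:ℝ) ≤ ∏ j, q j (w j))
    (hQ1 : (∑ w : ∀ j, V j, ∏ j, q j (w j)) = 1)
    (dev : (∀ i, V i) → ∀ i, A i → A i → ℝ)
    (hdev0 : ∀ w i ai ai', 0 ≤ dev w i ai ai')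
    (hdev1 : ∀ w (i : Fin n) (ai : A i), (∑ ai', dev w i ai ai') = 1)
    (s : ∀ i, V i → A i) (i : Fin n)
    (hbne' : ∀ (vi : V i) (ai : A i),
      (∑ w : ∀ j, V j, if w i = vi then (∏ j, q j (w j)) *
          (vfun i vi (alloc (Function.update (fun j => s j (w j)) i ai) i) -
            pay (Function.update (fun j => s j (w j)) i ai) i) else 0) ≤
      (∑ w : ∀ j, V j, if w i = vi then (∏ j, q j (w j)) *
          (vfun i vi (alloc (fun j => s j (w j)) i) - pay (fun j => s j (w j)) i) else 0)) :
    (∑ w : ∀ j, V j, ∑ w' : ∀ j, V j, (∏ j, q j (w j)) * (∏ j, q j (w' j)) *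
        ∑ ai' : A i, dev w' i (s i (w i)) ai' *
          (vfun i (w' i) (alloc (Function.update (fun j => s j (w j)) i ai') i) -
            pay (Function.update (fun j => s j (w j)) i ai') i)) ≤
      ∑ w : ∀ j, V j, (∏ j, q j (w j)) *
        (vfun i (w i) (alloc (fun j => s j (w j)) i) - pay (fun j => s j (w j)) i) := by
  classical
  set F : (∀ j, V j) → (∀ j, V j) → ℝ := fun w w' =>
    (∏ j, q j (w j)) * (∏ j, q j (w' j)) * ∑ ai' : A i, dev w' i (s i (w i)) ai' *
      (vfun i (w' i) (alloc (Function.update (fun j => s j (w j)) i ai') i) -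
        pay (Function.update (fun j => s j (w j)) i ai') i) with hF
  set G : (∀ j, V j) → (∀ j, V j) → ℝ := fun w w' =>
    (∏ j, q j (w j)) * (∏ j, q j (w' j)) *
      ∑ ai' : A i, dev (Function.update w' i (w i)) i (s i (w' i)) ai' *
        (vfun i (w i) (alloc (Function.update (fun j => s j (w j)) i ai') i) -
          pay (Function.update (fun j => s j (w j)) i ai') i) with hG
  have hswap : (∑ w, ∑ w', F w w') = ∑ w, ∑ w', G w w' := by
    have hinv : Function.Involutive (fun p : (∀ j, V j) × (∀ j, V j) =>
        (Function.update p.1 i (p.2 i), Function.update p.2 i (p.1 i))) := by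
      intro p
      simp
    have h := Fintype.sum_bijective _ hinv.bijective
      (fun p : (∀ j, V j) × (∀ j, V j) => G p.1 p.2)
      (fun p : (∀ j, V j) × (∀ j, V j) => F p.1 p.2)
      (by
        intro p
        simp only [hF, hG]
        simp only [Function.update_self, update_act_eq]
        rw [prod_update_eq, prod_update_eq,
          ← Finset.mul_prod_erase Finset.univ (fun j => q j (p.1 j)) (Finset.mem_univ i),
          ← Finset.mul_prod_erase Finset.univ (fun j => q j (p.2 j)) (Finset.mem_univ i)]
        ring)
    calc (∑ w, ∑ w', F w w') = ∑ p : (∀ j, V j) × (∀ j, V j), F p.1 p.2 :=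
          (Fintype.sum_prod_type (fun p : ((j : Fin n) → V j) × ((j : Fin n) → V j) => F p.1 p.2)).symm
      _ = ∑ p : (∀ j, V j) × (∀ j, V j), G p.1 p.2 := h.symm
      _ = ∑ w, ∑ w', G w w' := Fintype.sum_prod_type (fun p : ((j : Fin n) → V j) × ((j : Fin n) → V j) => G p.1 p.2)
  rw [hswap]
  refine le_trans (le_of_eq (Finset.sum_comm)) ?_
  have key : ∀ w' : ∀ j, V j, (∑ w, G w w') ≤ (∏ j, q j (w' j)) *
      ∑ w : ∀ j, V j, (∏ j, q j (w j)) *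
        (vfun i (w i) (alloc (fun j => s j (w j)) i) - pay (fun j => s j (w j)) i) := by
    intro w'
    set c : V i → A i → ℝ :=
      fun vi ai' => dev (Function.update w' i vi) i (s i (w' i)) ai' with hc
    set t : V i → A i → (∀ j, V j) → ℝ := fun vi ai' w =>
      if w i = vi then (∏ j, q j (w j)) *
        (vfun i vi (alloc (Function.update (fun j => s j (w j)) i ai') i) -
          pay (Function.update (fun j => s j (w j)) i ai') i) else 0 with ht
    set B : V i → ℝ := fun vi => ∑ w : ∀ j, V j, if w i = vi then (∏ j, q j (w j)) *
        (vfun i vi (alloc (fun j => s j (w j)) i) - pay (fun j => s j (w j)) i) else 0 with hB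
    have hGsum : (∑ w, G w w') =
        ∑ vi, ∑ ai', (c vi ai' * (∏ j, q j (w' j))) * ∑ w, t vi ai' w := by
      symm
      calc (∑ vi, ∑ ai', (c vi ai' * (∏ j, q j (w' j))) * ∑ w, t vi ai' w)
          = ∑ vi, ∑ ai', ∑ w, (c vi ai' * (∏ j, q j (w' j))) * t vi ai' w := by
            exact Finset.sum_congr rfl fun vi _ => Finset.sum_congr rfl fun ai' _ => by
              rw [Finset.mul_sum]
        _ = ∑ vi, ∑ w, ∑ ai', (c vi ai' * (∏ j, q j (w' j))) * t vi ai' w :=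
            Finset.sum_congr rfl fun vi _ => Finset.sum_comm
        _ = ∑ w, ∑ vi, ∑ ai', (c vi ai' * (∏ j, q j (w' j))) * t vi ai' w :=
            Finset.sum_comm
        _ = ∑ w, G w w' := by
            refine Finset.sum_congr rfl fun w _ => ?_
            simp only [ht, mul_ite, mul_zero]
            rw [Finset.sum_congr rfl fun vi (_ : vi ∈ Finset.univ) =>
              sum_ite_push (w i = vi) _]
            rw [Finset.sum_ite_eq]
            simp only [Finset.mem_univ, if_true]
            simp only [hc, hG]
            rw [Finset.mul_sum]
            exact Finset.sum_congr rfl fun ai' _ => by ring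
    rw [hGsum]
    have step1 : (∑ vi, ∑ ai', (c vi ai' * (∏ j, q j (w' j))) * ∑ w, t vi ai' w) ≤
        ∑ vi, ∑ ai', (c vi ai' * (∏ j, q j (w' j))) * B vi := by
      refine Finset.sum_le_sum fun vi _ => Finset.sum_le_sum fun ai' _ => ?_
      refine mul_le_mul_of_nonneg_left ?_ (mul_nonneg (by rw [hc]; exact hdev0 _ _ _ _) (hQ0 w'))
      have := hbne' vi ai'
      simp only [ht, hB]
      exact this
    refine step1.trans (le_of_eq ?_)
    calc (∑ vi, ∑ ai', (c vi ai' * (∏ j, q j (w' j))) * B vi)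
        = ∑ vi, (∏ j, q j (w' j)) * B vi := by
          refine Finset.sum_congr rfl fun vi _ => ?_
          have : ∀ ai', (c vi ai' * (∏ j, q j (w' j))) * B vi
              = c vi ai' * ((∏ j, q j (w' j)) * B vi) := fun ai' => by ring
          rw [Finset.sum_congr rfl fun ai' _ => this ai', ← Finset.sum_mul]
          simp only [hc]
          rw [hdev1, one_mul]
      _ = (∏ j, q j (w' j)) * ∑ vi, B vi := by rw [Finset.mul_sum]
      _ = _ := by
          congr 1
          simp only [hB]
          rw [Finset.sum_comm]
          refine Finset.sum_congr rfl fun w _ => ?_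
          rw [Finset.sum_ite_eq]
          simp
  calc (∑ w', ∑ w, G w w') ≤ ∑ w' : ∀ j, V j, (∏ j, q j (w' j)) *
      ∑ w : ∀ j, V j, (∏ j, q j (w j)) *
        (vfun i (w i) (alloc (fun j => s j (w j)) i) - pay (fun j => s j (w j)) i) :=
      Finset.sum_le_sum fun w' _ => key w'
    _ = _ := by rw [← Finset.sum_mul, hQ1, one_mul]

/-- if a finite mechanism is `(λ,μ)`-smooth for every valuation profile drawn
from `V_1 × ⋯ × V_n`, valuations are drawn independently (`w i ∼ q i`), `s` is a pure
Bayes–Nash equilibrium, and each player's expected value weakly exceeds her expected payment,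
then expected welfare is at least `(λ / max 1 μ)` times the expected optimal welfare. -/
theorem stmt_9
    {n : ℕ} {A : Fin n → Type*} [∀ i, Fintype (A i)] [∀ i, Nonempty (A i)]
    {Out : Fin n → Type*} [∀ i, Fintype (Out i)] [∀ i, Nonempty (Out i)]
    (feas : Finset (∀ i, Out i)) (hfeas : feas.Nonempty)
    (alloc : (∀ i, A i) → ∀ i, Out i) (halloc : ∀ a, alloc a ∈ feas)
    (pay : (∀ i, A i) → Fin n → ℝ) (hpay : ∀ a i, 0 ≤ pay a i)
    -- valuation spaces and independent priors
    {V : Fin n → Type*} [∀ i, Fintype (V i)] [∀ i, Nonempty (V i)] [∀ i, DecidableEq (V i)]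
    (vfun : ∀ i, V i → Out i → ℝ) (hvfun : ∀ i vi x, 0 ≤ vfun i vi x)
    (q : ∀ i, V i → ℝ) (hq : ∀ i, IsPMFOn (q i))
    (lam mu : ℝ) (hlam : 0 ≤ lam) (hmu : 0 ≤ mu)
    -- the mechanism is `(λ,μ)`-smooth for every valuation profile
    (hsmooth : ∀ w : ∀ i, V i, ∃ dev : ∀ i, A i → A i → ℝ,
      (∀ i ai, IsPMFOn (dev i ai)) ∧
      ∀ a : ∀ i, A i,
        lam * feas.sup' hfeas (fun x => ∑ i, vfun i (w i) (x i)) - mu * ∑ i, pay a i ≤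
          ∑ i, ∑ ai', dev i (a i) ai' *
            (vfun i (w i) (alloc (Function.update a i ai') i) -
              pay (Function.update a i ai') i))
    -- `s` is a pure Bayes–Nash equilibrium
    (s : ∀ i, V i → A i)
    (hbne : ∀ (i : Fin n) (vi : V i), 0 < q i vi → ∀ ai : A i,
      (∑ w : ∀ j, V j, if w i = vi
        then (∏ j ∈ Finset.univ.erase i, q j (w j)) *
          (vfun i vi (alloc (Function.update (fun j => s j (w j)) i ai) i) -
            pay (Function.update (fun j => s j (w j)) i ai) i)
        else 0) ≤
      (∑ w : ∀ j, V j, if w i = vi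
        then (∏ j ∈ Finset.univ.erase i, q j (w j)) *
          (vfun i vi (alloc (fun j => s j (w j)) i) - pay (fun j => s j (w j)) i)
        else 0))
    -- players have the option to withdraw
    (hwithdraw : ∀ i,
      ∑ w : ∀ j, V j, (∏ j, q j (w j)) * pay (fun j => s j (w j)) i ≤
        ∑ w : ∀ j, V j, (∏ j, q j (w j)) * vfun i (w i) (alloc (fun j => s j (w j)) i)) :
    (lam / max 1 mu) *
        (∑ w : ∀ j, V j, (∏ j, q j (w j)) *
          feas.sup' hfeas (fun x => ∑ i, vfun i (w i) (x i))) ≤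
      ∑ w : ∀ j, V j, (∏ j, q j (w j)) *
        ∑ i, vfun i (w i) (alloc (fun j => s j (w j)) i) := by
  classical
  choose dev hdevpmf hdevineq using hsmooth
  have hdev0 : ∀ w (i : Fin n) (ai ai' : A i), 0 ≤ dev w i ai ai' :=
    fun w i ai ai' => (hdevpmf w i ai).1 ai'
  have hdev1 : ∀ w (i : Fin n) (ai : A i), (∑ ai', dev w i ai ai') = 1 :=
    fun w i ai => (hdevpmf w i ai).2
  have hQ0 : ∀ w : ∀ j, V j, (0:ℝ) ≤ ∏ j, q j (w j) :=
    fun w => Finset.prod_nonneg fun j _ => (hq j).1 _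
  have hQ1 : (∑ w : ∀ j, V j, ∏ j, q j (w j)) = 1 := by
    have h := Finset.prod_univ_sum (fun _ : Fin n => (Finset.univ : Finset (V _)))
      (fun j vj => q j vj)
    rw [Fintype.piFinset_univ] at h
    rw [← h]
    exact Finset.prod_eq_one fun j _ => (hq j).2
  -- weighted BNE inequality
  have hbne' : ∀ (i : Fin n) (vi : V i) (ai : A i),
      (∑ w : ∀ j, V j, if w i = vi then (∏ j, q j (w j)) *
          (vfun i vi (alloc (Function.update (fun j => s j (w j)) i ai) i) -
            pay (Function.update (fun j => s j (w j)) i ai) i) else 0) ≤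
      (∑ w : ∀ j, V j, if w i = vi then (∏ j, q j (w j)) *
          (vfun i vi (alloc (fun j => s j (w j)) i) - pay (fun j => s j (w j)) i) else 0) := by
    intro i vi ai
    rcases eq_or_lt_of_le ((hq i).1 vi) with h0 | hpos
    · have hz : ∀ g : (∀ j, V j) → ℝ,
          (∑ w : ∀ j, V j, if w i = vi then (∏ j, q j (w j)) * g w else 0) = 0 := by
        intro g
        refine Finset.sum_eq_zero fun w _ => ?_
        split_ifs with h
        · have hQz : (∏ j, q j (w j)) = 0 :=
            Finset.prod_eq_zero (Finset.mem_univ i) (by rw [h, ← h0])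
          rw [hQz, zero_mul]
        · rfl
      have e1 := hz (fun w => vfun i vi (alloc (Function.update (fun j => s j (w j)) i ai) i) -
        pay (Function.update (fun j => s j (w j)) i ai) i)
      have e2 := hz (fun w => vfun i vi (alloc (fun j => s j (w j)) i) -
        pay (fun j => s j (w j)) i)
      exact le_of_eq (e1.trans e2.symm)
    · have hconv : ∀ g : (∀ j, V j) → ℝ,
          q i vi * (∑ w : ∀ j, V j, if w i = vi
              then (∏ j ∈ Finset.univ.erase i, q j (w j)) * g w else 0)
            = ∑ w : ∀ j, V j, if w i = vi then (∏ j, q j (w j)) * g w else 0 := by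
        intro g
        rw [Finset.mul_sum]
        refine Finset.sum_congr rfl fun w _ => ?_
        split_ifs with h
        · rw [← mul_assoc]
          congr 1
          rw [← h]
          exact Finset.mul_prod_erase Finset.univ (fun j => q j (w j)) (Finset.mem_univ i)
        · rw [mul_zero]
      have h2 := mul_le_mul_of_nonneg_left (hbne i vi hpos ai) hpos.le
      have e1 := hconv (fun w => vfun i vi (alloc (Function.update (fun j => s j (w j)) i ai) i) -
        pay (Function.update (fun j => s j (w j)) i ai) i)
      have e2 := hconv (fun w => vfun i vi (alloc (fun j => s j (w j)) i) -
        pay (fun j => s j (w j)) i)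
      exact le_trans (le_of_eq e1.symm) (le_trans h2 (le_of_eq e2))
  -- the smoothness bound, in expectation over two independent profiles
  have hAlow : (∑ w : ∀ j, V j, ∑ w' : ∀ j, V j, (∏ j, q j (w j)) * (∏ j, q j (w' j)) *
        (lam * feas.sup' hfeas (fun x => ∑ i, vfun i (w' i) (x i)) -
          mu * ∑ i, pay (fun j => s j (w j)) i)) ≤
      ∑ w : ∀ j, V j, ∑ w' : ∀ j, V j, (∏ j, q j (w j)) * (∏ j, q j (w' j)) *
        ∑ i, ∑ ai', dev w' i (s i (w i)) ai' *
          (vfun i (w' i) (alloc (Function.update (fun j => s j (w j)) i ai') i) -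
            pay (Function.update (fun j => s j (w j)) i ai') i) := by
    refine Finset.sum_le_sum fun w _ => Finset.sum_le_sum fun w' _ => ?_
    refine mul_le_mul_of_nonneg_left ?_ (mul_nonneg (hQ0 w) (hQ0 w'))
    exact hdevineq w' (fun j => s j (w j))
  -- value of the left-hand side above
  have hAeq : (∑ w : ∀ j, V j, ∑ w' : ∀ j, V j, (∏ j, q j (w j)) * (∏ j, q j (w' j)) *
        (lam * feas.sup' hfeas (fun x => ∑ i, vfun i (w' i) (x i)) -
          mu * ∑ i, pay (fun j => s j (w j)) i))
      = lam * (∑ w : ∀ j, V j, (∏ j, q j (w j)) *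
            feas.sup' hfeas (fun x => ∑ i, vfun i (w i) (x i)))
        - mu * (∑ w : ∀ j, V j, (∏ j, q j (w j)) * ∑ i, pay (fun j => s j (w j)) i) := by
    have hC : (∑ w' : ∀ j, V j, (∏ j, q j (w' j)) *
          (lam * feas.sup' hfeas (fun x => ∑ i, vfun i (w' i) (x i))))
        = lam * (∑ w : ∀ j, V j, (∏ j, q j (w j)) *
            feas.sup' hfeas (fun x => ∑ i, vfun i (w i) (x i))) := by
      rw [Finset.mul_sum]
      exact Finset.sum_congr rfl fun w' _ => by ring
    calc (∑ w : ∀ j, V j, ∑ w' : ∀ j, V j, (∏ j, q j (w j)) * (∏ j, q j (w' j)) *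
          (lam * feas.sup' hfeas (fun x => ∑ i, vfun i (w' i) (x i)) -
            mu * ∑ i, pay (fun j => s j (w j)) i))
        = ∑ w : ∀ j, V j, ((∏ j, q j (w j)) *
            (∑ w' : ∀ j, V j, (∏ j, q j (w' j)) *
              (lam * feas.sup' hfeas (fun x => ∑ i, vfun i (w' i) (x i))))
          - (∏ j, q j (w j)) * (mu * ∑ i, pay (fun j => s j (w j)) i)) := by
          refine Finset.sum_congr rfl fun w _ => ?_
          calc (∑ w' : ∀ j, V j, (∏ j, q j (w j)) * (∏ j, q j (w' j)) *
                (lam * feas.sup' hfeas (fun x => ∑ i, vfun i (w' i) (x i)) -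
                  mu * ∑ i, pay (fun j => s j (w j)) i))
              = ∑ w' : ∀ j, V j, ((∏ j, q j (w j)) * ((∏ j, q j (w' j)) *
                  (lam * feas.sup' hfeas (fun x => ∑ i, vfun i (w' i) (x i))))
                - (∏ j, q j (w' j)) *
                    ((∏ j, q j (w j)) * (mu * ∑ i, pay (fun j => s j (w j)) i))) :=
                Finset.sum_congr rfl fun w' _ => by ring
            _ = (∑ w' : ∀ j, V j, (∏ j, q j (w j)) * ((∏ j, q j (w' j)) *
                  (lam * feas.sup' hfeas (fun x => ∑ i, vfun i (w' i) (x i)))))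
                - ∑ w' : ∀ j, V j, (∏ j, q j (w' j)) *
                    ((∏ j, q j (w j)) * (mu * ∑ i, pay (fun j => s j (w j)) i)) :=
                Finset.sum_sub_distrib _ _
            _ = _ := by rw [← Finset.mul_sum, expect_const _ hQ1]
      _ = _ := by
          rw [Finset.sum_sub_distrib]
          congr 1
          · rw [show (∑ w : ∀ j, V j, (∏ j, q j (w j)) *
                (∑ w' : ∀ j, V j, (∏ j, q j (w' j)) *
                  (lam * feas.sup' hfeas (fun x => ∑ i, vfun i (w' i) (x i)))))
                = ∑ w : ∀ j, V j, (∏ j, q j (w j)) *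
                  (lam * (∑ w'' : ∀ j, V j, (∏ j, q j (w'' j)) *
                    feas.sup' hfeas (fun x => ∑ i, vfun i (w'' i) (x i)))) from
              Finset.sum_congr rfl fun w _ => by rw [hC]]
            rw [expect_const _ hQ1]
          · rw [Finset.mul_sum]
            exact Finset.sum_congr rfl fun w _ => by ring
  -- the equilibrium bound on the right-hand side
  have hAup : (∑ w : ∀ j, V j, ∑ w' : ∀ j, V j, (∏ j, q j (w j)) * (∏ j, q j (w' j)) *
        ∑ i, ∑ ai', dev w' i (s i (w i)) ai' *
          (vfun i (w' i) (alloc (Function.update (fun j => s j (w j)) i ai') i) -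
            pay (Function.update (fun j => s j (w j)) i ai') i)) ≤
      (∑ w : ∀ j, V j, (∏ j, q j (w j)) *
          ∑ i, vfun i (w i) (alloc (fun j => s j (w j)) i))
        - (∑ w : ∀ j, V j, (∏ j, q j (w j)) * ∑ i, pay (fun j => s j (w j)) i) := by
    have h1 : (∑ w : ∀ j, V j, ∑ w' : ∀ j, V j, (∏ j, q j (w j)) * (∏ j, q j (w' j)) *
          ∑ i, ∑ ai', dev w' i (s i (w i)) ai' *
            (vfun i (w' i) (alloc (Function.update (fun j => s j (w j)) i ai') i) -
              pay (Function.update (fun j => s j (w j)) i ai') i))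
        = ∑ i, ∑ w : ∀ j, V j, ∑ w' : ∀ j, V j, (∏ j, q j (w j)) * (∏ j, q j (w' j)) *
            ∑ ai', dev w' i (s i (w i)) ai' *
              (vfun i (w' i) (alloc (Function.update (fun j => s j (w j)) i ai') i) -
                pay (Function.update (fun j => s j (w j)) i ai') i) := by
      symm
      calc (∑ i, ∑ w : ∀ j, V j, ∑ w' : ∀ j, V j, (∏ j, q j (w j)) * (∏ j, q j (w' j)) *
              ∑ ai', dev w' i (s i (w i)) ai' *
                (vfun i (w' i) (alloc (Function.update (fun j => s j (w j)) i ai') i) -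
                  pay (Function.update (fun j => s j (w j)) i ai') i))
          = ∑ w : ∀ j, V j, ∑ i, ∑ w' : ∀ j, V j, (∏ j, q j (w j)) * (∏ j, q j (w' j)) *
              ∑ ai', dev w' i (s i (w i)) ai' *
                (vfun i (w' i) (alloc (Function.update (fun j => s j (w j)) i ai') i) -
                  pay (Function.update (fun j => s j (w j)) i ai') i) := Finset.sum_comm
        _ = ∑ w : ∀ j, V j, ∑ w' : ∀ j, V j, ∑ i, (∏ j, q j (w j)) * (∏ j, q j (w' j)) *
              ∑ ai', dev w' i (s i (w i)) ai' *
                (vfun i (w' i) (alloc (Function.update (fun j => s j (w j)) i ai') i) -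
                  pay (Function.update (fun j => s j (w j)) i ai') i) :=
            Finset.sum_congr rfl fun w _ => Finset.sum_comm
        _ = _ := Finset.sum_congr rfl fun w _ => Finset.sum_congr rfl fun w' _ =>
            (Finset.mul_sum ..).symm
    rw [h1]
    have h2 : (∑ i, ∑ w : ∀ j, V j, (∏ j, q j (w j)) *
          (vfun i (w i) (alloc (fun j => s j (w j)) i) - pay (fun j => s j (w j)) i))
        = (∑ w : ∀ j, V j, (∏ j, q j (w j)) *
            ∑ i, vfun i (w i) (alloc (fun j => s j (w j)) i))
          - (∑ w : ∀ j, V j, (∏ j, q j (w j)) * ∑ i, pay (fun j => s j (w j)) i) := by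
      rw [Finset.sum_comm, ← Finset.sum_sub_distrib]
      refine Finset.sum_congr rfl fun w _ => ?_
      rw [← Finset.mul_sum, ← mul_sub, ← Finset.sum_sub_distrib]
    rw [← h2]
    refine Finset.sum_le_sum fun i _ => ?_
    exact claim1 alloc pay vfun q hQ0 hQ1 dev hdev0 hdev1 s i (hbne' i)
  -- combined key inequality
  have key : lam * (∑ w : ∀ j, V j, (∏ j, q j (w j)) *
          feas.sup' hfeas (fun x => ∑ i, vfun i (w i) (x i)))
        - mu * (∑ w : ∀ j, V j, (∏ j, q j (w j)) * ∑ i, pay (fun j => s j (w j)) i)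
      ≤ (∑ w : ∀ j, V j, (∏ j, q j (w j)) *
            ∑ i, vfun i (w i) (alloc (fun j => s j (w j)) i))
        - (∑ w : ∀ j, V j, (∏ j, q j (w j)) * ∑ i, pay (fun j => s j (w j)) i) := by
    rw [← hAeq]
    exact hAlow.trans hAup
  -- expected payment is nonnegative and at most expected welfare
  have hEP0 : 0 ≤ ∑ w : ∀ j, V j, (∏ j, q j (w j)) * ∑ i, pay (fun j => s j (w j)) i :=
    Finset.sum_nonneg fun w _ => mul_nonneg (hQ0 w)
      (Finset.sum_nonneg fun i _ => hpay _ i)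
  have hPle : (∑ w : ∀ j, V j, (∏ j, q j (w j)) * ∑ i, pay (fun j => s j (w j)) i)
      ≤ ∑ w : ∀ j, V j, (∏ j, q j (w j)) *
          ∑ i, vfun i (w i) (alloc (fun j => s j (w j)) i) := by
    have h := Finset.sum_le_sum fun (i : Fin n) (_ : i ∈ Finset.univ) => hwithdraw i
    rw [Finset.sum_comm, Finset.sum_comm (f := fun i (w : ∀ j, V j) => (∏ j, q j (w j)) *
      vfun i (w i) (alloc (fun j => s j (w j)) i))] at h
    calc (∑ w : ∀ j, V j, (∏ j, q j (w j)) * ∑ i, pay (fun j => s j (w j)) i)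
        = ∑ w : ∀ j, V j, ∑ i, (∏ j, q j (w j)) * pay (fun j => s j (w j)) i :=
          Finset.sum_congr rfl fun w _ => Finset.mul_sum ..
      _ ≤ ∑ w : ∀ j, V j, ∑ i, (∏ j, q j (w j)) *
            vfun i (w i) (alloc (fun j => s j (w j)) i) := h
      _ = _ := Finset.sum_congr rfl fun w _ => (Finset.mul_sum ..).symm
  -- conclude
  rcases le_total mu 1 with hm | hm
  · rw [max_eq_left hm, div_one]
    have h3 : 0 ≤ (1 - mu) *
        (∑ w : ∀ j, V j, (∏ j, q j (w j)) * ∑ i, pay (fun j => s j (w j)) i) :=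
      mul_nonneg (by linarith) hEP0
    nlinarith [key, h3]
  · rw [max_eq_right hm, div_mul_eq_mul_div, div_le_iff₀ (lt_of_lt_of_le zero_lt_one hm)]
    have h3 : 0 ≤ (mu - 1) *
        ((∑ w : ∀ j, V j, (∏ j, q j (w j)) *
            ∑ i, vfun i (w i) (alloc (fun j => s j (w j)) i))
          - ∑ w : ∀ j, V j, (∏ j, q j (w j)) * ∑ i, pay (fun j => s j (w j)) i) :=
      mul_nonneg (by linarith) (by linarith [hPle])
    nlinarith [key, h3]
end

section
/- Every correlated equilibrium π of a conditionally (λ,μ)-smooth finite game with nonnegative utilities (λ, μ ≥ 0) has expected social welfare E_π[SW(s)] ≥ (λ / (1 + μ)) · OPT. -/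
/-- every correlated equilibrium `π` of a conditionally `(λ,μ)`-smooth finite
game with nonnegative utilities has expected social welfare at least `(λ / (1 + μ)) · OPT`. -/
theorem stmt_10
    {n : ℕ} {S : Fin n → Type*} [∀ i, Fintype (S i)] [∀ i, Nonempty (S i)]
    [∀ i, DecidableEq (S i)]
    (u : ∀ _ : Fin n, (∀ i, S i) → ℝ) (hu : ∀ i s, 0 ≤ u i s)
    (lam mu : ℝ) (hlam : 0 ≤ lam) (hmu : 0 ≤ mu)
    -- conditional smoothness: deviations may depend on the player's own current strategy
    (dev : ∀ i, S i → S i → ℝ) (hdev : ∀ i si, IsPMFOn (dev i si))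
    (hsmooth : ∀ s : ∀ i, S i,
      lam * (Finset.univ.sup' Finset.univ_nonempty fun s' : ∀ i, S i => ∑ i, u i s') -
          mu * ∑ i, u i s ≤
        ∑ i, ∑ si', dev i (s i) si' * u i (Function.update s i si'))
    -- `π` is a correlated equilibrium
    (π : (∀ i, S i) → ℝ) (hπ : IsPMFOn π)
    (hce : ∀ (i : Fin n) (si : S i),
      0 < (∑ s : ∀ i, S i, if s i = si then π s else 0) →
      ∀ si' : S i,
        (∑ s : ∀ i, S i, if s i = si then π s * u i (Function.update s i si') else 0) ≤
        (∑ s : ∀ i, S i, if s i = si then π s * u i s else 0)) :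
    (lam / (1 + mu)) *
        (Finset.univ.sup' Finset.univ_nonempty fun s' : ∀ i, S i => ∑ i, u i s') ≤
      ∑ s, π s * ∑ i, u i s := by
  obtain ⟨hπ0, hπ1⟩ := hπ
  set OPT := Finset.univ.sup' Finset.univ_nonempty fun s' : ∀ i, S i => ∑ i, u i s' with hOPT
  have key : ∀ i : Fin n,
      ∑ s, π s * ∑ si', dev i (s i) si' * u i (Function.update s i si') ≤
      ∑ s, π s * u i s := by
    intro i
    have h1 : ∀ (f : (∀ i, S i) → ℝ),
        ∑ s, f s = ∑ si : S i, ∑ s, if s i = si then f s else 0 := by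
      intro f
      rw [Finset.sum_comm]
      exact Finset.sum_congr rfl fun s _ => by simp
    rw [h1 (fun s => π s * ∑ si', dev i (s i) si' * u i (Function.update s i si')),
        h1 (fun s => π s * u i s)]
    apply Finset.sum_le_sum
    intro si _
    by_cases hpos : 0 < ∑ s : ∀ i, S i, if s i = si then π s else 0
    · have hce' := hce i si hpos
      calc ∑ s, (if s i = si then
              π s * ∑ si', dev i (s i) si' * u i (Function.update s i si') else 0)
          = ∑ si' : S i, dev i si si' *
              ∑ s, (if s i = si then π s * u i (Function.update s i si') else 0) := by
            simp only [Finset.mul_sum]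
            rw [Finset.sum_comm]
            refine Finset.sum_congr rfl fun s _ => ?_
            by_cases h : s i = si
            · subst h
              simp only [if_pos rfl, Finset.mul_sum]
              exact Finset.sum_congr rfl fun si' _ => by
                simp only [if_true]; ring
            · simp [h]
        _ ≤ ∑ si' : S i, dev i si si' *
              ∑ s, (if s i = si then π s * u i s else 0) := by
            refine Finset.sum_le_sum fun si' _ =>
              mul_le_mul_of_nonneg_left (hce' si') ((hdev i si).1 si')
        _ = ∑ s, (if s i = si then π s * u i s else 0) := by
            rw [← Finset.sum_mul, (hdev i si).2, one_mul]
    · have hnn : ∀ s ∈ Finset.univ, (0:ℝ) ≤ if (s : ∀ i, S i) i = si then π s else 0 := by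
        intro s _
        split
        · exact hπ0 s
        · exact le_refl 0
      have h0 : ∑ s : ∀ i, S i, (if s i = si then π s else 0) = 0 :=
        le_antisymm (not_lt.1 hpos) (Finset.sum_nonneg hnn)
      have hz : ∀ s : ∀ i, S i, s i = si → π s = 0 := by
        intro s hs
        have := (Finset.sum_eq_zero_iff_of_nonneg hnn).1 h0 s (Finset.mem_univ s)
        simpa [hs] using this
      have e1 : ∑ s, (if s i = si then
          π s * ∑ si', dev i (s i) si' * u i (Function.update s i si') else 0) = 0 := by
        refine Finset.sum_eq_zero fun s _ => ?_
        by_cases h : s i = si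
        · simp [h, hz s h]
        · simp [h]
      have e2 : ∑ s, (if s i = si then π s * u i s else 0) = 0 := by
        refine Finset.sum_eq_zero fun s _ => ?_
        by_cases h : s i = si
        · simp [h, hz s h]
        · simp [h]
      rw [e1, e2]
  have hmain : lam * OPT - mu * ∑ s, π s * ∑ i, u i s ≤ ∑ s, π s * ∑ i, u i s := by
    have step1 : lam * OPT - mu * ∑ s, π s * ∑ i, u i s ≤
        ∑ s, π s * ∑ i, ∑ si', dev i (s i) si' * u i (Function.update s i si') := by
      have : ∑ s, π s * (lam * OPT - mu * ∑ i, u i s) ≤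
          ∑ s, π s * ∑ i, ∑ si', dev i (s i) si' * u i (Function.update s i si') :=
        Finset.sum_le_sum fun s _ => mul_le_mul_of_nonneg_left (hsmooth s) (hπ0 s)
      calc lam * OPT - mu * ∑ s, π s * ∑ i, u i s
          = (∑ s, π s) * (lam * OPT) - mu * ∑ s, π s * ∑ i, u i s := by
            rw [hπ1]; ring
        _ = ∑ s, π s * (lam * OPT - mu * ∑ i, u i s) := by
            rw [Finset.sum_mul, Finset.mul_sum, ← Finset.sum_sub_distrib]
            exact Finset.sum_congr rfl fun s _ => by ring
        _ ≤ _ := this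
    have step2 : ∑ s, π s * ∑ i, ∑ si', dev i (s i) si' * u i (Function.update s i si') ≤
        ∑ s, π s * ∑ i, u i s := by
      have l : ∑ s, π s * ∑ i, ∑ si', dev i (s i) si' * u i (Function.update s i si')
          = ∑ i, ∑ s, π s * ∑ si', dev i (s i) si' * u i (Function.update s i si') := by
        simp only [Finset.mul_sum]
        rw [Finset.sum_comm]
      have r : ∑ s, π s * ∑ i, u i s = ∑ i, ∑ s, π s * u i s := by
        simp only [Finset.mul_sum]
        rw [Finset.sum_comm]
      rw [l, r]
      exact Finset.sum_le_sum fun i _ => key i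
    exact le_trans step1 step2
  have hpos : (0:ℝ) < 1 + mu := by linarith
  rw [div_mul_eq_mul_div, div_le_iff₀ hpos]
  nlinarith [hmain]
end

section
/- If a finite Bayesian game with independent type distributions is conditionally (λ,μ)-smooth (λ > 0, μ ≥ 0) and s is a pure Bayes–Nash equilibrium, then E_{t∼q}[Σ_i u_i^{t_i}(s(t))] ≥ (λ / (1 + μ)) · E_{t∼q}[OPT(t)]; equivalently, the Bayes–Nash price of anarchy is at most (1 + μ)/λ. -/
section Aux

variable {n : ℕ} {T : Fin n → Type*} [∀ i, Fintype (T i)] [∀ i, DecidableEq (T i)]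

lemma aux_sum_prod (f : ∀ j, T j → ℝ) :
    ∑ t : ∀ j, T j, ∏ j, f j (t j) = ∏ j, ∑ x, f j x := by
  rw [Finset.prod_univ_sum, Fintype.piFinset_univ]

lemma aux_fiber (i : Fin n) (g : (∀ j, T j) → ℝ) :
    ∑ t : ∀ j, T j, g t = ∑ ti : T i, ∑ t : ∀ j, T j, if t i = ti then g t else 0 := by
  rw [Finset.sum_comm]
  refine Finset.sum_congr rfl fun t _ => ?_
  rw [Finset.sum_ite_eq]
  simp

lemma aux_indep (i : Fin n) (ti ti' : T i) (g : (∀ j, T j) → ℝ)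
    (hg : ∀ t x, g (Function.update t i x) = g t) :
    (∑ t : ∀ j, T j, if t i = ti then g t else 0)
      = ∑ t : ∀ j, T j, if t i = ti' then g t else 0 := by
  rw [← Finset.sum_filter, ← Finset.sum_filter]
  refine Finset.sum_nbij' (fun t => Function.update t i ti') (fun t => Function.update t i ti)
    ?_ ?_ ?_ ?_ ?_
  · intro t _; simp [Finset.mem_filter]
  · intro t _; simp [Finset.mem_filter]
  · intro t ht
    have h := (Finset.mem_filter.mp ht).2
    simp only [Function.update_idem]
    rw [← h, Function.update_eq_self]
  · intro t ht
    have h := (Finset.mem_filter.mp ht).2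
    simp only [Function.update_idem]
    rw [← h, Function.update_eq_self]
  · intro t _
    exact (hg t ti').symm

variable (q : ∀ i, T i → ℝ)

lemma aux_Qm_one (hq : ∀ i, IsPMFOn (q i)) (i : Fin n) (ti : T i) :
    ∑ t : ∀ j, T j, (if t i = ti then ∏ j ∈ Finset.univ.erase i, q j (t j) else 0) = 1 := by
  classical
  have key : ∀ t : ∀ j, T j,
      (if t i = ti then ∏ j ∈ Finset.univ.erase i, q j (t j) else 0)
        = ∏ j, Function.update q i (fun x => if x = ti then (1:ℝ) else 0) j (t j) := by
    intro t
    rw [← Finset.mul_prod_erase Finset.univ _ (Finset.mem_univ i)]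
    have h1 : Function.update q i (fun x => if x = ti then (1:ℝ) else 0) i (t i)
        = if t i = ti then (1:ℝ) else 0 := by
      rw [Function.update_self]
    have h2 : ∏ j ∈ Finset.univ.erase i,
        Function.update q i (fun x => if x = ti then (1:ℝ) else 0) j (t j)
        = ∏ j ∈ Finset.univ.erase i, q j (t j) := by
      refine Finset.prod_congr rfl fun j hj => ?_
      rw [Function.update_of_ne (Finset.mem_erase.mp hj).1]
    rw [h1, h2, ite_mul, one_mul, zero_mul]
  rw [Finset.sum_congr rfl fun t _ => key t, aux_sum_prod]
  refine Finset.prod_eq_one fun j _ => ?_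
  by_cases h : j = i
  · subst h
    simp
  · rw [Function.update_of_ne h]
    exact (hq j).2

lemma aux_unfiber (hq : ∀ i, IsPMFOn (q i)) (i : Fin n) (F : T i → (∀ j, T j) → ℝ) :
    ∑ ti : T i, q i ti *
        (∑ t : ∀ j, T j, if t i = ti then (∏ j ∈ Finset.univ.erase i, q j (t j)) * F ti t else 0)
      = ∑ t : ∀ j, T j, (∏ j, q j (t j)) * F (t i) t := by
  rw [aux_fiber i (fun t => (∏ j, q j (t j)) * F (t i) t)]
  refine Finset.sum_congr rfl fun ti _ => ?_
  rw [Finset.mul_sum]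
  refine Finset.sum_congr rfl fun t _ => ?_
  split
  · next h =>
    rw [← Finset.mul_prod_erase Finset.univ _ (Finset.mem_univ i), h]
    ring
  · rw [mul_zero]

lemma aux_swap {ι κ : Type*} [Fintype ι] [Fintype κ] (Q1 Q2 : κ → ℝ) (f : ι → κ → κ → ℝ) :
    ∑ i : ι, ∑ τ : κ, Q1 τ * ∑ w : κ, Q2 w * f i τ w
      = ∑ τ : κ, Q1 τ * ∑ w : κ, Q2 w * ∑ i : ι, f i τ w := by
  rw [Finset.sum_comm]
  refine Finset.sum_congr rfl fun τ _ => ?_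
  rw [← Finset.mul_sum]
  congr 1
  rw [Finset.sum_comm]
  refine Finset.sum_congr rfl fun w _ => ?_
  rw [← Finset.mul_sum]

end Aux

/-- Key lemma: a Bayes-Nash player's expected utility under any (own-type-dependent)
randomized deviation is at most the equilibrium fiber value. -/
lemma aux_dev {n : ℕ} {T : Fin n → Type*} [∀ i, Fintype (T i)] [∀ i, DecidableEq (T i)]
    {A : Fin n → Type*} [∀ i, Fintype (A i)]
    (q : ∀ i, T i → ℝ) (hq : ∀ i, IsPMFOn (q i))
    (s : ∀ i, T i → A i) (i : Fin n) (ti : T i)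
    (v : (∀ j, A j) → ℝ)
    (d : T i → A i → ℝ) (hd : ∀ wi, IsPMFOn (d wi))
    (hbne_v : ∀ ai : A i,
      (∑ w : ∀ j, T j, if w i = ti then (∏ j ∈ Finset.univ.erase i, q j (w j)) *
          v (Function.update (fun j => s j (w j)) i ai) else 0)
        ≤ ∑ w : ∀ j, T j, if w i = ti then (∏ j ∈ Finset.univ.erase i, q j (w j)) *
          v (fun j => s j (w j)) else 0) :
    (∑ w : ∀ j, T j, (∏ j, q j (w j)) *
        ∑ a' : A i, d (w i) a' * v (Function.update (fun j => s j (w j)) i a'))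
      ≤ ∑ w : ∀ j, T j, if w i = ti then (∏ j ∈ Finset.univ.erase i, q j (w j)) *
          v (fun j => s j (w j)) else 0 := by
  classical
  have hupd : ∀ (w : ∀ j, T j) (x : T i) (a' : A i),
      Function.update (fun j => s j (Function.update w i x j)) i a'
        = Function.update (fun j => s j (w j)) i a' := by
    intro w x a'
    funext j
    by_cases h : j = i
    · subst h; simp
    · rw [Function.update_of_ne h, Function.update_of_ne h, Function.update_of_ne h]
  have hQm : ∀ (w : ∀ j, T j) (x : T i),
      (∏ j ∈ Finset.univ.erase i, q j (Function.update w i x j))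
        = ∏ j ∈ Finset.univ.erase i, q j (w j) := by
    intro w x
    refine Finset.prod_congr rfl fun j hj => ?_
    rw [Function.update_of_ne (Finset.mem_erase.mp hj).1]
  calc (∑ w : ∀ j, T j, (∏ j, q j (w j)) *
        ∑ a' : A i, d (w i) a' * v (Function.update (fun j => s j (w j)) i a'))
      = ∑ wi : T i, ∑ w : ∀ j, T j, if w i = wi then (∏ j, q j (w j)) *
          ∑ a' : A i, d (w i) a' * v (Function.update (fun j => s j (w j)) i a') else 0 :=
        aux_fiber i _
    _ = ∑ wi : T i, ∑ a' : A i, (q i wi * d wi a') *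
          ∑ w : ∀ j, T j, if w i = ti then (∏ j ∈ Finset.univ.erase i, q j (w j)) *
            v (Function.update (fun j => s j (w j)) i a') else 0 := by
        refine Finset.sum_congr rfl fun wi _ => ?_
        have step1 : ∀ w : ∀ j, T j,
            (if w i = wi then (∏ j, q j (w j)) *
              ∑ a' : A i, d (w i) a' * v (Function.update (fun j => s j (w j)) i a') else 0)
            = ∑ a' : A i, (q i wi * d wi a') *
                (if w i = wi then (∏ j ∈ Finset.univ.erase i, q j (w j)) *
                  v (Function.update (fun j => s j (w j)) i a') else 0) := by
          intro w
          split
          · next h =>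
            rw [← Finset.mul_prod_erase Finset.univ (fun j => q j (w j)) (Finset.mem_univ i), h,
              Finset.mul_sum]
            refine Finset.sum_congr rfl fun a' _ => ?_
            ring
          · simp
        rw [Finset.sum_congr rfl fun w _ => step1 w, Finset.sum_comm]
        refine Finset.sum_congr rfl fun a' _ => ?_
        rw [← Finset.mul_sum]
        congr 1
        refine aux_indep i wi ti _ fun w x => ?_
        rw [hQm w x, hupd w x a']
    _ ≤ ∑ wi : T i, ∑ a' : A i, (q i wi * d wi a') *
          ∑ w : ∀ j, T j, if w i = ti then (∏ j ∈ Finset.univ.erase i, q j (w j)) *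
            v (fun j => s j (w j)) else 0 := by
        refine Finset.sum_le_sum fun wi _ => Finset.sum_le_sum fun a' _ => ?_
        exact mul_le_mul_of_nonneg_left (hbne_v a')
          (mul_nonneg ((hq i).1 wi) ((hd wi).1 a'))
    _ = ∑ w : ∀ j, T j, if w i = ti then (∏ j ∈ Finset.univ.erase i, q j (w j)) *
          v (fun j => s j (w j)) else 0 := by
        have : ∀ wi : T i, ∑ a' : A i, (q i wi * d wi a') *
            (∑ w : ∀ j, T j, if w i = ti then (∏ j ∈ Finset.univ.erase i, q j (w j)) *
              v (fun j => s j (w j)) else 0)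
            = q i wi * ∑ w : ∀ j, T j, if w i = ti then
                (∏ j ∈ Finset.univ.erase i, q j (w j)) * v (fun j => s j (w j)) else 0 := by
          intro wi
          rw [← Finset.sum_mul, ← Finset.mul_sum, (hd wi).2, mul_one]
        rw [Finset.sum_congr rfl fun wi _ => this wi, ← Finset.sum_mul, (hq i).2, one_mul]

/-- a conditionally `(λ,μ)`-smooth finite Bayesian game with independent type
distributions (λ > 0, μ ≥ 0) has, at every pure Bayes–Nash equilibrium `s`, expected welfare
at least `(λ / (1 + μ))` times the expected optimal welfare, i.e. the Bayes–Nash price of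
anarchy is at most `(1 + μ)/λ`. -/
theorem stmt_11
    {n : ℕ} {T : Fin n → Type*} [∀ i, Fintype (T i)] [∀ i, Nonempty (T i)]
    [∀ i, DecidableEq (T i)]
    {A : Fin n → Type*} [∀ i, Fintype (A i)] [∀ i, Nonempty (A i)]
    (u : ∀ i : Fin n, T i → (∀ j, A j) → ℝ) (hu : ∀ i ti a, 0 ≤ u i ti a)
    (q : ∀ i, T i → ℝ) (hq : ∀ i, IsPMFOn (q i))
    (lam mu : ℝ) (hlam : 0 < lam) (hmu : 0 ≤ mu)
    -- conditional smoothness of every induced complete-information game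
    (hsmooth : ∀ t : ∀ i, T i, ∃ dev : ∀ i, A i → A i → ℝ,
      (∀ i ai, IsPMFOn (dev i ai)) ∧
      ∀ a : ∀ i, A i,
        lam * (Finset.univ.sup' Finset.univ_nonempty fun a' : ∀ i, A i =>
            ∑ i, u i (t i) a') - mu * ∑ i, u i (t i) a ≤
          ∑ i, ∑ ai', dev i (a i) ai' * u i (t i) (Function.update a i ai'))
    -- `s` is a pure Bayes–Nash equilibrium
    (s : ∀ i, T i → A i)
    (hbne : ∀ (i : Fin n) (ti : T i), 0 < q i ti → ∀ ai : A i,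
      (∑ t : ∀ j, T j, if t i = ti
        then (∏ j ∈ Finset.univ.erase i, q j (t j)) *
          u i ti (Function.update (fun j => s j (t j)) i ai)
        else 0) ≤
      (∑ t : ∀ j, T j, if t i = ti
        then (∏ j ∈ Finset.univ.erase i, q j (t j)) * u i ti (fun j => s j (t j))
        else 0)) :
    (lam / (1 + mu)) *
        (∑ t : ∀ j, T j, (∏ j, q j (t j)) *
          (Finset.univ.sup' Finset.univ_nonempty fun a' : ∀ i, A i =>
            ∑ i, u i (t i) a')) ≤
      ∑ t : ∀ j, T j, (∏ j, q j (t j)) * ∑ i, u i (t i) (fun j => s j (t j)) := by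
  classical
  choose dev hpmf hsm using hsmooth
  have hQ0 : ∀ t : ∀ j, T j, (0:ℝ) ≤ ∏ j, q j (t j) :=
    fun t => Finset.prod_nonneg fun j _ => (hq j).1 _
  have hQ1 : ∑ t : ∀ j, T j, ∏ j, q j (t j) = 1 := by
    rw [aux_sum_prod]
    exact Finset.prod_eq_one fun j _ => (hq j).2
  -- generic per-player bound: any "deviation payoff" dominated fiberwise by the
  -- equilibrium fiber value is dominated globally by the equilibrium value
  have main : ∀ (i : Fin n) (f : (∀ j, T j) → (∀ j, T j) → ℝ),
      (∀ τ : ∀ j, T j, 0 < q i (τ i) →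
        (∑ w : ∀ j, T j, (∏ j, q j (w j)) * f τ w)
          ≤ ∑ w : ∀ j, T j, if w i = τ i then (∏ j ∈ Finset.univ.erase i, q j (w j)) *
              u i (τ i) (fun j => s j (w j)) else 0) →
      (∑ τ : ∀ j, T j, (∏ j, q j (τ j)) * ∑ w : ∀ j, T j, (∏ j, q j (w j)) * f τ w)
        ≤ ∑ t : ∀ j, T j, (∏ j, q j (t j)) * u i (t i) (fun j => s j (t j)) := by
    intro i f hf
    have step : ∀ τ : ∀ j, T j,
        (∏ j, q j (τ j)) * (∑ w : ∀ j, T j, (∏ j, q j (w j)) * f τ w)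
          ≤ (∏ j, q j (τ j)) * ∑ w : ∀ j, T j, if w i = τ i then
              (∏ j ∈ Finset.univ.erase i, q j (w j)) * u i (τ i) (fun j => s j (w j)) else 0 := by
      intro τ
      by_cases h0 : 0 < q i (τ i)
      · exact mul_le_mul_of_nonneg_left (hf τ h0) (hQ0 τ)
      · have hz : (∏ j, q j (τ j)) = 0 := by
          rw [← Finset.mul_prod_erase Finset.univ (fun j => q j (τ j)) (Finset.mem_univ i),
            le_antisymm (not_lt.mp h0) ((hq i).1 (τ i)), zero_mul]
        rw [hz, zero_mul, zero_mul]
    refine (Finset.sum_le_sum fun τ _ => step τ).trans (le_of_eq ?_)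
    -- marginalize the τ-sum (the summand depends on τ only through τ i)
    have hmarg : ∀ g : T i → ℝ,
        ∑ t : ∀ j, T j, (∏ j, q j (t j)) * g (t i) = ∑ ti : T i, q i ti * g ti := by
      intro g
      rw [← aux_unfiber q hq i (fun ti _ => g ti)]
      refine Finset.sum_congr rfl fun ti _ => ?_
      congr 1
      calc (∑ t : ∀ j, T j, if t i = ti then (∏ j ∈ Finset.univ.erase i, q j (t j)) * g ti else 0)
          = ∑ t : ∀ j, T j, (if t i = ti then (∏ j ∈ Finset.univ.erase i, q j (t j)) else 0) * g ti := by
            refine Finset.sum_congr rfl fun t _ => ?_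
            rw [ite_mul, zero_mul]
        _ = (∑ t : ∀ j, T j, if t i = ti then (∏ j ∈ Finset.univ.erase i, q j (t j)) else 0) * g ti := by
            rw [Finset.sum_mul]
        _ = g ti := by rw [aux_Qm_one q hq i ti, one_mul]
    calc (∑ τ : ∀ j, T j, (∏ j, q j (τ j)) * ∑ w : ∀ j, T j, if w i = τ i then
            (∏ j ∈ Finset.univ.erase i, q j (w j)) * u i (τ i) (fun j => s j (w j)) else 0)
        = ∑ ti : T i, q i ti * ∑ w : ∀ j, T j, if w i = ti then
            (∏ j ∈ Finset.univ.erase i, q j (w j)) * u i ti (fun j => s j (w j)) else 0 :=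
          hmarg (fun ti => ∑ w : ∀ j, T j, if w i = ti then
            (∏ j ∈ Finset.univ.erase i, q j (w j)) * u i ti (fun j => s j (w j)) else 0)
      _ = ∑ t : ∀ j, T j, (∏ j, q j (t j)) * u i (t i) (fun j => s j (t j)) :=
          aux_unfiber q hq i (fun ti w => u i ti (fun j => s j (w j)))
  -- Step B: bound on the smoothness deviation term
  have hB : ∀ i : Fin n,
      (∑ τ : ∀ j, T j, (∏ j, q j (τ j)) * ∑ w : ∀ j, T j, (∏ j, q j (w j)) *
          ∑ a' : A i, dev τ i (s i (w i)) a' *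
            u i (τ i) (Function.update (fun j => s j (w j)) i a'))
        ≤ ∑ t : ∀ j, T j, (∏ j, q j (t j)) * u i (t i) (fun j => s j (t j)) := by
    intro i
    refine main i _ fun τ h0 => ?_
    exact aux_dev q hq s i (τ i) (u i (τ i)) (fun wi => dev τ i (s i wi))
      (fun wi => hpmf τ i (s i wi)) (hbne i (τ i) h0)
  -- Step C: bound on the cross term
  have hC : ∀ i : Fin n,
      (∑ τ : ∀ j, T j, (∏ j, q j (τ j)) * ∑ w : ∀ j, T j, (∏ j, q j (w j)) *
          u i (τ i) (fun j => s j (w j)))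
        ≤ ∑ t : ∀ j, T j, (∏ j, q j (t j)) * u i (t i) (fun j => s j (t j)) := by
    intro i
    refine main i _ fun τ h0 => ?_
    have rewr : ∀ w : ∀ j, T j,
        u i (τ i) (fun j => s j (w j))
          = ∑ a' : A i, (if a' = s i (w i) then (1:ℝ) else 0) *
              u i (τ i) (Function.update (fun j => s j (w j)) i a') := by
      intro w
      have h1 : ∀ a' : A i, (if a' = s i (w i) then (1:ℝ) else 0) *
            u i (τ i) (Function.update (fun j => s j (w j)) i a')
          = if a' = s i (w i) then u i (τ i) (Function.update (fun j => s j (w j)) i a') else 0 := by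
        intro a'
        rw [ite_mul, one_mul, zero_mul]
      rw [Finset.sum_congr rfl fun a' _ => h1 a', Finset.sum_ite_eq' Finset.univ (s i (w i))]
      have h2 : Function.update (fun j => s j (w j)) i (s i (w i)) = fun j => s j (w j) :=
        Function.update_eq_self i (fun j => s j (w j))
      rw [if_pos (Finset.mem_univ _), h2]
    rw [show (∑ w : ∀ j, T j, (∏ j, q j (w j)) * u i (τ i) (fun j => s j (w j)))
        = ∑ w : ∀ j, T j, (∏ j, q j (w j)) * ∑ a' : A i, (if a' = s i (w i) then (1:ℝ) else 0) *
            u i (τ i) (Function.update (fun j => s j (w j)) i a') from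
      Finset.sum_congr rfl fun w _ => by rw [← rewr w]]
    refine aux_dev q hq s i (τ i) (u i (τ i)) (fun wi a' => if a' = s i wi then (1:ℝ) else 0)
      (fun wi => ⟨fun a' => by dsimp only; split <;> norm_num, by simp⟩) (hbne i (τ i) h0)
  -- Step A: smoothness applied under the product measure
  have hsmW : ∀ τ w : ∀ j, T j,
      lam * (Finset.univ.sup' Finset.univ_nonempty fun a' : ∀ i, A i => ∑ i, u i (τ i) a')
        ≤ (∑ i, ∑ a' : A i, dev τ i (s i (w i)) a' *
            u i (τ i) (Function.update (fun j => s j (w j)) i a'))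
          + mu * ∑ i, u i (τ i) (fun j => s j (w j)) :=
    fun τ w => sub_le_iff_le_add.mp (hsm τ (fun j => s j (w j)))
  have hA : lam * (∑ t : ∀ j, T j, (∏ j, q j (t j)) *
        (Finset.univ.sup' Finset.univ_nonempty fun a' : ∀ i, A i => ∑ i, u i (t i) a'))
      ≤ (∑ i, ∑ τ : ∀ j, T j, (∏ j, q j (τ j)) * ∑ w : ∀ j, T j, (∏ j, q j (w j)) *
            ∑ a' : A i, dev τ i (s i (w i)) a' *
              u i (τ i) (Function.update (fun j => s j (w j)) i a'))
        + mu * (∑ i, ∑ τ : ∀ j, T j, (∏ j, q j (τ j)) * ∑ w : ∀ j, T j, (∏ j, q j (w j)) *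
            u i (τ i) (fun j => s j (w j))) := by
    rw [aux_swap, aux_swap]
    have eq1 : (∑ τ : ∀ j, T j, (∏ j, q j (τ j)) * ∑ w : ∀ j, T j, (∏ j, q j (w j)) *
          ((∑ i, ∑ a' : A i, dev τ i (s i (w i)) a' *
              u i (τ i) (Function.update (fun j => s j (w j)) i a'))
            + mu * ∑ i, u i (τ i) (fun j => s j (w j))))
        = (∑ τ : ∀ j, T j, (∏ j, q j (τ j)) * ∑ w : ∀ j, T j, (∏ j, q j (w j)) *
            ∑ i, ∑ a' : A i, dev τ i (s i (w i)) a' *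
              u i (τ i) (Function.update (fun j => s j (w j)) i a'))
          + mu * (∑ τ : ∀ j, T j, (∏ j, q j (τ j)) * ∑ w : ∀ j, T j, (∏ j, q j (w j)) *
              ∑ i, u i (τ i) (fun j => s j (w j))) := by
      have perτ : ∀ τ : ∀ j, T j, (∏ j, q j (τ j)) * ∑ w : ∀ j, T j, (∏ j, q j (w j)) *
            ((∑ i, ∑ a' : A i, dev τ i (s i (w i)) a' *
                u i (τ i) (Function.update (fun j => s j (w j)) i a'))
              + mu * ∑ i, u i (τ i) (fun j => s j (w j)))
          = (∏ j, q j (τ j)) * (∑ w : ∀ j, T j, (∏ j, q j (w j)) *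
              ∑ i, ∑ a' : A i, dev τ i (s i (w i)) a' *
                u i (τ i) (Function.update (fun j => s j (w j)) i a'))
            + mu * ((∏ j, q j (τ j)) * ∑ w : ∀ j, T j, (∏ j, q j (w j)) *
                ∑ i, u i (τ i) (fun j => s j (w j))) := by
        intro τ
        rw [show (∑ w : ∀ j, T j, (∏ j, q j (w j)) *
            ((∑ i, ∑ a' : A i, dev τ i (s i (w i)) a' *
                u i (τ i) (Function.update (fun j => s j (w j)) i a'))
              + mu * ∑ i, u i (τ i) (fun j => s j (w j))))
            = (∑ w : ∀ j, T j, (∏ j, q j (w j)) *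
                ∑ i, ∑ a' : A i, dev τ i (s i (w i)) a' *
                  u i (τ i) (Function.update (fun j => s j (w j)) i a'))
              + ∑ w : ∀ j, T j, mu * ((∏ j, q j (w j)) *
                  ∑ i, u i (τ i) (fun j => s j (w j))) from by
          rw [← Finset.sum_add_distrib]
          exact Finset.sum_congr rfl fun w _ => by ring]
        rw [← Finset.mul_sum]
        ring
      rw [Finset.sum_congr rfl fun τ _ => perτ τ, Finset.sum_add_distrib, ← Finset.mul_sum]
    rw [← eq1]
    have eq2 : lam * (∑ t : ∀ j, T j, (∏ j, q j (t j)) *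
          (Finset.univ.sup' Finset.univ_nonempty fun a' : ∀ i, A i => ∑ i, u i (t i) a'))
        = ∑ τ : ∀ j, T j, (∏ j, q j (τ j)) * ∑ w : ∀ j, T j, (∏ j, q j (w j)) *
            (lam * (Finset.univ.sup' Finset.univ_nonempty fun a' : ∀ i, A i => ∑ i, u i (τ i) a')) := by
      rw [Finset.mul_sum]
      refine Finset.sum_congr rfl fun τ _ => ?_
      rw [show (∑ w : ∀ j, T j, (∏ j, q j (w j)) *
          (lam * (Finset.univ.sup' Finset.univ_nonempty fun a' : ∀ i, A i => ∑ i, u i (τ i) a')))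
          = (∑ w : ∀ j, T j, ∏ j, q j (w j)) *
            (lam * (Finset.univ.sup' Finset.univ_nonempty fun a' : ∀ i, A i => ∑ i, u i (τ i) a'))
        from (Finset.sum_mul _ _ _).symm, hQ1]
      ring
    rw [eq2]
    refine Finset.sum_le_sum fun τ _ => mul_le_mul_of_nonneg_left
      (Finset.sum_le_sum fun w _ => mul_le_mul_of_nonneg_left (hsmW τ w) (hQ0 w)) (hQ0 τ)
  -- combine everything
  have hEqW : ∑ i, (∑ t : ∀ j, T j, (∏ j, q j (t j)) * u i (t i) (fun j => s j (t j)))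
      = ∑ t : ∀ j, T j, (∏ j, q j (t j)) * ∑ i, u i (t i) (fun j => s j (t j)) := by
    rw [Finset.sum_comm]
    exact Finset.sum_congr rfl fun t _ => (Finset.mul_sum _ _ _).symm
  have hBtot := (Finset.sum_le_sum fun i (_ : i ∈ Finset.univ) => hB i).trans_eq hEqW
  have hCtot := (Finset.sum_le_sum fun i (_ : i ∈ Finset.univ) => hC i).trans_eq hEqW
  have h1mu : (0:ℝ) < 1 + mu := by linarith
  rw [div_mul_eq_mul_div, div_le_iff₀ h1mu]
  have h2 := mul_le_mul_of_nonneg_left hCtot hmu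
  nlinarith [hA, hBtot, h2]
end

section
/- Consider the simultaneous composition of m finite mechanisms M^1,…,M^m for n players, and let λ, μ ≥ 0. Suppose that for every j ∈ {1,…,m}, mechanism M^j is (λ,μ)-smooth for every valuation profile (w_1,…,w_n) with w_i ∈ 𝒱_i^j, and suppose that each player's global valuation v_i : Π_j 𝒳_i^j → ℝ is XOS with components in (𝒱_i^j)_j. Then the simultaneous composition is (λ,μ)-smooth for the profile v = (v_1,…,v_n). -/
/-- Marginalization: for a product distribution on a finite product type, the expectation of a
function of one coordinate equals the expectation under the corresponding marginal. -/
lemma marg_aux {m : ℕ} {β : Fin m → Type*} [∀ j, Fintype (β j)]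
    (p : ∀ j, β j → ℝ) (hp : ∀ j, ∑ b, p j b = 1) (j₀ : Fin m) (g : β j₀ → ℝ) :
    ∑ t : ∀ j, β j, (∏ j, p j (t j)) * g (t j₀) = ∑ b, p j₀ b * g b := by
  classical
  have key : ∀ t : ∀ j, β j,
      (∏ j, p j (t j)) * g (t j₀)
        = ∏ j, Function.update p j₀ (fun b => p j₀ b * g b) j (t j) := by
    intro t
    have he : ∏ j ∈ Finset.univ.erase j₀,
        Function.update p j₀ (fun b => p j₀ b * g b) j (t j)
          = ∏ j ∈ Finset.univ.erase j₀, p j (t j) :=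
      Finset.prod_congr rfl (fun j hj => by
        rw [Function.update_of_ne (Finset.ne_of_mem_erase hj)])
    rw [← Finset.mul_prod_erase Finset.univ
        (fun j => Function.update p j₀ (fun b => p j₀ b * g b) j (t j)) (Finset.mem_univ j₀),
        ← Finset.mul_prod_erase Finset.univ (fun j => p j (t j)) (Finset.mem_univ j₀),
        he, Function.update_self]
    ring
  simp_rw [key]
  rw [← Fintype.piFinset_univ, ← Finset.prod_univ_sum]
  rw [← Finset.mul_prod_erase Finset.univ _ (Finset.mem_univ j₀), Function.update_self]
  have h1 : ∏ j ∈ Finset.univ.erase j₀,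
      ∑ b, Function.update p j₀ (fun b => p j₀ b * g b) j b = 1 := by
    apply Finset.prod_eq_one
    intro j hj
    rw [Function.update_of_ne (Finset.ne_of_mem_erase hj)]
    exact hp j
  rw [h1, mul_one]

/-- if each of `m` finite mechanisms is `(λ,μ)`-smooth for every valuation
profile drawn from the classes `V i j`, and each player's global valuation over the product
of outcome spaces is XOS with components in those classes, then the simultaneous composition
(actions are tuples of actions, allocations are tuples of allocations, payments add up) is
`(λ,μ)`-smooth for the global valuation profile. -/
theorem stmt_12
    {n m : ℕ}
    {A : Fin m → Fin n → Type*} [∀ j i, Fintype (A j i)] [∀ j i, Nonempty (A j i)]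
    {Out : Fin m → Fin n → Type*} [∀ j i, Fintype (Out j i)] [∀ j i, Nonempty (Out j i)]
    (feas : ∀ j, Finset (∀ i, Out j i)) (hfeas : ∀ j, (feas j).Nonempty)
    (alloc : ∀ j, (∀ i, A j i) → ∀ i, Out j i) (halloc : ∀ j a, alloc j a ∈ feas j)
    (pay : ∀ j, (∀ i, A j i) → Fin n → ℝ) (hpay : ∀ j a i, 0 ≤ pay j a i)
    (lam mu : ℝ) (hlam : 0 ≤ lam) (hmu : 0 ≤ mu)
    -- valuation classes: sets of nonnegative mechanism-restricted valuations
    (V : ∀ i j, Set (Out j i → ℝ)) (hV : ∀ i j w, w ∈ V i j → ∀ x, 0 ≤ w x)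
    -- every component mechanism is `(λ,μ)`-smooth for every profile from the classes
    (hsmooth : ∀ (j : Fin m) (w : ∀ i, Out j i → ℝ), (∀ i, w i ∈ V i j) →
      ∃ dev : ∀ i, A j i → A j i → ℝ,
        (∀ i ai, IsPMFOn (dev i ai)) ∧
        ∀ a : ∀ i, A j i,
          lam * (feas j).sup' (hfeas j) (fun x => ∑ i, w i (x i)) -
              mu * ∑ i, pay j a i ≤
            ∑ i, ∑ ai', dev i (a i) ai' *
              (w i (alloc j (Function.update a i ai') i) -
                pay j (Function.update a i ai') i))
    -- global valuations: nonnegative and XOS with components in the classes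
    (v : ∀ i, (∀ j, Out j i) → ℝ) (hvnn : ∀ i xi, 0 ≤ v i xi)
    (hXOS : ∀ i, ∃ (K : ℕ) (comp : Fin (K + 1) → ∀ j, Out j i → ℝ),
      (∀ ℓ j, comp ℓ j ∈ V i j) ∧
      ∀ xi : ∀ j, Out j i,
        v i xi = Finset.univ.sup' Finset.univ_nonempty fun ℓ => ∑ j, comp ℓ j (xi j)) :
    -- conclusion: the simultaneous composition is `(λ,μ)`-smooth for `v`
    ∃ dev : ∀ i, (∀ j, A j i) → (∀ j, A j i) → ℝ,
      (∀ i ai, IsPMFOn (dev i ai)) ∧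
      ∀ a : ∀ i, ∀ j, A j i,
        lam * sSup {r : ℝ | ∃ x : ∀ i, ∀ j, Out j i,
            (∀ j, (fun i => x i j) ∈ feas j) ∧ r = ∑ i, v i (x i)} -
            mu * ∑ i, ∑ j, pay j (fun i' => a i' j) i ≤
          ∑ i, ∑ ai' : ∀ j, A j i, dev i (a i) ai' *
            (v i (fun j => alloc j (fun i' => Function.update a i ai' i' j) i) -
              ∑ j, pay j (fun i' => Function.update a i ai' i' j) i) := by
  classical
  choose K comp hcompV hrep using hXOS
  -- the finite set of feasible global outcomes
  set F : Finset (∀ i, ∀ j, Out j i) :=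
    Finset.univ.filter (fun x => ∀ j, (fun i => x i j) ∈ feas j) with hF
  have hFne : F.Nonempty := by
    refine ⟨fun i j => (hfeas j).choose i, ?_⟩
    rw [hF, Finset.mem_filter]
    exact ⟨Finset.mem_univ _, fun j => (hfeas j).choose_spec⟩
  obtain ⟨xs, hxsmem, hxseq⟩ := F.exists_mem_eq_sup' hFne (fun x => ∑ i, v i (x i))
  have hxsfeas : ∀ j, (fun i => xs i j) ∈ feas j := (Finset.mem_filter.mp hxsmem).2
  have hsup : sSup {r : ℝ | ∃ x : ∀ i, ∀ j, Out j i,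
      (∀ j, (fun i => x i j) ∈ feas j) ∧ r = ∑ i, v i (x i)} ≤ ∑ i, v i (xs i) := by
    apply Real.sSup_le
    · rintro r ⟨x, hx, rfl⟩
      have hxF : x ∈ F := Finset.mem_filter.mpr ⟨Finset.mem_univ _, hx⟩
      calc ∑ i, v i (x i) ≤ F.sup' hFne (fun x => ∑ i, v i (x i)) := Finset.le_sup' (fun x => ∑ i, v i (x i)) hxF
        _ = ∑ i, v i (xs i) := hxseq
    · exact Finset.sum_nonneg fun i _ => hvnn i _
  -- choose maximizing XOS component for each player
  have hexℓ : ∀ i, ∃ ℓ : Fin (K i + 1), v i (xs i) = ∑ j, comp i ℓ j (xs i j) := by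
    intro i
    obtain ⟨ℓ, -, h⟩ := Finset.exists_mem_eq_sup' Finset.univ_nonempty
      (fun ℓ => ∑ j, comp i ℓ j (xs i j))
    exact ⟨ℓ, (hrep i (xs i)).trans h⟩
  choose ℓ hℓ using hexℓ
  have hXOSle : ∀ i (y : ∀ j, Out j i), ∑ j, comp i (ℓ i) j (y j) ≤ v i y := by
    intro i y
    rw [hrep i y]
    exact Finset.le_sup' (fun ℓ => ∑ j, comp i ℓ j (y j)) (Finset.mem_univ _)
  -- component deviations from smoothness of each mechanism
  have hs := fun j => hsmooth j (fun i => comp i (ℓ i) j) (fun i => hcompV i (ℓ i) j)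
  choose devj hpmfj hdevj using hs
  refine ⟨fun i ai ai' => ∏ j, devj j i (ai j) (ai' j), ?_, ?_⟩
  · intro i ai
    constructor
    · intro x; exact Finset.prod_nonneg fun j _ => (hpmfj j i (ai j)).1 _
    · rw [← Fintype.piFinset_univ, ← Finset.prod_univ_sum]
      exact Finset.prod_eq_one fun j _ => (hpmfj j i (ai j)).2
  · intro a
    simp only []
    set OPTj : Fin m → ℝ :=
      fun j => (feas j).sup' (hfeas j) (fun x => ∑ i, comp i (ℓ i) j (x i)) with hOPTj
    have step2 : ∑ i, v i (xs i) ≤ ∑ j, OPTj j := by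
      calc ∑ i, v i (xs i) = ∑ i, ∑ j, comp i (ℓ i) j (xs i j) :=
              Finset.sum_congr rfl fun i _ => hℓ i
        _ = ∑ j, ∑ i, comp i (ℓ i) j (xs i j) := Finset.sum_comm
        _ ≤ ∑ j, OPTj j := Finset.sum_le_sum fun j _ => Finset.le_sup' (fun x => ∑ i, comp i (ℓ i) j (x i)) (hxsfeas j)
    have hupd : ∀ (i : Fin n) (ai' : ∀ j, A j i) (j : Fin m),
        (fun i' => Function.update a i ai' i' j)
          = Function.update (fun i' => a i' j) i (ai' j) := by
      intro i ai' j; funext i'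
      by_cases h : i' = i
      · subst h; simp
      · simp [Function.update_of_ne h]
    have step4 : ∀ i : Fin n,
        ∑ j, ∑ b, devj j i (a i j) b *
            (comp i (ℓ i) j (alloc j (Function.update (fun i' => a i' j) i b) i) -
              pay j (Function.update (fun i' => a i' j) i b) i)
          ≤ ∑ ai' : ∀ j, A j i, (∏ j, devj j i (a i j) (ai' j)) *
              (v i (fun j => alloc j (fun i' => Function.update a i ai' i' j) i) -
                ∑ j, pay j (fun i' => Function.update a i ai' i' j) i) := by
      intro i
      simp_rw [hupd i]
      have marg' : ∀ (j : Fin m) (g : A j i → ℝ),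
          ∑ ai' : ∀ k, A k i, (∏ k, devj k i (a i k) (ai' k)) * g (ai' j)
            = ∑ b, devj j i (a i j) b * g b :=
        fun j g => marg_aux (fun k => devj k i (a i k))
          (fun k => (hpmfj k i (a i k)).2) j g
      calc ∑ j, ∑ b, devj j i (a i j) b *
            (comp i (ℓ i) j (alloc j (Function.update (fun i' => a i' j) i b) i) -
              pay j (Function.update (fun i' => a i' j) i b) i)
          = ∑ j, ∑ ai' : ∀ k, A k i, (∏ k, devj k i (a i k) (ai' k)) *
              (comp i (ℓ i) j (alloc j (Function.update (fun i' => a i' j) i (ai' j)) i) -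
                pay j (Function.update (fun i' => a i' j) i (ai' j)) i) :=
            Finset.sum_congr rfl fun j _ => (marg' j _).symm
        _ = ∑ ai' : ∀ k, A k i, ∑ j, (∏ k, devj k i (a i k) (ai' k)) *
              (comp i (ℓ i) j (alloc j (Function.update (fun i' => a i' j) i (ai' j)) i) -
                pay j (Function.update (fun i' => a i' j) i (ai' j)) i) := Finset.sum_comm
        _ = ∑ ai' : ∀ k, A k i, (∏ k, devj k i (a i k) (ai' k)) *
              ∑ j, (comp i (ℓ i) j (alloc j (Function.update (fun i' => a i' j) i (ai' j)) i) -
                pay j (Function.update (fun i' => a i' j) i (ai' j)) i) :=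
            Finset.sum_congr rfl fun ai' _ => (Finset.mul_sum _ _ _).symm
        _ ≤ ∑ ai' : ∀ k, A k i, (∏ k, devj k i (a i k) (ai' k)) *
              (v i (fun j => alloc j (Function.update (fun i' => a i' j) i (ai' j)) i) -
                ∑ j, pay j (Function.update (fun i' => a i' j) i (ai' j)) i) := by
            refine Finset.sum_le_sum fun ai' _ => mul_le_mul_of_nonneg_left ?_
              (Finset.prod_nonneg fun k _ => (hpmfj k i (a i k)).1 _)
            rw [Finset.sum_sub_distrib]
            have := hXOSle i
              (fun j => alloc j (Function.update (fun i' => a i' j) i (ai' j)) i)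
            linarith
    -- put everything together
    calc lam * sSup {r : ℝ | ∃ x : ∀ i, ∀ j, Out j i,
            (∀ j, (fun i => x i j) ∈ feas j) ∧ r = ∑ i, v i (x i)} -
          mu * ∑ i, ∑ j, pay j (fun i' => a i' j) i
        ≤ lam * ∑ j, OPTj j - mu * ∑ i, ∑ j, pay j (fun i' => a i' j) i := by
          have h1 := mul_le_mul_of_nonneg_left (hsup.trans step2) hlam
          linarith
      _ = ∑ j, (lam * OPTj j - mu * ∑ i, pay j (fun i' => a i' j) i) := by
          rw [Finset.sum_sub_distrib, ← Finset.mul_sum, ← Finset.mul_sum, Finset.sum_comm]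
      _ ≤ ∑ j, ∑ i, ∑ b, devj j i (a i j) b *
            (comp i (ℓ i) j (alloc j (Function.update (fun i' => a i' j) i b) i) -
              pay j (Function.update (fun i' => a i' j) i b) i) :=
          Finset.sum_le_sum fun j _ => hdevj j (fun i' => a i' j)
      _ = ∑ i, ∑ j, ∑ b, devj j i (a i j) b *
            (comp i (ℓ i) j (alloc j (Function.update (fun i' => a i' j) i b) i) -
              pay j (Function.update (fun i' => a i' j) i b) i) := Finset.sum_comm
      _ ≤ ∑ i, ∑ ai' : ∀ j, A j i, (∏ j, devj j i (a i j) (ai' j)) *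
            (v i (fun j => alloc j (fun i' => Function.update a i ai' i' j) i) -
              ∑ j, pay j (fun i' => Function.update a i ai' i' j) i) :=
          Finset.sum_le_sum fun i _ => step4 i
end

section
/- Let a finite mechanism be weakly (λ,μ_1,μ_2)-smooth for the valuation profile v (λ, μ_1, μ_2 ≥ 0), let π be a correlated equilibrium for v satisfying the no-overbidding condition Σ_i E_π[B_i(a_i, X_i(a))] ≤ Σ_i E_π[v_i(X_i(a))], and suppose that for every player i, E_π[v_i(X_i(a))] ≥ E_π[P_i(a)]. Then E_π[Σ_i v_i(X_i(a))] ≥ (λ / (μ_2 + max(μ_1, 1))) · OPT(v). -/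
/-- The willingness-to-pay of player `i` with action `ai` for allocation `xi`:
the maximum payment over others' actions consistent with `i` receiving `xi`. -/
noncomputable def WTP {n : ℕ} {A : Fin n → Type*} {Out : Fin n → Type*}
    (alloc : (∀ i, A i) → ∀ i, Out i) (pay : (∀ i, A i) → Fin n → ℝ)
    (i : Fin n) (ai : A i) (xi : Out i) : ℝ :=
  sSup {r : ℝ | ∃ a : ∀ i', A i', a i = ai ∧ alloc a i = xi ∧ r = pay a i}

lemma ce_step {n : ℕ} {A : Fin n → Type*} [∀ i, Fintype (A i)] [∀ i, DecidableEq (A i)]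
    (π : (∀ i, A i) → ℝ) (hπ0 : ∀ a, 0 ≤ π a)
    (i : Fin n) (dev : A i → A i → ℝ) (hdev : ∀ ai, IsPMFOn (dev ai))
    (u : (∀ i', A i') → ℝ)
    (hce : ∀ ai : A i, 0 < (∑ a : ∀ i', A i', if a i = ai then π a else 0) →
      ∀ ai' : A i,
        (∑ a : ∀ i', A i', if a i = ai then π a * u (Function.update a i ai') else 0) ≤
        (∑ a : ∀ i', A i', if a i = ai then π a * u a else 0)) :
    ∑ a : ∀ i', A i', π a * ∑ ai', dev (a i) ai' * u (Function.update a i ai') ≤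
      ∑ a : ∀ i', A i', π a * u a := by
  classical
  have key : ∀ ai ai' : A i,
      (∑ a : ∀ i', A i', if a i = ai then π a * u (Function.update a i ai') else 0) ≤
      (∑ a : ∀ i', A i', if a i = ai then π a * u a else 0) := by
    intro ai ai'
    rcases lt_or_ge 0 (∑ a : ∀ i', A i', if a i = ai then π a else 0) with h | h
    · exact hce ai h ai'
    · have hnn : ∀ a ∈ Finset.univ, (0:ℝ) ≤ if a i = ai then π a else 0 := by
        intro a _; split_ifs; exacts [hπ0 a, le_rfl]
      have hsum : (∑ a : ∀ i', A i', if a i = ai then π a else 0) = 0 :=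
        le_antisymm h (Finset.sum_nonneg hnn)
      have hzero : ∀ a : ∀ i', A i', a i = ai → π a = 0 := by
        intro a ha
        have := (Finset.sum_eq_zero_iff_of_nonneg hnn).mp hsum a (Finset.mem_univ a)
        simpa [ha] using this
      have e1 : (∑ a : ∀ i', A i', if a i = ai then π a * u (Function.update a i ai') else 0) = 0 :=
        Finset.sum_eq_zero fun a _ => by
          split_ifs with h'
          · rw [hzero a h', zero_mul]
          · rfl
      have e2 : (∑ a : ∀ i', A i', if a i = ai then π a * u a else 0) = 0 :=
        Finset.sum_eq_zero fun a _ => by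
          split_ifs with h'
          · rw [hzero a h', zero_mul]
          · rfl
      rw [e1, e2]
  calc ∑ a : ∀ i', A i', π a * ∑ ai', dev (a i) ai' * u (Function.update a i ai')
      = ∑ a : ∀ i', A i', ∑ ai, ∑ ai', if a i = ai then dev ai ai' * (π a * u (Function.update a i ai')) else 0 := by
        refine Finset.sum_congr rfl fun a _ => ?_
        rw [Finset.mul_sum]
        have : ∀ ai : A i, (∑ ai', if a i = ai then dev ai ai' * (π a * u (Function.update a i ai')) else 0)
            = if a i = ai then ∑ ai', dev ai ai' * (π a * u (Function.update a i ai')) else 0 := by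
          intro ai; split_ifs <;> simp
        simp only [this]
        rw [Finset.sum_ite_eq Finset.univ (a i)
          (fun ai => ∑ ai', dev ai ai' * (π a * u (Function.update a i ai')))]
        simp [mul_comm, mul_left_comm]
    _ = ∑ ai, ∑ ai', ∑ a : ∀ i', A i', if a i = ai then dev ai ai' * (π a * u (Function.update a i ai')) else 0 := by
        rw [Finset.sum_comm]
        exact Finset.sum_congr rfl fun ai _ => Finset.sum_comm
    _ = ∑ ai, ∑ ai', dev ai ai' * ∑ a : ∀ i', A i', if a i = ai then π a * u (Function.update a i ai') else 0 := by
        refine Finset.sum_congr rfl fun ai _ => Finset.sum_congr rfl fun ai' _ => ?_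
        rw [Finset.mul_sum]
        exact Finset.sum_congr rfl fun a _ => by split_ifs <;> simp
    _ ≤ ∑ ai, ∑ ai', dev ai ai' * ∑ a : ∀ i', A i', if a i = ai then π a * u a else 0 := by
        refine Finset.sum_le_sum fun ai _ => Finset.sum_le_sum fun ai' _ => ?_
        exact mul_le_mul_of_nonneg_left (key ai ai') ((hdev ai).1 ai')
    _ = ∑ ai, ∑ a : ∀ i', A i', if a i = ai then π a * u a else 0 := by
        refine Finset.sum_congr rfl fun ai _ => ?_
        rw [← Finset.sum_mul, (hdev ai).2, one_mul]
    _ = ∑ a : ∀ i', A i', π a * u a := by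
        rw [Finset.sum_comm]
        refine Finset.sum_congr rfl fun a _ => ?_
        rw [Finset.sum_ite_eq Finset.univ (a i) (fun _ => π a * u a)]
        simp

/-- if a finite mechanism is weakly `(λ,μ₁,μ₂)`-smooth for `v`, `π` is a
correlated equilibrium for `v` satisfying the (aggregate, in-expectation) no-overbidding
condition, and every player's expected value weakly exceeds her expected payment, then the
expected social welfare is at least `(λ / (μ₂ + max μ₁ 1)) · OPT(v)`. -/
theorem stmt_13
    {n : ℕ} {A : Fin n → Type*} [∀ i, Fintype (A i)] [∀ i, Nonempty (A i)]
    [∀ i, DecidableEq (A i)]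
    {Out : Fin n → Type*} [∀ i, Fintype (Out i)] [∀ i, Nonempty (Out i)]
    (feas : Finset (∀ i, Out i)) (hfeas : feas.Nonempty)
    (alloc : (∀ i, A i) → ∀ i, Out i) (halloc : ∀ a, alloc a ∈ feas)
    (pay : (∀ i, A i) → Fin n → ℝ) (hpay : ∀ a i, 0 ≤ pay a i)
    (v : ∀ i, Out i → ℝ) (hv : ∀ i x, 0 ≤ v i x)
    (lam mu1 mu2 : ℝ) (hlam : 0 ≤ lam) (hmu1 : 0 ≤ mu1) (hmu2 : 0 ≤ mu2)
    -- weak smoothness of the mechanism for `v`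
    (dev : ∀ i, A i → A i → ℝ) (hdev : ∀ i ai, IsPMFOn (dev i ai))
    (hsmooth : ∀ a : ∀ i, A i,
      lam * feas.sup' hfeas (fun x => ∑ i, v i (x i)) - mu1 * ∑ i, pay a i -
          mu2 * ∑ i, WTP alloc pay i (a i) (alloc a i) ≤
        ∑ i, ∑ ai', dev i (a i) ai' *
          (v i (alloc (Function.update a i ai') i) - pay (Function.update a i ai') i))
    -- `π` is a correlated equilibrium for `v`
    (π : (∀ i, A i) → ℝ) (hπ : IsPMFOn π)
    (hce : ∀ (i : Fin n) (ai : A i),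
      0 < (∑ a : ∀ i, A i, if a i = ai then π a else 0) →
      ∀ ai' : A i,
        (∑ a : ∀ i, A i, if a i = ai
          then π a * (v i (alloc (Function.update a i ai') i) -
            pay (Function.update a i ai') i)
          else 0) ≤
        (∑ a : ∀ i, A i, if a i = ai
          then π a * (v i (alloc a i) - pay a i) else 0))
    -- no overbidding in expectation
    (hnob : ∑ i, ∑ a, π a * WTP alloc pay i (a i) (alloc a i) ≤
      ∑ i, ∑ a, π a * v i (alloc a i))
    -- players have the option to withdraw
    (hwithdraw : ∀ i, ∑ a, π a * pay a i ≤ ∑ a, π a * v i (alloc a i)) :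
    (lam / (mu2 + max mu1 1)) * feas.sup' hfeas (fun x => ∑ i, v i (x i)) ≤
      ∑ a, π a * ∑ i, v i (alloc a i) := by
  classical
  set OPT := feas.sup' hfeas (fun x => ∑ i, v i (x i)) with hOPT
  set W := ∑ a, π a * ∑ i, v i (alloc a i) with hWdef
  set P := ∑ i, ∑ a, π a * pay a i with hPdef
  set B := ∑ i, ∑ a, π a * WTP alloc pay i (a i) (alloc a i) with hBdef
  have hπ0 := hπ.1
  have hπ1 := hπ.2
  -- W as iterated sum
  have hWeq : W = ∑ i, ∑ a, π a * v i (alloc a i) := by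
    rw [hWdef, Finset.sum_comm]
    exact Finset.sum_congr rfl fun a _ => Finset.mul_sum _ _ _
  have hW0 : 0 ≤ W := by
    rw [hWeq]
    exact Finset.sum_nonneg fun i _ => Finset.sum_nonneg fun a _ =>
      mul_nonneg (hπ0 a) (hv i _)
  have hP0 : 0 ≤ P := Finset.sum_nonneg fun i _ => Finset.sum_nonneg fun a _ =>
    mul_nonneg (hπ0 a) (hpay a i)
  have hPW : P ≤ W := by
    rw [hWeq]; exact Finset.sum_le_sum fun i _ => hwithdraw i
  have hBW : B ≤ W := by rw [hWeq]; exact hnob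
  -- expected smoothness
  have hsm : lam * OPT - mu1 * P - mu2 * B ≤ W - P := by
    have step1 : ∑ a, π a * (lam * OPT - mu1 * ∑ i, pay a i -
        mu2 * ∑ i, WTP alloc pay i (a i) (alloc a i)) ≤
        ∑ a, π a * ∑ i, ∑ ai', dev i (a i) ai' *
          (v i (alloc (Function.update a i ai') i) - pay (Function.update a i ai') i) :=
      Finset.sum_le_sum fun a _ => mul_le_mul_of_nonneg_left (hsmooth a) (hπ0 a)
    have lhs_eq : ∑ a, π a * (lam * OPT - mu1 * ∑ i, pay a i -
        mu2 * ∑ i, WTP alloc pay i (a i) (alloc a i)) =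
        lam * OPT - mu1 * P - mu2 * B := by
      have e1 : ∑ a, π a * (lam * OPT) = lam * OPT := by
        rw [← Finset.sum_mul, hπ1, one_mul]
      have e2 : ∑ a, π a * (mu1 * ∑ i, pay a i) = mu1 * P := by
        calc ∑ a, π a * (mu1 * ∑ i, pay a i)
            = ∑ a, ∑ i, mu1 * (π a * pay a i) := by
              refine Finset.sum_congr rfl fun a _ => ?_
              rw [Finset.mul_sum, Finset.mul_sum]
              exact Finset.sum_congr rfl fun i _ => by ring
          _ = ∑ i, ∑ a, mu1 * (π a * pay a i) := Finset.sum_comm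
          _ = mu1 * P := by
              rw [hPdef, Finset.mul_sum]
              exact Finset.sum_congr rfl fun i _ => (Finset.mul_sum _ _ _).symm
      have e3 : ∑ a, π a * (mu2 * ∑ i, WTP alloc pay i (a i) (alloc a i)) = mu2 * B := by
        calc ∑ a, π a * (mu2 * ∑ i, WTP alloc pay i (a i) (alloc a i))
            = ∑ a, ∑ i, mu2 * (π a * WTP alloc pay i (a i) (alloc a i)) := by
              refine Finset.sum_congr rfl fun a _ => ?_
              rw [Finset.mul_sum, Finset.mul_sum]
              exact Finset.sum_congr rfl fun i _ => by ring
          _ = ∑ i, ∑ a, mu2 * (π a * WTP alloc pay i (a i) (alloc a i)) := Finset.sum_comm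
          _ = mu2 * B := by
              rw [hBdef, Finset.mul_sum]
              exact Finset.sum_congr rfl fun i _ => (Finset.mul_sum _ _ _).symm
      calc ∑ a, π a * (lam * OPT - mu1 * ∑ i, pay a i -
            mu2 * ∑ i, WTP alloc pay i (a i) (alloc a i))
          = ∑ a, (π a * (lam * OPT) - π a * (mu1 * ∑ i, pay a i) -
              π a * (mu2 * ∑ i, WTP alloc pay i (a i) (alloc a i))) := by
            exact Finset.sum_congr rfl fun a _ => by ring
        _ = lam * OPT - mu1 * P - mu2 * B := by
            rw [Finset.sum_sub_distrib, Finset.sum_sub_distrib, e1, e2, e3]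
    have rhs_le : ∑ a, π a * ∑ i, ∑ ai', dev i (a i) ai' *
          (v i (alloc (Function.update a i ai') i) - pay (Function.update a i ai') i) ≤
        W - P := by
      have swap : ∑ a, π a * ∑ i, ∑ ai', dev i (a i) ai' *
            (v i (alloc (Function.update a i ai') i) - pay (Function.update a i ai') i)
          = ∑ i, ∑ a, π a * ∑ ai', dev i (a i) ai' *
            (v i (alloc (Function.update a i ai') i) - pay (Function.update a i ai') i) := by
        rw [Finset.sum_comm]
        exact Finset.sum_congr rfl fun a _ => Finset.mul_sum _ _ _
      rw [swap]
      have hstep : ∀ i : Fin n, ∑ a, π a * ∑ ai', dev i (a i) ai' *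
            (v i (alloc (Function.update a i ai') i) - pay (Function.update a i ai') i) ≤
          ∑ a, π a * (v i (alloc a i) - pay a i) := fun i =>
        ce_step π hπ0 i (dev i) (hdev i) (fun a => v i (alloc a i) - pay a i) (hce i)
      calc ∑ i, ∑ a, π a * ∑ ai', dev i (a i) ai' *
            (v i (alloc (Function.update a i ai') i) - pay (Function.update a i ai') i)
          ≤ ∑ i, ∑ a, π a * (v i (alloc a i) - pay a i) :=
            Finset.sum_le_sum fun i _ => hstep i
        _ = W - P := by
            rw [hWeq, hPdef, ← Finset.sum_sub_distrib]
            refine Finset.sum_congr rfl fun i _ => ?_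
            rw [← Finset.sum_sub_distrib]
            exact Finset.sum_congr rfl fun a _ => by ring
    linarith [lhs_eq ▸ step1, rhs_le, le_trans step1 rhs_le]
  -- combine
  have hc1 : (1:ℝ) ≤ max mu1 1 := le_max_right _ _
  have hc : 0 < mu2 + max mu1 1 := by linarith
  have hfinal : lam * OPT ≤ (mu2 + max mu1 1) * W := by
    rcases le_total mu1 1 with h | h
    · rw [max_eq_right h]; nlinarith
    · rw [max_eq_left h]; nlinarith
  rw [div_mul_eq_mul_div, div_le_iff₀ hc]
  calc lam * OPT ≤ (mu2 + max mu1 1) * W := hfinal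
    _ = W * (mu2 + max mu1 1) := mul_comm _ _
end

section
/- Consider the simultaneous composition of m finite mechanisms M^1,…,M^m for n players, and let λ, μ_1, μ_2 ≥ 0. Suppose that for every j ∈ {1,…,m}, mechanism M^j is weakly (λ,μ_1,μ_2)-smooth for every valuation profile (w_1,…,w_n) with w_i ∈ 𝒱_i^j, and suppose that each player's global valuation v_i : Π_j 𝒳_i^j → ℝ is XOS with components in (𝒱_i^j)_j. Then the simultaneous composition is weakly (λ,μ_1,μ_2)-smooth for the profile v = (v_1,…,v_n). (In particular the willingness-to-pay is additive across component mechanisms: B_i(a_i, x_i) = Σ_j B_i^j(a_i^j, x_i^j).) -/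
section Aux

variable {n : ℕ} {A : Fin n → Type*} {Out : Fin n → Type*} [∀ i, Fintype (A i)]

lemma wtpSet_finite (alloc : (∀ i, A i) → ∀ i, Out i) (pay : (∀ i, A i) → Fin n → ℝ)
    (i : Fin n) (ai : A i) (xi : Out i) :
    {r : ℝ | ∃ a : ∀ i', A i', a i = ai ∧ alloc a i = xi ∧ r = pay a i}.Finite :=
  Set.Finite.subset (Set.finite_range (fun a => pay a i))
    (by rintro r ⟨a, _, _, rfl⟩; exact ⟨a, rfl⟩)

lemma pay_le_WTP (alloc : (∀ i, A i) → ∀ i, Out i) (pay : (∀ i, A i) → Fin n → ℝ)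
    (i : Fin n) (a b : ∀ i, A i) (hbi : b i = a i) (hba : alloc b i = alloc a i) :
    pay b i ≤ WTP alloc pay i (a i) (alloc a i) :=
  le_csSup (wtpSet_finite alloc pay i (a i) (alloc a i)).bddAbove ⟨b, hbi, hba, rfl⟩

lemma WTP_mem (alloc : (∀ i, A i) → ∀ i, Out i) (pay : (∀ i, A i) → Fin n → ℝ)
    (i : Fin n) (a : ∀ i, A i) :
    ∃ b : ∀ i, A i, b i = a i ∧ alloc b i = alloc a i ∧
      WTP alloc pay i (a i) (alloc a i) = pay b i := by
  have h := Set.Nonempty.csSup_mem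
    (s := {r : ℝ | ∃ b : ∀ i', A i', b i = a i ∧ alloc b i = alloc a i ∧ r = pay b i})
    ⟨pay a i, a, rfl, rfl, rfl⟩ (wtpSet_finite alloc pay i (a i) (alloc a i))
  obtain ⟨b, hb1, hb2, hb3⟩ := h
  exact ⟨b, hb1, hb2, hb3⟩

end Aux

lemma marg {m : ℕ} {β : Fin m → Type*} [∀ j, Fintype (β j)] (p : ∀ j, β j → ℝ)
    (hp : ∀ j, ∑ x, p j x = 1) (j : Fin m) (f : β j → ℝ) :
    ∑ t : ∀ j', β j', (∏ j', p j' (t j')) * f (t j) = ∑ x, p j x * f x := by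
  have key : ∀ t : ∀ j', β j', (∏ j', p j' (t j')) * f (t j)
      = ∏ j', Function.update p j (fun x => p j x * f x) j' (t j') := by
    intro t
    rw [← Finset.mul_prod_erase Finset.univ (fun j' => p j' (t j')) (Finset.mem_univ j),
        ← Finset.mul_prod_erase Finset.univ
          (fun j' => Function.update p j (fun x => p j x * f x) j' (t j')) (Finset.mem_univ j)]
    have h2 : ∀ j' ∈ Finset.univ.erase j,
        Function.update p j (fun x => p j x * f x) j' (t j') = p j' (t j') := by
      intro j' hj'
      rw [Function.update_of_ne (Finset.mem_erase.1 hj').1]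
    rw [Finset.prod_congr rfl h2, Function.update_self]
    ring
  simp_rw [key]
  rw [← Fintype.prod_sum]
  rw [← Finset.mul_prod_erase Finset.univ
      (fun j' => ∑ x, Function.update p j (fun x => p j x * f x) j' x) (Finset.mem_univ j)]
  have h2 : ∀ j' ∈ Finset.univ.erase j,
      (∑ x, Function.update p j (fun x => p j x * f x) j' x) = 1 := by
    intro j' hj'
    have hx : ∀ x, Function.update p j (fun x => p j x * f x) j' x = p j' x := by
      intro x; rw [Function.update_of_ne (Finset.mem_erase.1 hj').1]
    rw [Finset.sum_congr rfl (fun x _ => hx x), hp]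
  rw [Finset.prod_congr rfl h2, Function.update_self]
  simp

lemma wtp_additive {n m : ℕ} {A : Fin m → Fin n → Type*} [∀ j i, Fintype (A j i)]
    {Out : Fin m → Fin n → Type*}
    (alloc : ∀ j, (∀ i, A j i) → ∀ i, Out j i) (pay : ∀ j, (∀ i, A j i) → Fin n → ℝ)
    (a : ∀ i, ∀ j, A j i) (i : Fin n) :
    WTP (fun (b : ∀ i', ∀ j, A j i') i => fun j => alloc j (fun i' => b i' j) i)
        (fun (b : ∀ i', ∀ j, A j i') i => ∑ j, pay j (fun i' => b i' j) i) i (a i)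
        (fun j => alloc j (fun i' => a i' j) i) =
      ∑ j, WTP (alloc j) (pay j) i (a i j) (alloc j (fun i' => a i' j) i) := by
  apply le_antisymm
  · unfold WTP
    refine csSup_le ⟨∑ j, pay j (fun i' => a i' j) i, ?_⟩ ?_
    · exact ⟨a, rfl, rfl, rfl⟩
    rintro r ⟨b, hbi, hball, rfl⟩
    have hball' : ∀ j, alloc j (fun i' => b i' j) i = alloc j (fun i' => a i' j) i :=
      fun j => congrFun hball j
    exact Finset.sum_le_sum fun j _ =>
      pay_le_WTP (alloc j) (pay j) i (fun i' => a i' j) (fun i' => b i' j)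
        (congrFun hbi j) (hball' j)
  · choose c hc1 hc2 hc3 using fun j => WTP_mem (alloc j) (pay j) i (fun i' => a i' j)
    have heq : ∑ j, WTP (alloc j) (pay j) i (a i j) (alloc j (fun i' => a i' j) i)
        = ∑ j, pay j (fun i' => c j i') i :=
      Finset.sum_congr rfl fun j _ => hc3 j
    rw [heq]
    apply le_csSup (wtpSet_finite _ _ _ _ _).bddAbove
    exact ⟨fun i' j => c j i', funext fun j => hc1 j, funext fun j => hc2 j, rfl⟩

/-- if each of `m` finite mechanisms is weakly `(λ,μ₁,μ₂)`-smooth for every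
valuation profile from the classes `V i j`, and each player's global valuation is XOS with
components in those classes, then the simultaneous composition is weakly `(λ,μ₁,μ₂)`-smooth
for the global profile; moreover, at any realized allocation the willingness-to-pay is
additive across the component mechanisms. -/
theorem stmt_14
    {n m : ℕ}
    {A : Fin m → Fin n → Type*} [∀ j i, Fintype (A j i)] [∀ j i, Nonempty (A j i)]
    {Out : Fin m → Fin n → Type*} [∀ j i, Fintype (Out j i)] [∀ j i, Nonempty (Out j i)]
    (feas : ∀ j, Finset (∀ i, Out j i)) (hfeas : ∀ j, (feas j).Nonempty)
    (alloc : ∀ j, (∀ i, A j i) → ∀ i, Out j i) (halloc : ∀ j a, alloc j a ∈ feas j)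
    (pay : ∀ j, (∀ i, A j i) → Fin n → ℝ) (hpay : ∀ j a i, 0 ≤ pay j a i)
    (lam mu1 mu2 : ℝ) (hlam : 0 ≤ lam) (hmu1 : 0 ≤ mu1) (hmu2 : 0 ≤ mu2)
    -- valuation classes: sets of nonnegative mechanism-restricted valuations
    (V : ∀ i j, Set (Out j i → ℝ)) (hV : ∀ i j w, w ∈ V i j → ∀ x, 0 ≤ w x)
    -- every component mechanism is weakly `(λ,μ₁,μ₂)`-smooth for profiles from the classes
    (hsmooth : ∀ (j : Fin m) (w : ∀ i, Out j i → ℝ), (∀ i, w i ∈ V i j) →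
      ∃ dev : ∀ i, A j i → A j i → ℝ,
        (∀ i ai, IsPMFOn (dev i ai)) ∧
        ∀ a : ∀ i, A j i,
          lam * (feas j).sup' (hfeas j) (fun x => ∑ i, w i (x i)) -
              mu1 * ∑ i, pay j a i -
              mu2 * ∑ i, WTP (alloc j) (pay j) i (a i) (alloc j a i) ≤
            ∑ i, ∑ ai', dev i (a i) ai' *
              (w i (alloc j (Function.update a i ai') i) -
                pay j (Function.update a i ai') i))
    -- global valuations: nonnegative and XOS with components in the classes
    (v : ∀ i, (∀ j, Out j i) → ℝ) (hvnn : ∀ i xi, 0 ≤ v i xi)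
    (hXOS : ∀ i, ∃ (K : ℕ) (comp : Fin (K + 1) → ∀ j, Out j i → ℝ),
      (∀ ℓ j, comp ℓ j ∈ V i j) ∧
      ∀ xi : ∀ j, Out j i,
        v i xi = Finset.univ.sup' Finset.univ_nonempty fun ℓ => ∑ j, comp ℓ j (xi j)) :
    -- conclusion: the simultaneous composition is weakly `(λ,μ₁,μ₂)`-smooth for `v` ...
    (∃ dev : ∀ i, (∀ j, A j i) → (∀ j, A j i) → ℝ,
      (∀ i ai, IsPMFOn (dev i ai)) ∧
      ∀ a : ∀ i, ∀ j, A j i,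
        lam * sSup {r : ℝ | ∃ x : ∀ i, ∀ j, Out j i,
            (∀ j, (fun i => x i j) ∈ feas j) ∧ r = ∑ i, v i (x i)} -
            mu1 * ∑ i, ∑ j, pay j (fun i' => a i' j) i -
            mu2 * ∑ i, WTP (fun (b : ∀ i', ∀ j, A j i') i => fun j => alloc j (fun i' => b i' j) i)
              (fun (b : ∀ i', ∀ j, A j i') i => ∑ j, pay j (fun i' => b i' j) i) i (a i)
              (fun j => alloc j (fun i' => a i' j) i) ≤
          ∑ i, ∑ ai' : ∀ j, A j i, dev i (a i) ai' *
            (v i (fun j => alloc j (fun i' => Function.update a i ai' i' j) i) -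
              ∑ j, pay j (fun i' => Function.update a i ai' i' j) i)) ∧
    -- ... and willingness-to-pay is additive across component mechanisms
    (∀ (a : ∀ i, ∀ j, A j i) (i : Fin n),
      WTP (fun (b : ∀ i', ∀ j, A j i') i => fun j => alloc j (fun i' => b i' j) i)
          (fun (b : ∀ i', ∀ j, A j i') i => ∑ j, pay j (fun i' => b i' j) i) i (a i)
          (fun j => alloc j (fun i' => a i' j) i) =
        ∑ j, WTP (alloc j) (pay j) i (a i j) (alloc j (fun i' => a i' j) i)) := by
  have hadd := wtp_additive alloc pay
  refine ⟨?_, hadd⟩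
  -- set up OPT
  set S := {r : ℝ | ∃ x : ∀ i, ∀ j, Out j i,
      (∀ j, (fun i => x i j) ∈ feas j) ∧ r = ∑ i, v i (x i)} with hSdef
  have hSne : S.Nonempty := by
    choose y hy using fun j => hfeas j
    exact ⟨∑ i, v i (fun j => y j i), fun i j => y j i, fun j => hy j, rfl⟩
  have hSfin : S.Finite :=
    Set.Finite.subset (Set.finite_range fun x : ∀ i, ∀ j, Out j i => ∑ i, v i (x i))
      (by rintro r ⟨x, _, rfl⟩; exact ⟨x, rfl⟩)
  obtain ⟨xstar, hxfeas, hxval⟩ := hSne.csSup_mem hSfin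
  -- XOS components
  choose K comp hcV hcEq using hXOS
  have hℓ : ∀ i, ∃ ℓ : Fin (K i + 1), v i (xstar i) = ∑ j, comp i ℓ j (xstar i j) := by
    intro i
    obtain ⟨ℓ, _, hℓ⟩ := Finset.exists_mem_eq_sup' (Finset.univ_nonempty)
      (fun ℓ : Fin (K i + 1) => ∑ j, comp i ℓ j (xstar i j))
    exact ⟨ℓ, (hcEq i (xstar i)).trans hℓ⟩
  choose ℓ hℓv using hℓ
  -- component deviations
  choose devj hpmf hineq using fun j => hsmooth j (fun i => comp i (ℓ i) j)
    (fun i => hcV i (ℓ i) j)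
  refine ⟨fun i ai ai' => ∏ j, devj j i (ai j) (ai' j), ?_, ?_⟩
  · intro i ai
    constructor
    · intro ai'; exact Finset.prod_nonneg fun j _ => (hpmf j i (ai j)).1 (ai' j)
    · rw [← Fintype.prod_sum]
      exact Finset.prod_eq_one fun j _ => (hpmf j i (ai j)).2
  intro a
  have col : ∀ (i : Fin n) (ai' : ∀ j, A j i) (j : Fin m),
      (fun i' => Function.update a i ai' i' j) = Function.update (fun i' => a i' j) i (ai' j) := by
    intro i ai' j; funext i'
    rcases eq_or_ne i' i with rfl | h
    · simp
    · simp [h]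
  have step1 : ∀ i : Fin n,
      ∑ j, ∑ x, devj j i (a i j) x *
          (comp i (ℓ i) j (alloc j (Function.update (fun i' => a i' j) i x) i) -
            pay j (Function.update (fun i' => a i' j) i x) i)
      ≤ ∑ ai' : ∀ j, A j i, (∏ j, devj j i (a i j) (ai' j)) *
          (v i (fun j => alloc j (fun i' => Function.update a i ai' i' j) i) -
            ∑ j, pay j (fun i' => Function.update a i ai' i' j) i) := by
    intro i
    simp only [col]
    calc ∑ j, ∑ x, devj j i (a i j) x *
          (comp i (ℓ i) j (alloc j (Function.update (fun i' => a i' j) i x) i) -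
            pay j (Function.update (fun i' => a i' j) i x) i)
        = ∑ j, ∑ ai' : ∀ j', A j' i, (∏ j', devj j' i (a i j') (ai' j')) *
            (comp i (ℓ i) j (alloc j (Function.update (fun i' => a i' j) i (ai' j)) i) -
              pay j (Function.update (fun i' => a i' j) i (ai' j)) i) :=
          Finset.sum_congr rfl fun j _ =>
            (marg (fun j' => devj j' i (a i j')) (fun j' => (hpmf j' i (a i j')).2) j
              (fun x => comp i (ℓ i) j (alloc j (Function.update (fun i' => a i' j) i x) i) -
                pay j (Function.update (fun i' => a i' j) i x) i)).symm
      _ = ∑ ai' : ∀ j', A j' i, (∏ j', devj j' i (a i j') (ai' j')) *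
            ∑ j, (comp i (ℓ i) j (alloc j (Function.update (fun i' => a i' j) i (ai' j)) i) -
              pay j (Function.update (fun i' => a i' j) i (ai' j)) i) := by
          rw [Finset.sum_comm]
          exact Finset.sum_congr rfl fun ai' _ => (Finset.mul_sum _ _ _).symm
      _ ≤ _ := by
          refine Finset.sum_le_sum fun ai' _ => mul_le_mul_of_nonneg_left ?_
            (Finset.prod_nonneg fun j _ => (hpmf j i (a i j)).1 (ai' j))
          rw [Finset.sum_sub_distrib]
          refine sub_le_sub_right ?_ _
          rw [hcEq i (fun j => alloc j (Function.update (fun i' => a i' j) i (ai' j)) i)]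
          exact Finset.le_sup' (fun ℓ' => ∑ j, comp i ℓ' j
            (alloc j (Function.update (fun i' => a i' j) i (ai' j)) i)) (Finset.mem_univ (ℓ i))
  have step2 : lam * ∑ j, (feas j).sup' (hfeas j) (fun x => ∑ i, comp i (ℓ i) j (x i)) -
      mu1 * ∑ j, ∑ i, pay j (fun i' => a i' j) i -
      mu2 * ∑ j, ∑ i, WTP (alloc j) (pay j) i (a i j) (alloc j (fun i' => a i' j) i) ≤
      ∑ j, ∑ i, ∑ x, devj j i (a i j) x *
          (comp i (ℓ i) j (alloc j (Function.update (fun i' => a i' j) i x) i) -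
            pay j (Function.update (fun i' => a i' j) i x) i) := by
    rw [Finset.mul_sum, Finset.mul_sum, Finset.mul_sum, ← Finset.sum_sub_distrib,
        ← Finset.sum_sub_distrib]
    exact Finset.sum_le_sum fun j _ => hineq j (fun i' => a i' j)
  have hopt : sSup S ≤ ∑ j, (feas j).sup' (hfeas j) (fun x => ∑ i, comp i (ℓ i) j (x i)) := by
    rw [hxval]
    calc ∑ i, v i (xstar i) = ∑ i, ∑ j, comp i (ℓ i) j (xstar i j) :=
          Finset.sum_congr rfl fun i _ => hℓv i
      _ = ∑ j, ∑ i, comp i (ℓ i) j (xstar i j) := Finset.sum_comm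
      _ ≤ _ := Finset.sum_le_sum fun j _ =>
          Finset.le_sup' (fun x => ∑ i, comp i (ℓ i) j (x i)) (hxfeas j)
  calc lam * sSup S - mu1 * ∑ i, ∑ j, pay j (fun i' => a i' j) i -
        mu2 * ∑ i, WTP (fun (b : ∀ i', ∀ j, A j i') i => fun j => alloc j (fun i' => b i' j) i)
          (fun (b : ∀ i', ∀ j, A j i') i => ∑ j, pay j (fun i' => b i' j) i) i (a i)
          (fun j => alloc j (fun i' => a i' j) i)
      ≤ lam * ∑ j, (feas j).sup' (hfeas j) (fun x => ∑ i, comp i (ℓ i) j (x i)) -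
        mu1 * ∑ j, ∑ i, pay j (fun i' => a i' j) i -
        mu2 * ∑ j, ∑ i, WTP (alloc j) (pay j) i (a i j) (alloc j (fun i' => a i' j) i) := by
        have h1 : ∑ i, ∑ j, pay j (fun i' => a i' j) i = ∑ j, ∑ i, pay j (fun i' => a i' j) i :=
          Finset.sum_comm
        have h2 : ∑ i, WTP (fun (b : ∀ i', ∀ j, A j i') i => fun j => alloc j (fun i' => b i' j) i)
            (fun (b : ∀ i', ∀ j, A j i') i => ∑ j, pay j (fun i' => b i' j) i) i (a i)
            (fun j => alloc j (fun i' => a i' j) i)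
            = ∑ j, ∑ i, WTP (alloc j) (pay j) i (a i j) (alloc j (fun i' => a i' j) i) := by
          rw [Finset.sum_congr rfl fun i _ => hadd a i]
          exact Finset.sum_comm
        rw [h1, h2]
        exact sub_le_sub_right (sub_le_sub_right (mul_le_mul_of_nonneg_left hopt hlam) _) _
    _ ≤ ∑ j, ∑ i, ∑ x, devj j i (a i j) x *
          (comp i (ℓ i) j (alloc j (Function.update (fun i' => a i' j) i x) i) -
            pay j (Function.update (fun i' => a i' j) i x) i) := step2
    _ = ∑ i, ∑ j, ∑ x, devj j i (a i j) x *
          (comp i (ℓ i) j (alloc j (Function.update (fun i' => a i' j) i x) i) -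
            pay j (Function.update (fun i' => a i' j) i x) i) := Finset.sum_comm
    _ ≤ _ := Finset.sum_le_sum fun i _ => step1 i
end

section
/- (The first-price single-item auction is conservatively (1 − 1/e, 1)-smooth.) For every n ≥ 1, every value profile v ∈ [0,∞)^n and every bid profile b ∈ [0,∞)^n, there exist Borel probability measures σ_1,…,σ_n on [0,∞), each σ_i supported on [0, v_i] (i.e. σ_i([0, v_i]) = 1), such that Σ_{i=1}^n ∫ u_i^{v_i}(b_{−i}; t) dσ_i(t) ≥ (1 − 1/e) · max_i v_i − max_i b_i. -/
open MeasureTheory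

/-- The least index maximizing `f` (tie-breaking rule of the auctions). -/
noncomputable def argmaxLeast {n : ℕ} (f : Fin (n + 1) → ℝ) : Fin (n + 1) :=
  (Finset.univ.filter fun i => ∀ j, f j ≤ f i).min' (by
    obtain ⟨i, -, hi⟩ := Finset.exists_max_image (Finset.univ : Finset (Fin (n + 1))) f
      Finset.univ_nonempty
    exact ⟨i, Finset.mem_filter.mpr ⟨Finset.mem_univ i, fun j => hi j (Finset.mem_univ j)⟩⟩)

lemma argmax_update_eq {n : ℕ} (b : Fin (n + 1) → ℝ) (i : Fin (n + 1)) (t : ℝ)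
    (h : ∀ j, j ≠ i → b j < t) : argmaxLeast (Function.update b i t) = i := by
  have hmem : argmaxLeast (Function.update b i t) ∈
      Finset.univ.filter fun j => ∀ k, Function.update b i t k ≤ Function.update b i t j := by
    unfold argmaxLeast
    exact Finset.min'_mem _ _
  have hset : (Finset.univ.filter fun j => ∀ k,
      Function.update b i t k ≤ Function.update b i t j) = {i} := by
    ext j
    simp only [Finset.mem_filter, Finset.mem_univ, true_and, Finset.mem_singleton]
    constructor
    · intro hj
      by_contra hne
      have := hj i
      rw [Function.update_self, Function.update_of_ne hne] at this
      exact absurd this (not_le.mpr (h j hne))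
    · rintro rfl k
      rcases eq_or_ne k j with rfl | hk
      · exact le_refl _
      · rw [Function.update_self, Function.update_of_ne hk]
        exact (h k hk).le
  rw [hset] at hmem
  exact Finset.mem_singleton.mp hmem

/-- the first-price single-item auction is conservatively `(1 − 1/e, 1)`-smooth:
there are randomized deviations `σ i` supported on `[0, v i]` whose total deviation utility is
at least `(1 − 1/e)·max_i v_i − max_i b_i`. -/
theorem stmt_15 (n : ℕ) (v b : Fin (n + 1) → ℝ)
    (hv : ∀ i, 0 ≤ v i) (hb : ∀ i, 0 ≤ b i) :
    ∃ σ : Fin (n + 1) → Measure ℝ,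
      (∀ i, IsProbabilityMeasure (σ i)) ∧
      (∀ i, σ i (Set.Icc 0 (v i)) = 1) ∧
      (1 - Real.exp (-1)) * Finset.univ.sup' Finset.univ_nonempty v -
          Finset.univ.sup' Finset.univ_nonempty b ≤
        ∑ i, ∫ t,
          (if argmaxLeast (Function.update b i t) = i then v i - t else 0) ∂(σ i) := by
  set V := Finset.univ.sup' Finset.univ_nonempty v with hV
  set B := Finset.univ.sup' Finset.univ_nonempty b with hB
  have hV0 : 0 ≤ V := le_trans (hv 0) (Finset.le_sup' v (Finset.mem_univ 0))
  have hB0 : 0 ≤ B := le_trans (hb 0) (Finset.le_sup' b (Finset.mem_univ 0))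
  have hbB : ∀ j, b j ≤ B := fun j => Finset.le_sup' b (Finset.mem_univ j)
  have he : 0 < Real.exp (-1) := Real.exp_pos _
  have he1 : Real.exp (-1) < 1 := by
    rw [Real.exp_lt_one_iff]; norm_num
  -- a generic bound for terms with dirac 0
  have hzero : ∀ i : Fin (n + 1),
      0 ≤ ∫ t, (if argmaxLeast (Function.update b i t) = i then v i - t else 0)
        ∂(Measure.dirac 0) := by
    intro i
    rw [integral_dirac]
    split
    · simpa using hv i
    · exact le_refl 0
  by_cases hc : (1 - Real.exp (-1)) * V ≤ B
  · refine ⟨fun _ => Measure.dirac 0, fun i => by infer_instance, fun i =>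
      Measure.dirac_apply_of_mem ⟨le_refl 0, hv i⟩, ?_⟩
    have : (1 - Real.exp (-1)) * V - B ≤ 0 := by linarith
    exact le_trans this (Finset.sum_nonneg fun i _ => hzero i)
  · push_neg at hc
    have hVpos : 0 < V := by
      by_contra h
      push_neg at h
      nlinarith
    obtain ⟨istar, -, histar⟩ := Finset.exists_mem_eq_sup' Finset.univ_nonempty v
    have hvi : v istar = V := histar.symm
    set t0 : ℝ := B + Real.exp (-1) * V with ht0
    have ht0win : ∀ j, j ≠ istar → b j < t0 := by
      intro j _
      have := hbB j
      nlinarith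
    have hwin : argmaxLeast (Function.update b istar t0) = istar := argmax_update_eq b istar t0 ht0win
    refine ⟨Function.update (fun _ => Measure.dirac 0) istar (Measure.dirac t0),
      ?_, ?_, ?_⟩
    · intro i
      rcases eq_or_ne i istar with rfl | hne
      · rw [Function.update_self]; infer_instance
      · rw [Function.update_of_ne hne]; infer_instance
    · intro i
      rcases eq_or_ne i istar with rfl | hne
      · rw [Function.update_self]
        refine Measure.dirac_apply_of_mem ⟨by positivity, ?_⟩
        rw [hvi]; nlinarith
      · rw [Function.update_of_ne hne]
        exact Measure.dirac_apply_of_mem ⟨le_refl 0, hv i⟩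
    · have hterm : (1 - Real.exp (-1)) * V - B =
          ∫ t, (if argmaxLeast (Function.update b istar t) = istar then v istar - t else 0)
            ∂(Function.update (fun _ => Measure.dirac 0) istar (Measure.dirac t0) istar) := by
        rw [Function.update_self, integral_dirac, if_pos hwin, hvi]
        ring
      rw [hterm]
      refine Finset.single_le_sum (f := fun i => ∫ t,
        (if argmaxLeast (Function.update b i t) = i then v i - t else 0)
          ∂(Function.update (fun _ => Measure.dirac 0) istar (Measure.dirac t0) i))
        (fun i _ => ?_) (Finset.mem_univ istar)
      rcases eq_or_ne i istar with rfl | hne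
      · rw [Function.update_self, integral_dirac, if_pos hwin, hvi]
        nlinarith
      · rw [Function.update_of_ne hne]
        exact hzero i
end

section
/- (The all-pay single-item auction is conservatively (1/2, 1)-smooth.) For every n ≥ 1, every value profile v ∈ [0,∞)^n and every bid profile b ∈ [0,∞)^n, there exist Borel probability measures σ_1,…,σ_n on [0,∞), each σ_i supported on [0, v_i], such that Σ_{i=1}^n ∫ u_i^{v_i}(b_{−i}; t) dσ_i(t) ≥ (1/2) · max_i v_i − Σ_{i=1}^n b_i. -/
open MeasureTheory

lemma argmaxLeast_eq_of_strict {n : ℕ} (f : Fin (n + 1) → ℝ) (i : Fin (n + 1))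
    (h : ∀ j, j ≠ i → f j < f i) : argmaxLeast f = i := by
  unfold argmaxLeast
  have hset : (Finset.univ.filter fun j => ∀ k, f k ≤ f j) = {i} := by
    ext j
    simp only [Finset.mem_filter, Finset.mem_univ, true_and, Finset.mem_singleton]
    constructor
    · intro hj
      by_contra hne
      exact absurd (hj i) (not_le.mpr (h j hne))
    · rintro rfl k
      rcases eq_or_ne k j with rfl | hk
      · exact le_refl _
      · exact (h k hk).le
  simp [hset]

/-- the all-pay single-item auction is conservatively `(1/2, 1)`-smooth:
there are randomized deviations `σ i` supported on `[0, v i]` whose total deviation utility is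
at least `(1/2)·max_i v_i − Σ_i b_i`. -/
theorem stmt_16 (n : ℕ) (v b : Fin (n + 1) → ℝ)
    (hv : ∀ i, 0 ≤ v i) (hb : ∀ i, 0 ≤ b i) :
    ∃ σ : Fin (n + 1) → Measure ℝ,
      (∀ i, IsProbabilityMeasure (σ i)) ∧
      (∀ i, σ i (Set.Icc 0 (v i)) = 1) ∧
      (1 / 2) * Finset.univ.sup' Finset.univ_nonempty v - ∑ i, b i ≤
        ∑ i, ∫ t,
          ((if argmaxLeast (Function.update b i t) = i then v i else 0) - t) ∂(σ i) := by
  obtain ⟨i₀, -, hi₀⟩ := Finset.exists_mem_eq_sup' (Finset.univ_nonempty) v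
  set V : ℝ := Finset.univ.sup' Finset.univ_nonempty v with hVdef
  set S : ℝ := ∑ i, b i with hSdef
  set M : ℝ := S - b i₀ with hMdef
  have hS0 : 0 ≤ S := Finset.sum_nonneg fun i _ => hb i
  have hV0 : 0 ≤ V := hi₀ ▸ hv i₀
  have hM0 : 0 ≤ M := by
    have : b i₀ ≤ S := Finset.single_le_sum (fun i _ => hb i) (Finset.mem_univ i₀)
    simp [hMdef]; linarith
  have hbM : ∀ j, j ≠ i₀ → b j ≤ M := by
    intro j hj
    have h1 : b j + b i₀ ≤ S := by
      have := Finset.add_sum_erase Finset.univ b (Finset.mem_univ i₀)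
      have h2 : b j ≤ ∑ k ∈ Finset.univ.erase i₀, b k :=
        Finset.single_le_sum (fun i _ => hb i) (Finset.mem_erase.mpr ⟨hj, Finset.mem_univ j⟩)
      rw [hSdef, ← this]; linarith
    simp [hMdef]; linarith
  have hMS : M ≤ S := by simp [hMdef]; linarith [hb i₀]
  by_cases hcase : M < V ∧ 0 < V
  · obtain ⟨hMV, hVpos⟩ := hcase
    set t₀ : ℝ := min V (V / 2 + M) with ht₀def
    have ht₀0 : 0 ≤ t₀ := le_min hV0 (by linarith)
    have ht₀V : t₀ ≤ V := min_le_left _ _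
    have hMt₀ : M < t₀ := lt_min hMV (by linarith)
    refine ⟨fun i => Measure.dirac (if i = i₀ then t₀ else 0), fun i => ?_, fun i => ?_, ?_⟩
    · infer_instance
    · rcases eq_or_ne i i₀ with rfl | hi
      · simp only [if_pos rfl]
        rw [Measure.dirac_apply_of_mem]
        exact ⟨ht₀0, by rw [← hi₀]; exact ht₀V⟩
      · simp only [if_neg hi]
        rw [Measure.dirac_apply_of_mem]
        exact ⟨le_refl _, hv i⟩
    · have hint : ∀ i : Fin (n + 1),
          ∫ t, ((if argmaxLeast (Function.update b i t) = i then v i else 0) - t)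
            ∂(Measure.dirac (if i = i₀ then t₀ else 0)) =
          (if argmaxLeast (Function.update b i (if i = i₀ then t₀ else 0)) = i then v i else 0)
            - (if i = i₀ then t₀ else 0) := by
        intro i
        exact integral_dirac _ _
      simp only [hint]
      have hge : ∀ i : Fin (n + 1), (if i = i₀ then V - t₀ else 0) ≤
          (if argmaxLeast (Function.update b i (if i = i₀ then t₀ else 0)) = i then v i else 0)
            - (if i = i₀ then t₀ else 0) := by
        intro i
        rcases eq_or_ne i i₀ with rfl | hi
        · simp only [eq_self_iff_true, if_true]
          have hwin : argmaxLeast (Function.update b i t₀) = i := by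
            apply argmaxLeast_eq_of_strict
            intro j hj
            rw [Function.update_of_ne hj, Function.update_self]
            exact lt_of_le_of_lt (hbM j hj) hMt₀
          rw [if_pos hwin, hi₀]
        · simp only [if_neg hi, sub_zero]
          split
          · exact hv i
          · exact le_refl _
      have hsum : ∑ i, (if i = i₀ then V - t₀ else 0) ≤ _ :=
        Finset.sum_le_sum (fun i _ => hge i)
      rw [Finset.sum_ite_eq' Finset.univ i₀ (fun _ => V - t₀), if_pos (Finset.mem_univ i₀)]
        at hsum
      have : 1 / 2 * V - S ≤ V - t₀ := by
        have : t₀ ≤ V / 2 + M := min_le_right _ _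
        linarith
      linarith
  · refine ⟨fun _ => Measure.dirac 0, fun i => ?_, fun i => ?_, ?_⟩
    · infer_instance
    · rw [Measure.dirac_apply_of_mem]
      exact ⟨le_refl _, hv i⟩
    · have hint : ∀ i : Fin (n + 1),
          ∫ t, ((if argmaxLeast (Function.update b i t) = i then v i else 0) - t)
            ∂(Measure.dirac (0 : ℝ)) =
          (if argmaxLeast (Function.update b i 0) = i then v i else 0) - 0 := by
        intro i; exact integral_dirac _ _
      simp only [hint, sub_zero]
      have h1 : (0 : ℝ) ≤ ∑ i, (if argmaxLeast (Function.update b i 0) = i then v i else 0) := by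
        apply Finset.sum_nonneg
        intro i _
        split
        · exact hv i
        · exact le_refl _
      have h2 : 1 / 2 * V - S ≤ 0 := by
        rcases not_and_or.mp hcase with h | h
        · push_neg at h; linarith
        · push_neg at h; linarith
      linarith
end
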